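/- arXiv:2310.01013 — 5 statements merged into one kernel-verified Lean document; each statement's English description precedes it below -/
import Mathlib

section
/- The sequence c is periodic with period (p-1)·r: for every n ∈ ℤ, c(n + (p-1)·r) = c(n). In particular, the least positive period of c exists and divides (p-1)·r. -/
section EDSaux

variable {F : Type*} [Field F]

/-- The four bilinear Somos-type relations with fixed coefficients. -/
def IsEDS (k3 k4 k5 k6 k7 k8 k9 : F) (u : ℤ → F) : Prop :=
  (∀ n : ℤ, k4 * u (n + 4) * u (n - 4) =
      k3 * k5 * u (n + 3) * u (n - 3)
      + (k4 ^ 3 - k3 ^ 3 * k5) * u (n + 2) * u (n - 2)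
      + k3 ^ 2 * k6 * u (n + 1) * u (n - 1)
      - k4 * k6 * u n ^ 2) ∧
  (∀ n : ℤ, k3 * k5 * u (n + 5) * u (n - 4) =
      k3 ^ 2 * k6 * u (n + 4) * u (n - 3)
      + k4 * (k5 ^ 2 - k3 ^ 2 * k6) * u (n + 3) * u (n - 2)
      + k3 * k4 * k7 * u (n + 2) * u (n - 1)
      - k5 * k7 * u (n + 1) * u n) ∧
  (∀ n : ℤ, k4 * u (n + 5) * u (n - 5) =
      k4 * k6 * u (n + 3) * u (n - 3)
      + k4 * (k5 ^ 2 - k3 ^ 2 * k6) * u (n + 2) * u (n - 2)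
      + (k3 ^ 3 * k7 - k8) * u (n + 1) * u (n - 1)
      - k3 * k4 * k7 * u n ^ 2) ∧
  (∀ n : ℤ, k3 * k5 * u (n + 6) * u (n - 5) =
      k3 * k4 * k7 * u (n + 4) * u (n - 3)
      + (k5 ^ 2 * k6 - k3 * k4 ^ 2 * k7) * u (n + 3) * u (n - 2)
      + k3 * (k3 * k4 * k8 - k9) * u (n + 2) * u (n - 1)
      - k3 * k5 * k8 * u (n + 1) * u n)

variable {k3 k4 k5 k6 k7 k8 k9 : F}

lemma eds_step_up (h3 : k3 ≠ 0) (h4 : k4 ≠ 0) (h5 : k5 ≠ 0)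
    {u d : ℤ → F} (hu : IsEDS k3 k4 k5 k6 k7 k8 k9 u) (hd : IsEDS k3 k4 k5 k6 k7 k8 k9 d)
    (m : ℤ)
    (hz : u (m - 11) ≠ 0 ∨ u (m - 10) ≠ 0 ∨ u (m - 9) ≠ 0 ∨ u (m - 8) ≠ 0)
    (hprev : ∀ k : ℤ, m - 11 ≤ k → k < m → u k = d k) : u m = d m := by
  obtain ⟨hu8, hu9, hu10, hu11⟩ := hu
  obtain ⟨hd8, hd9, hd10, hd11⟩ := hd
  rcases hz with hz | hz | hz | hz
  · -- use S11 at n = m - 6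
    have e := hu11 (m - 6)
    have e' := hd11 (m - 6)
    simp only [show m - 6 + 6 = m by ring, show m - 6 - 5 = m - 11 by ring,
      show m - 6 + 4 = m - 2 by ring, show m - 6 - 3 = m - 9 by ring,
      show m - 6 + 3 = m - 3 by ring, show m - 6 - 2 = m - 8 by ring,
      show m - 6 + 2 = m - 4 by ring, show m - 6 - 1 = m - 7 by ring,
      show m - 6 + 1 = m - 5 by ring] at e e'
    rw [hprev (m-11) (by omega) (by omega)] at e hz
    rw [hprev (m-2) (by omega) (by omega), hprev (m-9) (by omega) (by omega),
      hprev (m-3) (by omega) (by omega), hprev (m-8) (by omega) (by omega),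
      hprev (m-4) (by omega) (by omega), hprev (m-7) (by omega) (by omega),
      hprev (m-5) (by omega) (by omega), hprev (m-6) (by omega) (by omega)] at e
    exact mul_left_cancel₀ (mul_ne_zero (mul_ne_zero h3 h5) hz)
      (by have := e.trans e'.symm; linear_combination this)
  · -- use S10 at n = m - 5
    have e := hu10 (m - 5)
    have e' := hd10 (m - 5)
    simp only [show m - 5 + 5 = m by ring, show m - 5 - 5 = m - 10 by ring,
      show m - 5 + 3 = m - 2 by ring, show m - 5 - 3 = m - 8 by ring,
      show m - 5 + 2 = m - 3 by ring, show m - 5 - 2 = m - 7 by ring,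
      show m - 5 + 1 = m - 4 by ring, show m - 5 - 1 = m - 6 by ring] at e e'
    rw [hprev (m-10) (by omega) (by omega)] at e hz
    rw [hprev (m-2) (by omega) (by omega), hprev (m-8) (by omega) (by omega),
      hprev (m-3) (by omega) (by omega), hprev (m-7) (by omega) (by omega),
      hprev (m-4) (by omega) (by omega), hprev (m-6) (by omega) (by omega),
      hprev (m-5) (by omega) (by omega)] at e
    exact mul_left_cancel₀ (mul_ne_zero h4 hz)
      (by have := e.trans e'.symm; linear_combination this)
  · -- use S9 at n = m - 5
    have e := hu9 (m - 5)
    have e' := hd9 (m - 5)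
    simp only [show m - 5 + 5 = m by ring, show m - 5 - 4 = m - 9 by ring,
      show m - 5 + 4 = m - 1 by ring, show m - 5 - 3 = m - 8 by ring,
      show m - 5 + 3 = m - 2 by ring, show m - 5 - 2 = m - 7 by ring,
      show m - 5 + 2 = m - 3 by ring, show m - 5 - 1 = m - 6 by ring,
      show m - 5 + 1 = m - 4 by ring] at e e'
    rw [hprev (m-9) (by omega) (by omega)] at e hz
    rw [hprev (m-1) (by omega) (by omega), hprev (m-8) (by omega) (by omega),
      hprev (m-2) (by omega) (by omega), hprev (m-7) (by omega) (by omega),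
      hprev (m-3) (by omega) (by omega), hprev (m-6) (by omega) (by omega),
      hprev (m-4) (by omega) (by omega), hprev (m-5) (by omega) (by omega)] at e
    exact mul_left_cancel₀ (mul_ne_zero (mul_ne_zero h3 h5) hz)
      (by have := e.trans e'.symm; linear_combination this)
  · -- use S8 at n = m - 4
    have e := hu8 (m - 4)
    have e' := hd8 (m - 4)
    simp only [show m - 4 + 4 = m by ring, show m - 4 - 4 = m - 8 by ring,
      show m - 4 + 3 = m - 1 by ring, show m - 4 - 3 = m - 7 by ring,
      show m - 4 + 2 = m - 2 by ring, show m - 4 - 2 = m - 6 by ring,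
      show m - 4 + 1 = m - 3 by ring, show m - 4 - 1 = m - 5 by ring] at e e'
    rw [hprev (m-8) (by omega) (by omega)] at e hz
    rw [hprev (m-1) (by omega) (by omega), hprev (m-7) (by omega) (by omega),
      hprev (m-2) (by omega) (by omega), hprev (m-6) (by omega) (by omega),
      hprev (m-3) (by omega) (by omega), hprev (m-5) (by omega) (by omega),
      hprev (m-4) (by omega) (by omega)] at e
    exact mul_left_cancel₀ (mul_ne_zero h4 hz)
      (by have := e.trans e'.symm; linear_combination this)

lemma eds_step_down (h3 : k3 ≠ 0) (h4 : k4 ≠ 0) (h5 : k5 ≠ 0)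
    {u d : ℤ → F} (hu : IsEDS k3 k4 k5 k6 k7 k8 k9 u) (hd : IsEDS k3 k4 k5 k6 k7 k8 k9 d)
    (m : ℤ)
    (hz : u (m + 8) ≠ 0 ∨ u (m + 9) ≠ 0 ∨ u (m + 10) ≠ 0 ∨ u (m + 11) ≠ 0)
    (hprev : ∀ k : ℤ, m < k → k ≤ m + 11 → u k = d k) : u m = d m := by
  obtain ⟨hu8, hu9, hu10, hu11⟩ := hu
  obtain ⟨hd8, hd9, hd10, hd11⟩ := hd
  rcases hz with hz | hz | hz | hz
  · -- S8 at n = m + 4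
    have e := hu8 (m + 4)
    have e' := hd8 (m + 4)
    simp only [show m + 4 + 4 = m + 8 by ring, show m + 4 - 4 = m by ring,
      show m + 4 + 3 = m + 7 by ring, show m + 4 - 3 = m + 1 by ring,
      show m + 4 + 2 = m + 6 by ring, show m + 4 - 2 = m + 2 by ring,
      show m + 4 + 1 = m + 5 by ring, show m + 4 - 1 = m + 3 by ring] at e e'
    rw [hprev (m+8) (by omega) (by omega)] at e hz
    rw [hprev (m+7) (by omega) (by omega), hprev (m+1) (by omega) (by omega),
      hprev (m+6) (by omega) (by omega), hprev (m+2) (by omega) (by omega),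
      hprev (m+5) (by omega) (by omega), hprev (m+3) (by omega) (by omega),
      hprev (m+4) (by omega) (by omega)] at e
    exact mul_left_cancel₀ (mul_ne_zero h4 hz)
      (by have := e.trans e'.symm; linear_combination this)
  · -- S9 at n = m + 4
    have e := hu9 (m + 4)
    have e' := hd9 (m + 4)
    simp only [show m + 4 + 5 = m + 9 by ring, show m + 4 - 4 = m by ring,
      show m + 4 + 4 = m + 8 by ring, show m + 4 - 3 = m + 1 by ring,
      show m + 4 + 3 = m + 7 by ring, show m + 4 - 2 = m + 2 by ring,
      show m + 4 + 2 = m + 6 by ring, show m + 4 - 1 = m + 3 by ring,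
      show m + 4 + 1 = m + 5 by ring] at e e'
    rw [hprev (m+9) (by omega) (by omega)] at e hz
    rw [hprev (m+8) (by omega) (by omega), hprev (m+1) (by omega) (by omega),
      hprev (m+7) (by omega) (by omega), hprev (m+2) (by omega) (by omega),
      hprev (m+6) (by omega) (by omega), hprev (m+3) (by omega) (by omega),
      hprev (m+5) (by omega) (by omega), hprev (m+4) (by omega) (by omega)] at e
    exact mul_left_cancel₀ (mul_ne_zero (mul_ne_zero h3 h5) hz)
      (by have := e.trans e'.symm; linear_combination this)
  · -- S10 at n = m + 5
    have e := hu10 (m + 5)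
    have e' := hd10 (m + 5)
    simp only [show m + 5 + 5 = m + 10 by ring, show m + 5 - 5 = m by ring,
      show m + 5 + 3 = m + 8 by ring, show m + 5 - 3 = m + 2 by ring,
      show m + 5 + 2 = m + 7 by ring, show m + 5 - 2 = m + 3 by ring,
      show m + 5 + 1 = m + 6 by ring, show m + 5 - 1 = m + 4 by ring] at e e'
    rw [hprev (m+10) (by omega) (by omega)] at e hz
    rw [hprev (m+8) (by omega) (by omega), hprev (m+2) (by omega) (by omega),
      hprev (m+7) (by omega) (by omega), hprev (m+3) (by omega) (by omega),
      hprev (m+6) (by omega) (by omega), hprev (m+4) (by omega) (by omega),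
      hprev (m+5) (by omega) (by omega)] at e
    exact mul_left_cancel₀ (mul_ne_zero h4 hz)
      (by have := e.trans e'.symm; linear_combination this)
  · -- S11 at n = m + 5
    have e := hu11 (m + 5)
    have e' := hd11 (m + 5)
    simp only [show m + 5 + 6 = m + 11 by ring, show m + 5 - 5 = m by ring,
      show m + 5 + 4 = m + 9 by ring, show m + 5 - 3 = m + 2 by ring,
      show m + 5 + 3 = m + 8 by ring, show m + 5 - 2 = m + 3 by ring,
      show m + 5 + 2 = m + 7 by ring, show m + 5 - 1 = m + 4 by ring,
      show m + 5 + 1 = m + 6 by ring] at e e'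
    rw [hprev (m+11) (by omega) (by omega)] at e hz
    rw [hprev (m+9) (by omega) (by omega), hprev (m+2) (by omega) (by omega),
      hprev (m+8) (by omega) (by omega), hprev (m+3) (by omega) (by omega),
      hprev (m+7) (by omega) (by omega), hprev (m+4) (by omega) (by omega),
      hprev (m+6) (by omega) (by omega), hprev (m+5) (by omega) (by omega)] at e
    exact mul_left_cancel₀ (mul_ne_zero (mul_ne_zero h3 h5) hz)
      (by have := e.trans e'.symm; linear_combination this)

lemma eds_rigid (h3 : k3 ≠ 0) (h4 : k4 ≠ 0) (h5 : k5 ≠ 0)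
    {u d : ℤ → F} (hu : IsEDS k3 k4 k5 k6 k7 k8 k9 u) (hd : IsEDS k3 k4 k5 k6 k7 k8 k9 d)
    (hufour : ∀ m : ℤ, u m ≠ 0 ∨ u (m + 1) ≠ 0 ∨ u (m + 2) ≠ 0 ∨ u (m + 3) ≠ 0)
    (hagree : ∀ n : ℤ, -5 ≤ n → n ≤ 5 → u n = d n) : ∀ n : ℤ, u n = d n := by
  have main : ∀ N : ℕ, ∀ n : ℤ, n.natAbs ≤ N + 5 → u n = d n := by
    intro N
    induction N with
    | zero => exact fun n hn => hagree n (by omega) (by omega)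
    | succ N ih =>
      intro n hn
      by_cases hle : n.natAbs ≤ N + 5
      · exact ih n hle
      · have hcase : n = (N : ℤ) + 6 ∨ n = -((N : ℤ) + 6) := by omega
        rcases hcase with rfl | rfl
        · refine eds_step_up h3 h4 h5 hu hd _ ?_ ?_
          · have := hufour ((N : ℤ) + 6 - 11)
            simpa only [show (N : ℤ) + 6 - 11 + 1 = (N : ℤ) + 6 - 10 by ring,
              show (N : ℤ) + 6 - 11 + 2 = (N : ℤ) + 6 - 9 by ring,
              show (N : ℤ) + 6 - 11 + 3 = (N : ℤ) + 6 - 8 by ring] using this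
          · exact fun k hk1 hk2 => ih k (by omega)
        · refine eds_step_down h3 h4 h5 hu hd _ ?_ ?_
          · have := hufour (-((N : ℤ) + 6) + 8)
            simpa only [show -((N : ℤ) + 6) + 8 + 1 = -((N : ℤ) + 6) + 9 by ring,
              show -((N : ℤ) + 6) + 8 + 2 = -((N : ℤ) + 6) + 10 by ring,
              show -((N : ℤ) + 6) + 8 + 3 = -((N : ℤ) + 6) + 11 by ring] using this
          · exact fun k hk1 hk2 => ih k (by omega)
  exact fun n => main n.natAbs n (by omega)

lemma eds_shift {c : ℤ → F} (hc : IsEDS k3 k4 k5 k6 k7 k8 k9 c) (t : ℤ) :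
    IsEDS k3 k4 k5 k6 k7 k8 k9 (fun n => c (t + n)) := by
  obtain ⟨h8, h9, h10, h11⟩ := hc
  refine ⟨fun n => ?_, fun n => ?_, fun n => ?_, fun n => ?_⟩ <;> simp only
  · have h := h8 (t + n)
    rw [show t + n + 4 = t + (n + 4) by ring, show t + n - 4 = t + (n - 4) by ring,
      show t + n + 3 = t + (n + 3) by ring, show t + n - 3 = t + (n - 3) by ring,
      show t + n + 2 = t + (n + 2) by ring, show t + n - 2 = t + (n - 2) by ring,
      show t + n + 1 = t + (n + 1) by ring, show t + n - 1 = t + (n - 1) by ring] at h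
    exact h
  · have h := h9 (t + n)
    rw [show t + n + 5 = t + (n + 5) by ring, show t + n - 4 = t + (n - 4) by ring,
      show t + n + 4 = t + (n + 4) by ring, show t + n - 3 = t + (n - 3) by ring,
      show t + n + 3 = t + (n + 3) by ring, show t + n - 2 = t + (n - 2) by ring,
      show t + n + 2 = t + (n + 2) by ring, show t + n - 1 = t + (n - 1) by ring,
      show t + n + 1 = t + (n + 1) by ring] at h
    exact h
  · have h := h10 (t + n)
    rw [show t + n + 5 = t + (n + 5) by ring, show t + n - 5 = t + (n - 5) by ring,
      show t + n + 3 = t + (n + 3) by ring, show t + n - 3 = t + (n - 3) by ring,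
      show t + n + 2 = t + (n + 2) by ring, show t + n - 2 = t + (n - 2) by ring,
      show t + n + 1 = t + (n + 1) by ring, show t + n - 1 = t + (n - 1) by ring] at h
    exact h
  · have h := h11 (t + n)
    rw [show t + n + 6 = t + (n + 6) by ring, show t + n - 5 = t + (n - 5) by ring,
      show t + n + 4 = t + (n + 4) by ring, show t + n - 3 = t + (n - 3) by ring,
      show t + n + 3 = t + (n + 3) by ring, show t + n - 2 = t + (n - 2) by ring,
      show t + n + 2 = t + (n + 2) by ring, show t + n - 1 = t + (n - 1) by ring,
      show t + n + 1 = t + (n + 1) by ring] at h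
    exact h

lemma eds_gauge {c : ℤ → F} (hc : IsEDS k3 k4 k5 k6 k7 k8 k9 c) (a b : F) (hb : b ≠ 0) :
    IsEDS k3 k4 k5 k6 k7 k8 k9 (fun n => a * b ^ n * c n) := by
  obtain ⟨h8, h9, h10, h11⟩ := hc
  refine ⟨fun n => ?_, fun n => ?_, fun n => ?_, fun n => ?_⟩ <;> simp only
  · have key : ∀ i j : ℤ, i + j = 2 * n → b ^ i * b ^ j = b ^ (2 * n) := fun i j h => by
      rw [← zpow_add₀ hb, h]
    linear_combination (a^2*k4*c (n+4)*c (n-4)) * key (n+4) (n-4) (by ring)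
      - (a^2*(k3*k5)*c (n+3)*c (n-3)) * key (n+3) (n-3) (by ring)
      - (a^2*(k4^3-k3^3*k5)*c (n+2)*c (n-2)) * key (n+2) (n-2) (by ring)
      - (a^2*(k3^2*k6)*c (n+1)*c (n-1)) * key (n+1) (n-1) (by ring)
      + (a^2*(k4*k6)*c n*c n) * key n n (by ring)
      + (a^2*b^(2*n)) * h8 n
  · have key : ∀ i j : ℤ, i + j = 2 * n + 1 → b ^ i * b ^ j = b ^ (2 * n + 1) := fun i j h => by
      rw [← zpow_add₀ hb, h]
    linear_combination (a^2*(k3*k5)*c (n+5)*c (n-4)) * key (n+5) (n-4) (by ring)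
      - (a^2*(k3^2*k6)*c (n+4)*c (n-3)) * key (n+4) (n-3) (by ring)
      - (a^2*(k4*(k5^2-k3^2*k6))*c (n+3)*c (n-2)) * key (n+3) (n-2) (by ring)
      - (a^2*(k3*k4*k7)*c (n+2)*c (n-1)) * key (n+2) (n-1) (by ring)
      + (a^2*(k5*k7)*c (n+1)*c n) * key (n+1) n (by ring)
      + (a^2*b^(2*n+1)) * h9 n
  · have key : ∀ i j : ℤ, i + j = 2 * n → b ^ i * b ^ j = b ^ (2 * n) := fun i j h => by
      rw [← zpow_add₀ hb, h]
    linear_combination (a^2*k4*c (n+5)*c (n-5)) * key (n+5) (n-5) (by ring)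
      - (a^2*(k4*k6)*c (n+3)*c (n-3)) * key (n+3) (n-3) (by ring)
      - (a^2*(k4*(k5^2-k3^2*k6))*c (n+2)*c (n-2)) * key (n+2) (n-2) (by ring)
      - (a^2*((k3^3*k7-k8))*c (n+1)*c (n-1)) * key (n+1) (n-1) (by ring)
      + (a^2*(k3*k4*k7)*c n*c n) * key n n (by ring)
      + (a^2*b^(2*n)) * h10 n
  · have key : ∀ i j : ℤ, i + j = 2 * n + 1 → b ^ i * b ^ j = b ^ (2 * n + 1) := fun i j h => by
      rw [← zpow_add₀ hb, h]
    linear_combination (a^2*(k3*k5)*c (n+6)*c (n-5)) * key (n+6) (n-5) (by ring)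
      - (a^2*(k3*k4*k7)*c (n+4)*c (n-3)) * key (n+4) (n-3) (by ring)
      - (a^2*((k5^2*k6-k3*k4^2*k7))*c (n+3)*c (n-2)) * key (n+3) (n-2) (by ring)
      - (a^2*(k3*(k3*k4*k8-k9))*c (n+2)*c (n-1)) * key (n+2) (n-1) (by ring)
      + (a^2*(k3*k5*k8)*c (n+1)*c n) * key (n+1) n (by ring)
      + (a^2*b^(2*n+1)) * h11 n

end EDSaux

theorem stmt0 (p : ℕ) [Fact p.Prime] (hodd : Odd p)
    (c : ℤ → ZMod p)
    (hneg : ∀ n : ℤ, c (-n) = - c n)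
    (h0 : c 0 = 0) (h1 : c 1 = 0) (h2 : c 2 = 1)
    (hS8 : ∀ n : ℤ, c 4 * c (n + 4) * c (n - 4) =
      c 3 * c 5 * c (n + 3) * c (n - 3)
      + (c 4 ^ 3 - c 3 ^ 3 * c 5) * c (n + 2) * c (n - 2)
      + c 3 ^ 2 * c 6 * c (n + 1) * c (n - 1)
      - c 4 * c 6 * c n ^ 2)
    (hS9 : ∀ n : ℤ, c 3 * c 5 * c (n + 5) * c (n - 4) =
      c 3 ^ 2 * c 6 * c (n + 4) * c (n - 3)
      + c 4 * (c 5 ^ 2 - c 3 ^ 2 * c 6) * c (n + 3) * c (n - 2)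
      + c 3 * c 4 * c 7 * c (n + 2) * c (n - 1)
      - c 5 * c 7 * c (n + 1) * c n)
    (hS10 : ∀ n : ℤ, c 4 * c (n + 5) * c (n - 5) =
      c 4 * c 6 * c (n + 3) * c (n - 3)
      + c 4 * (c 5 ^ 2 - c 3 ^ 2 * c 6) * c (n + 2) * c (n - 2)
      + (c 3 ^ 3 * c 7 - c 8) * c (n + 1) * c (n - 1)
      - c 3 * c 4 * c 7 * c n ^ 2)
    (hS11 : ∀ n : ℤ, c 3 * c 5 * c (n + 6) * c (n - 5) =
      c 3 * c 4 * c 7 * c (n + 4) * c (n - 3)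
      + (c 5 ^ 2 * c 6 - c 3 * c 4 ^ 2 * c 7) * c (n + 3) * c (n - 2)
      + c 3 * (c 3 * c 4 * c 8 - c 9) * c (n + 2) * c (n - 1)
      - c 3 * c 5 * c 8 * c (n + 1) * c n)
    (h3 : c 3 ≠ 0) (h4 : c 4 ≠ 0) (h5 : c 5 ≠ 0) (h6 : c 6 ≠ 0) (h7 : c 7 ≠ 0)
    (h435 : c 4 ^ 3 - c 3 ^ 3 * c 5 ≠ 0)
    (hfour : ∀ m : ℤ, c m ≠ 0 ∨ c (m + 1) ≠ 0 ∨ c (m + 2) ≠ 0 ∨ c (m + 3) ≠ 0)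
    (r : ℕ) (hrpos : 0 < r)
    (hr1 : c ((r : ℤ) - 1) = 0) (hr0 : c (r : ℤ) = 0) (hr2 : c ((r : ℤ) + 1) = 0)
    (hr3 : c ((r : ℤ) + 3) ≠ 0)
    :
    (∀ n : ℤ, c (n + ((p : ℤ) - 1) * (r : ℤ)) = c n) ∧
    ∃ s : ℕ, 0 < s ∧ (∀ n : ℤ, c (n + (s : ℤ)) = c n) ∧
      (∀ t : ℕ, 0 < t → (∀ n : ℤ, c (n + (t : ℤ)) = c n) → s ≤ t) ∧
      (s : ℤ) ∣ ((p : ℤ) - 1) * (r : ℤ) := by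
  have hA : c ((r : ℤ) + 2) ≠ 0 := by
    rcases hfour ((r : ℤ) - 1) with h | h | h | h
    · exact absurd hr1 h
    · rw [show (r : ℤ) - 1 + 1 = (r : ℤ) by ring] at h; exact absurd hr0 h
    · rw [show (r : ℤ) - 1 + 2 = (r : ℤ) + 1 by ring] at h; exact absurd hr2 h
    · rw [show (r : ℤ) - 1 + 3 = (r : ℤ) + 2 by ring] at h; exact h
  set A := c ((r : ℤ) + 2) with hAdef
  set B := c ((r : ℤ) + 3) with hBdef
  have hB : B ≠ 0 := hr3
  -- e1 from S8 at r+3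
  have e1 : c 3 ^ 2 * c 6 * c ((r:ℤ) + 4) * A = c 4 * c 6 * B ^ 2 := by
    have h := hS8 ((r:ℤ) + 3)
    rw [show (r:ℤ)+3+4 = (r:ℤ)+7 by ring, show (r:ℤ)+3-4 = (r:ℤ)-1 by ring,
      show (r:ℤ)+3+3 = (r:ℤ)+6 by ring, show (r:ℤ)+3-3 = (r:ℤ) by ring,
      show (r:ℤ)+3+2 = (r:ℤ)+5 by ring, show (r:ℤ)+3-2 = (r:ℤ)+1 by ring,
      show (r:ℤ)+3+1 = (r:ℤ)+4 by ring, show (r:ℤ)+3-1 = (r:ℤ)+2 by ring,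
      hr1, hr0, hr2] at h
    linear_combination -h
  -- e2 from S9 at r+3
  have e2 : c 3 * c 4 * c 7 * c ((r:ℤ) + 5) * A = c 5 * c 7 * c ((r:ℤ) + 4) * B := by
    have h := hS9 ((r:ℤ) + 3)
    rw [show (r:ℤ)+3+5 = (r:ℤ)+8 by ring, show (r:ℤ)+3-4 = (r:ℤ)-1 by ring,
      show (r:ℤ)+3+4 = (r:ℤ)+7 by ring, show (r:ℤ)+3-3 = (r:ℤ) by ring,
      show (r:ℤ)+3+3 = (r:ℤ)+6 by ring, show (r:ℤ)+3-2 = (r:ℤ)+1 by ring,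
      show (r:ℤ)+3+2 = (r:ℤ)+5 by ring, show (r:ℤ)+3-1 = (r:ℤ)+2 by ring,
      show (r:ℤ)+3+1 = (r:ℤ)+4 by ring,
      hr1, hr0, hr2] at h
    linear_combination -h
  -- e3 from S8 at r+4
  have e3 : (c 4 ^ 3 - c 3 ^ 3 * c 5) * c ((r:ℤ) + 6) * A
      = c 4 * c 6 * c ((r:ℤ) + 4) ^ 2 - c 3 ^ 2 * c 6 * c ((r:ℤ) + 5) * B := by
    have h := hS8 ((r:ℤ) + 4)
    rw [show (r:ℤ)+4+4 = (r:ℤ)+8 by ring, show (r:ℤ)+4-4 = (r:ℤ) by ring,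
      show (r:ℤ)+4+3 = (r:ℤ)+7 by ring, show (r:ℤ)+4-3 = (r:ℤ)+1 by ring,
      show (r:ℤ)+4+2 = (r:ℤ)+6 by ring, show (r:ℤ)+4-2 = (r:ℤ)+2 by ring,
      show (r:ℤ)+4+1 = (r:ℤ)+5 by ring, show (r:ℤ)+4-1 = (r:ℤ)+3 by ring,
      hr0, hr2] at h
    linear_combination -h
  -- e4 from S8 at r+2
  have e4 : c 4 * c ((r:ℤ) + 6) * c ((r:ℤ) - 2) = -(c 4 * c 6 * A ^ 2) := by
    have h := hS8 ((r:ℤ) + 2)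
    rw [show (r:ℤ)+2+4 = (r:ℤ)+6 by ring, show (r:ℤ)+2-4 = (r:ℤ)-2 by ring,
      show (r:ℤ)+2+3 = (r:ℤ)+5 by ring, show (r:ℤ)+2-3 = (r:ℤ)-1 by ring,
      show (r:ℤ)+2+2 = (r:ℤ)+4 by ring, show (r:ℤ)+2-2 = (r:ℤ) by ring,
      show (r:ℤ)+2+1 = (r:ℤ)+3 by ring, show (r:ℤ)+2-1 = (r:ℤ)+1 by ring,
      hr1, hr0, hr2] at h
    linear_combination h
  -- e5 from S8 at r+1
  have e5 : c 4 * c ((r:ℤ) + 5) * c ((r:ℤ) - 3) = c 3 * c 5 * c ((r:ℤ) + 4) * c ((r:ℤ) - 2) := by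
    have h := hS8 ((r:ℤ) + 1)
    rw [show (r:ℤ)+1+4 = (r:ℤ)+5 by ring, show (r:ℤ)+1-4 = (r:ℤ)-3 by ring,
      show (r:ℤ)+1+3 = (r:ℤ)+4 by ring, show (r:ℤ)+1-3 = (r:ℤ)-2 by ring,
      show (r:ℤ)+1+2 = (r:ℤ)+3 by ring, show (r:ℤ)+1-2 = (r:ℤ)-1 by ring,
      show (r:ℤ)+1+1 = (r:ℤ)+2 by ring, show (r:ℤ)+1-1 = (r:ℤ) by ring,
      hr1, hr0, hr2] at h
    linear_combination h
  -- e6 from S8 at r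
  have e6 : c 4 * c ((r:ℤ) + 4) * c ((r:ℤ) - 4)
      = c 3 * c 5 * B * c ((r:ℤ) - 3) + (c 4 ^ 3 - c 3 ^ 3 * c 5) * A * c ((r:ℤ) - 2) := by
    have h := hS8 ((r:ℤ))
    rw [hr1, hr0, hr2] at h
    linear_combination h
  -- e7 from S8 at r-1
  have e7 : c 4 * B * c ((r:ℤ) - 5) = c 3 * c 5 * A * c ((r:ℤ) - 4) := by
    have h := hS8 ((r:ℤ) - 1)
    rw [show (r:ℤ)-1+4 = (r:ℤ)+3 by ring, show (r:ℤ)-1-4 = (r:ℤ)-5 by ring,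
      show (r:ℤ)-1+3 = (r:ℤ)+2 by ring, show (r:ℤ)-1-3 = (r:ℤ)-4 by ring,
      show (r:ℤ)-1+2 = (r:ℤ)+1 by ring, show (r:ℤ)-1-2 = (r:ℤ)-3 by ring,
      show (r:ℤ)-1+1 = (r:ℤ) by ring, show (r:ℤ)-1-1 = (r:ℤ)-2 by ring,
      hr1, hr0, hr2] at h
    linear_combination h
  -- values
  have v4 : c 3 ^ 2 * A * c ((r:ℤ) + 4) = c 4 * B ^ 2 := by
    apply mul_left_cancel₀ h6
    linear_combination e1
  have v5 : c 3 ^ 3 * A ^ 2 * c ((r:ℤ) + 5) = c 5 * B ^ 3 := by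
    apply mul_left_cancel₀ (mul_ne_zero h4 h7)
    linear_combination (c 3 ^ 2 * A) * e2 + (c 5 * c 7 * B) * v4
  have v6 : c 3 ^ 4 * A ^ 3 * c ((r:ℤ) + 6) = c 6 * B ^ 4 := by
    apply mul_left_cancel₀ h435
    linear_combination (c 3 ^ 4 * A ^ 2) * e3 - (c 3 ^ 3 * c 6 * B) * v5
      + (c 4 * c 6 * (c 3 ^ 2 * A * c ((r:ℤ) + 4) + c 4 * B ^ 2)) * v4
  have vm2 : B ^ 4 * c ((r:ℤ) - 2) = -(c 3 ^ 4 * A ^ 5) := by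
    apply mul_left_cancel₀ (mul_ne_zero h4 h6)
    linear_combination (c 3 ^ 4 * A ^ 3) * e4 - (c 4 * c ((r:ℤ) - 2)) * v6
  have vm3 : B ^ 5 * c ((r:ℤ) - 3) = -(c 3 ^ 6 * A ^ 6) := by
    apply mul_left_cancel₀ (mul_ne_zero (mul_ne_zero h4 h5) (pow_ne_zero 2 hB))
    linear_combination (c 3 ^ 3 * A ^ 2 * B ^ 4) * e5 - (c 4 * B ^ 4 * c ((r:ℤ) - 3)) * v5
      + (c 3 ^ 2 * c 5 * A * B ^ 4 * c ((r:ℤ) - 2)) * v4 + (c 3 ^ 2 * c 4 * c 5 * A * B ^ 2) * vm2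
  have vm4 : B ^ 6 * c ((r:ℤ) - 4) = -(c 4 * c 3 ^ 6 * A ^ 7) := by
    apply mul_left_cancel₀ (mul_ne_zero (pow_ne_zero 2 h4) (pow_ne_zero 2 hB))
    linear_combination (c 3 ^ 2 * A * B ^ 6) * e6 - (c 4 * B ^ 6 * c ((r:ℤ) - 4)) * v4
      + (c 3 ^ 3 * c 5 * A * B ^ 2) * vm3 + ((c 4 ^ 3 - c 3 ^ 3 * c 5) * c 3 ^ 2 * A ^ 2 * B ^ 2) * vm2
  have vm5 : B ^ 7 * c ((r:ℤ) - 5) = -(c 5 * c 3 ^ 7 * A ^ 8) := by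
    apply mul_left_cancel₀ h4
    linear_combination (B ^ 6) * e7 + (c 3 * c 5 * A) * vm4
  set b := B / (c 3 * A) with hbdef
  set a := c 3 ^ 2 * A ^ 3 / B ^ 2 with hadef
  have hb : b ≠ 0 := div_ne_zero hB (mul_ne_zero h3 hA)
  have ha : a ≠ 0 := div_ne_zero (mul_ne_zero (pow_ne_zero _ h3) (pow_ne_zero _ hA)) (pow_ne_zero _ hB)
  have agree : ∀ n : ℤ, -5 ≤ n → n ≤ 5 → c ((r:ℤ) + n) = a * b ^ n * c n := by
    intro n hn1 hn2
    interval_cases n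
    · -- n = -5
      rw [show (r:ℤ) + -5 = (r:ℤ) - 5 by ring, show c (-5:ℤ) = -c 5 from hneg 5,
        show (-5:ℤ) = -((5:ℕ):ℤ) by norm_num, zpow_neg, zpow_natCast, hadef, hbdef]
      field_simp
      linear_combination vm5
    · rw [show (r:ℤ) + -4 = (r:ℤ) - 4 by ring, show c (-4:ℤ) = -c 4 from hneg 4,
        show (-4:ℤ) = -((4:ℕ):ℤ) by norm_num, zpow_neg, zpow_natCast, hadef, hbdef]
      field_simp
      linear_combination vm4
    · rw [show (r:ℤ) + -3 = (r:ℤ) - 3 by ring, show c (-3:ℤ) = -c 3 from hneg 3,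
        show (-3:ℤ) = -((3:ℕ):ℤ) by norm_num, zpow_neg, zpow_natCast, hadef, hbdef]
      field_simp
      linear_combination vm3
    · rw [show (r:ℤ) + -2 = (r:ℤ) - 2 by ring, show c (-2:ℤ) = -c 2 from hneg 2,
        show (-2:ℤ) = -((2:ℕ):ℤ) by norm_num, zpow_neg, zpow_natCast, hadef, hbdef, h2]
      field_simp
      linear_combination vm2
    · rw [show (r:ℤ) + -1 = (r:ℤ) - 1 by ring, show c (-1:ℤ) = -c 1 from hneg 1, hr1, h1]
      ring
    · rw [show (r:ℤ) + 0 = (r:ℤ) by ring, hr0, h0]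
      ring
    · rw [hr2, h1]
      ring
    · rw [show b ^ (2:ℤ) = b ^ (2:ℕ) by rw [show (2:ℤ) = ((2:ℕ):ℤ) by norm_num, zpow_natCast],
        h2, hadef, hbdef]
      field_simp
      rw [← hAdef]
    · rw [show b ^ (3:ℤ) = b ^ (3:ℕ) by rw [show (3:ℤ) = ((3:ℕ):ℤ) by norm_num, zpow_natCast],
        hadef, hbdef]
      field_simp
      rw [← hBdef]
    · rw [show b ^ (4:ℤ) = b ^ (4:ℕ) by rw [show (4:ℤ) = ((4:ℕ):ℤ) by norm_num, zpow_natCast],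
        hadef, hbdef]
      field_simp
      linear_combination v4
    · rw [show b ^ (5:ℤ) = b ^ (5:ℕ) by rw [show (5:ℤ) = ((5:ℕ):ℤ) by norm_num, zpow_natCast],
        hadef, hbdef]
      field_simp
      linear_combination v5
  -- the sequence satisfies the relations
  have hcEDS : IsEDS (c 3) (c 4) (c 5) (c 6) (c 7) (c 8) (c 9) c := ⟨hS8, hS9, hS10, hS11⟩
  have hu : IsEDS (c 3) (c 4) (c 5) (c 6) (c 7) (c 8) (c 9) (fun n => c ((r:ℤ) + n)) :=
    eds_shift hcEDS (r:ℤ)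
  have hd : IsEDS (c 3) (c 4) (c 5) (c 6) (c 7) (c 8) (c 9) (fun n => a * b ^ n * c n) :=
    eds_gauge hcEDS a b hb
  have hufour : ∀ m : ℤ, c ((r:ℤ) + m) ≠ 0 ∨ c ((r:ℤ) + (m+1)) ≠ 0 ∨
      c ((r:ℤ) + (m+2)) ≠ 0 ∨ c ((r:ℤ) + (m+3)) ≠ 0 := by
    intro m
    have h := hfour ((r:ℤ) + m)
    rw [show (r:ℤ)+m+1 = (r:ℤ)+(m+1) by ring, show (r:ℤ)+m+2 = (r:ℤ)+(m+2) by ring,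
        show (r:ℤ)+m+3 = (r:ℤ)+(m+3) by ring] at h
    exact h
  have key : ∀ n : ℤ, c ((r:ℤ) + n) = a * b ^ n * c n :=
    eds_rigid h3 h4 h5 hu hd hufour agree
  -- b ^ r = a ^ 2
  have hab : b ^ ((r:ℤ)) = a ^ 2 := by
    have k1 := key (-2 - (r:ℤ))
    rw [show (r:ℤ) + (-2 - (r:ℤ)) = -(2:ℤ) by ring,
      show (-2 - (r:ℤ)) = -((2:ℤ) + (r:ℤ)) by ring,
      show c (-(2:ℤ)) = -c 2 from hneg 2, show c (-((2:ℤ) + (r:ℤ))) = -c ((2:ℤ) + (r:ℤ)) from hneg _,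
      h2, show (2:ℤ) + (r:ℤ) = (r:ℤ) + 2 by ring, key 2, h2] at k1
    have hx : b ^ (-((r:ℤ)+2)) * b ^ ((r:ℤ)+2) = 1 := by
      rw [← zpow_add₀ hb, show -((r:ℤ)+2) + ((r:ℤ)+2) = 0 by ring, zpow_zero]
    have hy : b ^ ((r:ℤ)+2) = b ^ ((r:ℤ)) * b ^ (2:ℤ) := (zpow_add₀ hb _ _)
    have step : b ^ (2:ℤ) * b ^ ((r:ℤ)) = b ^ (2:ℤ) * a ^ 2 := by
      linear_combination -hy - b ^ ((r:ℤ)+2) * k1 + a^2 * b^(2:ℤ) * hx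
    exact mul_left_cancel₀ (zpow_ne_zero 2 hb) step
  -- iterate
  have iter : ∀ k : ℕ, ∀ n : ℤ, c (n + (k:ℤ) * (r:ℤ)) = a ^ (k*k) * b ^ ((k:ℤ) * n) * c n := by
    intro k
    induction k with
    | zero => intro n; simp
    | succ k ih =>
      intro n
      push_cast
      rw [show n + ((k:ℤ)+1)*(r:ℤ) = (r:ℤ) + (n + (k:ℤ)*(r:ℤ)) by ring,
        key (n + (k:ℤ)*(r:ℤ)), ih n,
        zpow_add₀ hb n ((k:ℤ)*(r:ℤ)), show (k:ℤ)*(r:ℤ) = (r:ℤ)*(k:ℤ) by ring,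
        zpow_mul b ((r:ℤ)) ((k:ℤ)), hab,
        show ((k:ℤ)+1)*n = (k:ℤ)*n + n by ring, zpow_add₀ hb ((k:ℤ)*n) n,
        show ((a:ZMod p)^2) ^ ((k:ℤ)) = (a^2)^(k:ℕ) from zpow_natCast _ k]
      ring
  have hp2 : 2 ≤ p := (Fact.out : p.Prime).two_le
  have hcast : ((p - 1 : ℕ) : ℤ) = (p:ℤ) - 1 := by
    rw [Nat.cast_sub (by omega)]; norm_num
  have part1 : ∀ n : ℤ, c (n + ((p:ℤ) - 1) * (r:ℤ)) = c n := by
    intro n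
    have h := iter (p-1) n
    rw [hcast] at h
    have h1' : a ^ ((p-1)*(p-1)) = 1 := by
      rw [pow_mul, ZMod.pow_card_sub_one_eq_one ha, one_pow]
    have h2' : b ^ (((p:ℤ)-1) * n) = 1 := by
      rw [← hcast, zpow_mul, zpow_natCast, ZMod.pow_card_sub_one_eq_one hb, one_zpow]
    rw [h, h1', h2']
    ring
  refine ⟨part1, ?_⟩
  classical
  have hper : ∀ n : ℤ, c (n + (((p-1)*r : ℕ) : ℤ)) = c n := by
    intro n
    have h := part1 n
    rw [show (((p-1)*r : ℕ) : ℤ) = ((p:ℤ) - 1) * (r:ℤ) by push_cast [hcast]; ring]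
    exact h
  have hex : ∃ s : ℕ, 0 < s ∧ ∀ n : ℤ, c (n + (s:ℤ)) = c n :=
    ⟨(p-1)*r, Nat.mul_pos (by omega) hrpos, hper⟩
  obtain ⟨hspos, hsper⟩ := Nat.find_spec hex
  refine ⟨Nat.find hex, hspos, hsper, ?_, ?_⟩
  · intro t ht hpt
    exact Nat.find_min' hex ⟨ht, hpt⟩
  · have hmulper : ∀ k : ℕ, ∀ n : ℤ, c (n + ((k * Nat.find hex : ℕ) : ℤ)) = c n := by
      intro k
      induction k with
      | zero => intro n; simp
      | succ k ih =>
        intro n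
        rw [show (n + (((k+1) * Nat.find hex : ℕ) : ℤ)) =
          (n + (Nat.find hex : ℤ)) + ((k * Nat.find hex : ℕ) : ℤ) by push_cast; ring,
          ih (n + (Nat.find hex : ℤ)), hsper n]
    have hdvd : Nat.find hex ∣ (p-1)*r := by
      by_contra hnd
      have hmodpos : 0 < (p-1)*r % Nat.find hex :=
        Nat.pos_of_ne_zero (fun h => hnd (Nat.dvd_of_mod_eq_zero h))
      have hlt : (p-1)*r % Nat.find hex < Nat.find hex := Nat.mod_lt _ hspos
      refine Nat.find_min hex hlt ⟨hmodpos, ?_⟩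
      intro n
      calc c (n + (((p-1)*r % Nat.find hex : ℕ) : ℤ))
          = c ((n + (((p-1)*r % Nat.find hex : ℕ) : ℤ)) + (((p-1)*r / Nat.find hex * Nat.find hex : ℕ) : ℤ)) :=
            (hmulper ((p-1)*r / Nat.find hex) _).symm
        _ = c (n + (((p-1)*r : ℕ) : ℤ)) := by
            rw [show (n + (((p-1)*r % Nat.find hex : ℕ) : ℤ)) + (((p-1)*r / Nat.find hex * Nat.find hex : ℕ) : ℤ)
              = n + ((((p-1)*r % Nat.find hex) + ((p-1)*r / Nat.find hex) * Nat.find hex : ℕ) : ℤ) by push_cast; ring,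
              Nat.mod_add_div']
        _ = c n := hper n
    have := Int.natCast_dvd_natCast.mpr hdvd
    rwa [show (((p-1)*r : ℕ) : ℤ) = ((p:ℤ) - 1) * (r:ℤ) by push_cast [hcast]; ring] at this
end

section
/- Every positive integer s such that c(n + s) = c(n) for all n ∈ ℤ is divisible by r. -/
private lemma solveEq {F : Type*} [Field F] {a x y : F} (ha : a ≠ 0) (h : a * x = y) :
    x = a⁻¹ * y := by rw [← h, inv_mul_cancel_left₀ ha]

set_option maxHeartbeats 4000000 in
private lemma transfer_zeros (p : ℕ) [Fact p.Prime] (c : ℤ → ZMod p)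
    (hneg : ∀ n : ℤ, c (-n) = - c n)
    (h0 : c 0 = 0) (h1 : c 1 = 0) (h2 : c 2 = 1)
    (hS8 : ∀ n : ℤ, c 4 * c (n + 4) * c (n - 4) =
      c 3 * c 5 * c (n + 3) * c (n - 3)
      + (c 4 ^ 3 - c 3 ^ 3 * c 5) * c (n + 2) * c (n - 2)
      + c 3 ^ 2 * c 6 * c (n + 1) * c (n - 1)
      - c 4 * c 6 * c n ^ 2)
    (hS9 : ∀ n : ℤ, c 3 * c 5 * c (n + 5) * c (n - 4) =
      c 3 ^ 2 * c 6 * c (n + 4) * c (n - 3)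
      + c 4 * (c 5 ^ 2 - c 3 ^ 2 * c 6) * c (n + 3) * c (n - 2)
      + c 3 * c 4 * c 7 * c (n + 2) * c (n - 1)
      - c 5 * c 7 * c (n + 1) * c n)
    (hS10 : ∀ n : ℤ, c 4 * c (n + 5) * c (n - 5) =
      c 4 * c 6 * c (n + 3) * c (n - 3)
      + c 4 * (c 5 ^ 2 - c 3 ^ 2 * c 6) * c (n + 2) * c (n - 2)
      + (c 3 ^ 3 * c 7 - c 8) * c (n + 1) * c (n - 1)
      - c 3 * c 4 * c 7 * c n ^ 2)
    (hS11 : ∀ n : ℤ, c 3 * c 5 * c (n + 6) * c (n - 5) =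
      c 3 * c 4 * c 7 * c (n + 4) * c (n - 3)
      + (c 5 ^ 2 * c 6 - c 3 * c 4 ^ 2 * c 7) * c (n + 3) * c (n - 2)
      + c 3 * (c 3 * c 4 * c 8 - c 9) * c (n + 2) * c (n - 1)
      - c 3 * c 5 * c 8 * c (n + 1) * c n)
    (h3 : c 3 ≠ 0) (h4 : c 4 ≠ 0) (h5 : c 5 ≠ 0) (h6 : c 6 ≠ 0) (h7 : c 7 ≠ 0)
    (h435 : c 4 ^ 3 - c 3 ^ 3 * c 5 ≠ 0)
    (hfour : ∀ m : ℤ, c m ≠ 0 ∨ c (m + 1) ≠ 0 ∨ c (m + 2) ≠ 0 ∨ c (m + 3) ≠ 0)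
    (m : ℤ) (hz1 : c (m-1) = 0) (hz0 : c m = 0) (hz2 : c (m+1) = 0)
    (hm2 : c (m+2) ≠ 0) (hm3 : c (m+3) ≠ 0) :
    ∀ k : ℤ, (c (m + k) = 0 ↔ c k = 0) := by
  set B : ZMod p := c (m+3) * (c 3 * c (m+2))⁻¹ with hBdef
  set A : ZMod p := c 3^2 * c (m+2)^3 * (c (m+3)^2)⁻¹ with hAdef
  have hB0 : B ≠ 0 := by
    rw [hBdef]; exact mul_ne_zero hm3 (inv_ne_zero (mul_ne_zero h3 hm2))
  have hA0 : A ≠ 0 := by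
    rw [hAdef]
    exact mul_ne_zero (mul_ne_zero (pow_ne_zero 2 h3) (pow_ne_zero 3 hm2)) (inv_ne_zero (pow_ne_zero 2 hm3))
  have hW : ∀ (a b : ℤ) (t : ℕ), b = a + t → B ^ b = B ^ a * B ^ t := by
    intro a b t h
    rw [h, zpow_add₀ hB0, zpow_natCast]
  have stepUp : ∀ K : ℤ, 10 ≤ K → (∀ i : ℤ, -K < i → i < K → c (m + i) = A * B ^ i * c i) →
      c (m + K) = A * B ^ K * c K := by
    intro K hK ih
    have h8 := hfour (m + (K - 11))
    rw [show m+(K-11)+1 = m+(K-10) by ring, show m+(K-11)+2 = m+(K-9) by ring, show m+(K-11)+3 = m+(K-8) by ring] at h8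
    rcases h8 with hp | hp | hp | hp
    · -- pivot K-11 via S11
      have e := hS11 (m + (K-6))
      rw [show m+(K-6)+6 = m+(K) by ring, show m+(K-6)-5 = m+(K-11) by ring, show m+(K-6)+4 = m+(K-2) by ring, show m+(K-6)-3 = m+(K-9) by ring, show m+(K-6)+3 = m+(K-3) by ring, show m+(K-6)-2 = m+(K-8) by ring, show m+(K-6)+2 = m+(K-4) by ring, show m+(K-6)-1 = m+(K-7) by ring, show m+(K-6)+1 = m+(K-5) by ring] at e
      rw [ih (K-2) (by omega) (by omega), ih (K-3) (by omega) (by omega), ih (K-4) (by omega) (by omega), ih (K-5) (by omega) (by omega), ih (K-6) (by omega) (by omega), ih (K-7) (by omega) (by omega), ih (K-8) (by omega) (by omega), ih (K-9) (by omega) (by omega), ih (K-11) (by omega) (by omega)] at e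
      rw [hW (K-11) (K-2) 9 (by push_cast; ring), hW (K-11) (K-3) 8 (by push_cast; ring), hW (K-11) (K-4) 7 (by push_cast; ring), hW (K-11) (K-5) 6 (by push_cast; ring), hW (K-11) (K-6) 5 (by push_cast; ring), hW (K-11) (K-7) 4 (by push_cast; ring), hW (K-11) (K-8) 3 (by push_cast; ring), hW (K-11) (K-9) 2 (by push_cast; ring)] at e
      have e0 := hS11 (K-6)
      rw [show K-6+6 = K by ring, show K-6-5 = K-11 by ring, show K-6+4 = K-2 by ring, show K-6-3 = K-9 by ring, show K-6+3 = K-3 by ring, show K-6-2 = K-8 by ring, show K-6+2 = K-4 by ring, show K-6-1 = K-7 by ring, show K-6+1 = K-5 by ring] at e0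
      have hp2 : A * B ^ (K-11) * c (K-11) ≠ 0 := by
        rw [← ih (K-11) (by omega) (by omega)]; exact hp
      rw [hW (K-11) K 11 (by push_cast; ring)]
      apply mul_left_cancel₀ (mul_ne_zero (mul_ne_zero h3 h5) hp2)
      linear_combination e - (A^2*(B^(K-11))^2*B^11)*e0
    · -- pivot K-10 via S10
      have e := hS10 (m + (K-5))
      rw [show m+(K-5)+5 = m+(K) by ring, show m+(K-5)-5 = m+(K-10) by ring, show m+(K-5)+3 = m+(K-2) by ring, show m+(K-5)-3 = m+(K-8) by ring, show m+(K-5)+2 = m+(K-3) by ring, show m+(K-5)-2 = m+(K-7) by ring, show m+(K-5)+1 = m+(K-4) by ring, show m+(K-5)-1 = m+(K-6) by ring] at e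
      rw [ih (K-2) (by omega) (by omega), ih (K-3) (by omega) (by omega), ih (K-4) (by omega) (by omega), ih (K-5) (by omega) (by omega), ih (K-6) (by omega) (by omega), ih (K-7) (by omega) (by omega), ih (K-8) (by omega) (by omega), ih (K-10) (by omega) (by omega)] at e
      rw [hW (K-10) (K-2) 8 (by push_cast; ring), hW (K-10) (K-3) 7 (by push_cast; ring), hW (K-10) (K-4) 6 (by push_cast; ring), hW (K-10) (K-5) 5 (by push_cast; ring), hW (K-10) (K-6) 4 (by push_cast; ring), hW (K-10) (K-7) 3 (by push_cast; ring), hW (K-10) (K-8) 2 (by push_cast; ring)] at e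
      have e0 := hS10 (K-5)
      rw [show K-5+5 = K by ring, show K-5-5 = K-10 by ring, show K-5+3 = K-2 by ring, show K-5-3 = K-8 by ring, show K-5+2 = K-3 by ring, show K-5-2 = K-7 by ring, show K-5+1 = K-4 by ring, show K-5-1 = K-6 by ring] at e0
      have hp2 : A * B ^ (K-10) * c (K-10) ≠ 0 := by
        rw [← ih (K-10) (by omega) (by omega)]; exact hp
      rw [hW (K-10) K 10 (by push_cast; ring)]
      apply mul_left_cancel₀ (mul_ne_zero h4 hp2)
      linear_combination e - (A^2*(B^(K-10))^2*B^10)*e0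
    · -- pivot K-9 via S9
      have e := hS9 (m + (K-5))
      rw [show m+(K-5)+5 = m+(K) by ring, show m+(K-5)-4 = m+(K-9) by ring, show m+(K-5)+4 = m+(K-1) by ring, show m+(K-5)-3 = m+(K-8) by ring, show m+(K-5)+3 = m+(K-2) by ring, show m+(K-5)-2 = m+(K-7) by ring, show m+(K-5)+2 = m+(K-3) by ring, show m+(K-5)-1 = m+(K-6) by ring, show m+(K-5)+1 = m+(K-4) by ring] at e
      rw [ih (K-1) (by omega) (by omega), ih (K-2) (by omega) (by omega), ih (K-3) (by omega) (by omega), ih (K-4) (by omega) (by omega), ih (K-5) (by omega) (by omega), ih (K-6) (by omega) (by omega), ih (K-7) (by omega) (by omega), ih (K-8) (by omega) (by omega), ih (K-9) (by omega) (by omega)] at e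
      rw [hW (K-9) (K-1) 8 (by push_cast; ring), hW (K-9) (K-2) 7 (by push_cast; ring), hW (K-9) (K-3) 6 (by push_cast; ring), hW (K-9) (K-4) 5 (by push_cast; ring), hW (K-9) (K-5) 4 (by push_cast; ring), hW (K-9) (K-6) 3 (by push_cast; ring), hW (K-9) (K-7) 2 (by push_cast; ring), hW (K-9) (K-8) 1 (by push_cast; ring)] at e
      have e0 := hS9 (K-5)
      rw [show K-5+5 = K by ring, show K-5-4 = K-9 by ring, show K-5+4 = K-1 by ring, show K-5-3 = K-8 by ring, show K-5+3 = K-2 by ring, show K-5-2 = K-7 by ring, show K-5+2 = K-3 by ring, show K-5-1 = K-6 by ring, show K-5+1 = K-4 by ring] at e0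
      have hp2 : A * B ^ (K-9) * c (K-9) ≠ 0 := by
        rw [← ih (K-9) (by omega) (by omega)]; exact hp
      rw [hW (K-9) K 9 (by push_cast; ring)]
      apply mul_left_cancel₀ (mul_ne_zero (mul_ne_zero h3 h5) hp2)
      linear_combination e - (A^2*(B^(K-9))^2*B^9)*e0
    · -- pivot K-8 via S8
      have e := hS8 (m + (K-4))
      rw [show m+(K-4)+4 = m+(K) by ring, show m+(K-4)-4 = m+(K-8) by ring, show m+(K-4)+3 = m+(K-1) by ring, show m+(K-4)-3 = m+(K-7) by ring, show m+(K-4)+2 = m+(K-2) by ring, show m+(K-4)-2 = m+(K-6) by ring, show m+(K-4)+1 = m+(K-3) by ring, show m+(K-4)-1 = m+(K-5) by ring] at e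
      rw [ih (K-1) (by omega) (by omega), ih (K-2) (by omega) (by omega), ih (K-3) (by omega) (by omega), ih (K-4) (by omega) (by omega), ih (K-5) (by omega) (by omega), ih (K-6) (by omega) (by omega), ih (K-7) (by omega) (by omega), ih (K-8) (by omega) (by omega)] at e
      rw [hW (K-8) (K-1) 7 (by push_cast; ring), hW (K-8) (K-2) 6 (by push_cast; ring), hW (K-8) (K-3) 5 (by push_cast; ring), hW (K-8) (K-4) 4 (by push_cast; ring), hW (K-8) (K-5) 3 (by push_cast; ring), hW (K-8) (K-6) 2 (by push_cast; ring), hW (K-8) (K-7) 1 (by push_cast; ring)] at e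
      have e0 := hS8 (K-4)
      rw [show K-4+4 = K by ring, show K-4-4 = K-8 by ring, show K-4+3 = K-1 by ring, show K-4-3 = K-7 by ring, show K-4+2 = K-2 by ring, show K-4-2 = K-6 by ring, show K-4+1 = K-3 by ring, show K-4-1 = K-5 by ring] at e0
      have hp2 : A * B ^ (K-8) * c (K-8) ≠ 0 := by
        rw [← ih (K-8) (by omega) (by omega)]; exact hp
      rw [hW (K-8) K 8 (by push_cast; ring)]
      apply mul_left_cancel₀ (mul_ne_zero h4 hp2)
      linear_combination e - (A^2*(B^(K-8))^2*B^8)*e0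
  have stepDown : ∀ K : ℤ, K ≤ -10 → (∀ i : ℤ, K < i → i < -K → c (m + i) = A * B ^ i * c i) →
      c (m + K) = A * B ^ K * c K := by
    intro K hK ih
    have h8 := hfour (m + (K + 8))
    rw [show m+(K+8)+1 = m+(K+9) by ring, show m+(K+8)+2 = m+(K+10) by ring, show m+(K+8)+3 = m+(K+11) by ring] at h8
    rcases h8 with hp | hp | hp | hp
    · -- pivot K+8 via S8
      have e := hS8 (m + (K+4))
      rw [show m+(K+4)+4 = m+(K+8) by ring, show m+(K+4)-4 = m+(K) by ring, show m+(K+4)+3 = m+(K+7) by ring, show m+(K+4)-3 = m+(K+1) by ring, show m+(K+4)+2 = m+(K+6) by ring, show m+(K+4)-2 = m+(K+2) by ring, show m+(K+4)+1 = m+(K+5) by ring, show m+(K+4)-1 = m+(K+3) by ring] at e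
      rw [ih (K+1) (by omega) (by omega), ih (K+2) (by omega) (by omega), ih (K+3) (by omega) (by omega), ih (K+4) (by omega) (by omega), ih (K+5) (by omega) (by omega), ih (K+6) (by omega) (by omega), ih (K+7) (by omega) (by omega), ih (K+8) (by omega) (by omega)] at e
      rw [hW K (K+1) 1 (by push_cast; ring), hW K (K+2) 2 (by push_cast; ring), hW K (K+3) 3 (by push_cast; ring), hW K (K+4) 4 (by push_cast; ring), hW K (K+5) 5 (by push_cast; ring), hW K (K+6) 6 (by push_cast; ring), hW K (K+7) 7 (by push_cast; ring), hW K (K+8) 8 (by push_cast; ring)] at e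
      have e0 := hS8 (K+4)
      rw [show K+4+4 = K+8 by ring, show K+4-4 = K by ring, show K+4+3 = K+7 by ring, show K+4-3 = K+1 by ring, show K+4+2 = K+6 by ring, show K+4-2 = K+2 by ring, show K+4+1 = K+5 by ring, show K+4-1 = K+3 by ring] at e0
      have hp2 : A * (B ^ K * B ^ 8) * c (K+8) ≠ 0 := by
        rw [← hW K (K+8) 8 (by push_cast; ring), ← ih (K+8) (by omega) (by omega)]
        exact hp
      apply mul_left_cancel₀ (mul_ne_zero h4 hp2)
      linear_combination e - (A^2*(B^K)^2*B^8)*e0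
    · -- pivot K+9 via S9
      have e := hS9 (m + (K+4))
      rw [show m+(K+4)+5 = m+(K+9) by ring, show m+(K+4)-4 = m+(K) by ring, show m+(K+4)+4 = m+(K+8) by ring, show m+(K+4)-3 = m+(K+1) by ring, show m+(K+4)+3 = m+(K+7) by ring, show m+(K+4)-2 = m+(K+2) by ring, show m+(K+4)+2 = m+(K+6) by ring, show m+(K+4)-1 = m+(K+3) by ring, show m+(K+4)+1 = m+(K+5) by ring] at e
      rw [ih (K+1) (by omega) (by omega), ih (K+2) (by omega) (by omega), ih (K+3) (by omega) (by omega), ih (K+4) (by omega) (by omega), ih (K+5) (by omega) (by omega), ih (K+6) (by omega) (by omega), ih (K+7) (by omega) (by omega), ih (K+8) (by omega) (by omega), ih (K+9) (by omega) (by omega)] at e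
      rw [hW K (K+1) 1 (by push_cast; ring), hW K (K+2) 2 (by push_cast; ring), hW K (K+3) 3 (by push_cast; ring), hW K (K+4) 4 (by push_cast; ring), hW K (K+5) 5 (by push_cast; ring), hW K (K+6) 6 (by push_cast; ring), hW K (K+7) 7 (by push_cast; ring), hW K (K+8) 8 (by push_cast; ring), hW K (K+9) 9 (by push_cast; ring)] at e
      have e0 := hS9 (K+4)
      rw [show K+4+5 = K+9 by ring, show K+4-4 = K by ring, show K+4+4 = K+8 by ring, show K+4-3 = K+1 by ring, show K+4+3 = K+7 by ring, show K+4-2 = K+2 by ring, show K+4+2 = K+6 by ring, show K+4-1 = K+3 by ring, show K+4+1 = K+5 by ring] at e0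
      have hp2 : A * (B ^ K * B ^ 9) * c (K+9) ≠ 0 := by
        rw [← hW K (K+9) 9 (by push_cast; ring), ← ih (K+9) (by omega) (by omega)]
        exact hp
      apply mul_left_cancel₀ (mul_ne_zero (mul_ne_zero h3 h5) hp2)
      linear_combination e - (A^2*(B^K)^2*B^9)*e0
    · -- pivot K+10 via S10
      have e := hS10 (m + (K+5))
      rw [show m+(K+5)+5 = m+(K+10) by ring, show m+(K+5)-5 = m+(K) by ring, show m+(K+5)+3 = m+(K+8) by ring, show m+(K+5)-3 = m+(K+2) by ring, show m+(K+5)+2 = m+(K+7) by ring, show m+(K+5)-2 = m+(K+3) by ring, show m+(K+5)+1 = m+(K+6) by ring, show m+(K+5)-1 = m+(K+4) by ring] at e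
      rw [ih (K+2) (by omega) (by omega), ih (K+3) (by omega) (by omega), ih (K+4) (by omega) (by omega), ih (K+5) (by omega) (by omega), ih (K+6) (by omega) (by omega), ih (K+7) (by omega) (by omega), ih (K+8) (by omega) (by omega), ih (K+10) (by omega) (by omega)] at e
      rw [hW K (K+2) 2 (by push_cast; ring), hW K (K+3) 3 (by push_cast; ring), hW K (K+4) 4 (by push_cast; ring), hW K (K+5) 5 (by push_cast; ring), hW K (K+6) 6 (by push_cast; ring), hW K (K+7) 7 (by push_cast; ring), hW K (K+8) 8 (by push_cast; ring), hW K (K+10) 10 (by push_cast; ring)] at e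
      have e0 := hS10 (K+5)
      rw [show K+5+5 = K+10 by ring, show K+5-5 = K by ring, show K+5+3 = K+8 by ring, show K+5-3 = K+2 by ring, show K+5+2 = K+7 by ring, show K+5-2 = K+3 by ring, show K+5+1 = K+6 by ring, show K+5-1 = K+4 by ring] at e0
      have hp2 : A * (B ^ K * B ^ 10) * c (K+10) ≠ 0 := by
        rw [← hW K (K+10) 10 (by push_cast; ring), ← ih (K+10) (by omega) (by omega)]
        exact hp
      apply mul_left_cancel₀ (mul_ne_zero h4 hp2)
      linear_combination e - (A^2*(B^K)^2*B^10)*e0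
    · -- pivot K+11 via S11
      have e := hS11 (m + (K+5))
      rw [show m+(K+5)+6 = m+(K+11) by ring, show m+(K+5)-5 = m+(K) by ring, show m+(K+5)+4 = m+(K+9) by ring, show m+(K+5)-3 = m+(K+2) by ring, show m+(K+5)+3 = m+(K+8) by ring, show m+(K+5)-2 = m+(K+3) by ring, show m+(K+5)+2 = m+(K+7) by ring, show m+(K+5)-1 = m+(K+4) by ring, show m+(K+5)+1 = m+(K+6) by ring] at e
      rw [ih (K+2) (by omega) (by omega), ih (K+3) (by omega) (by omega), ih (K+4) (by omega) (by omega), ih (K+5) (by omega) (by omega), ih (K+6) (by omega) (by omega), ih (K+7) (by omega) (by omega), ih (K+8) (by omega) (by omega), ih (K+9) (by omega) (by omega), ih (K+11) (by omega) (by omega)] at e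
      rw [hW K (K+2) 2 (by push_cast; ring), hW K (K+3) 3 (by push_cast; ring), hW K (K+4) 4 (by push_cast; ring), hW K (K+5) 5 (by push_cast; ring), hW K (K+6) 6 (by push_cast; ring), hW K (K+7) 7 (by push_cast; ring), hW K (K+8) 8 (by push_cast; ring), hW K (K+9) 9 (by push_cast; ring), hW K (K+11) 11 (by push_cast; ring)] at e
      have e0 := hS11 (K+5)
      rw [show K+5+6 = K+11 by ring, show K+5-5 = K by ring, show K+5+4 = K+9 by ring, show K+5-3 = K+2 by ring, show K+5+3 = K+8 by ring, show K+5-2 = K+3 by ring, show K+5+2 = K+7 by ring, show K+5-1 = K+4 by ring, show K+5+1 = K+6 by ring] at e0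
      have hp2 : A * (B ^ K * B ^ 11) * c (K+11) ≠ 0 := by
        rw [← hW K (K+11) 11 (by push_cast; ring), ← ih (K+11) (by omega) (by omega)]
        exact hp
      apply mul_left_cancel₀ (mul_ne_zero (mul_ne_zero h3 h5) hp2)
      linear_combination e - (A^2*(B^K)^2*B^11)*e0
  have X4 : c 3^2*c (m+2)*c (m+4) = c 4*c (m+3)^2 := by
    have e := hS8 (m + 3)
    rw [show m+3+4 = m+7 by ring, show m+3-4 = m-1 by ring, show m+3+3 = m+6 by ring, show m+3-3 = m by ring, show m+3+2 = m+5 by ring, show m+3-2 = m+1 by ring, show m+3+1 = m+4 by ring, show m+3-1 = m+2 by ring, hz1, hz0, hz2] at e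
    apply mul_left_cancel₀ h6
    linear_combination -e
  have Y5 : c 3*c 4*c (m+2)*c (m+5) = c 5*c (m+4)*c (m+3) := by
    have e := hS9 (m + 3)
    rw [show m+3+5 = m+8 by ring, show m+3-4 = m-1 by ring, show m+3+4 = m+7 by ring, show m+3-3 = m by ring, show m+3+3 = m+6 by ring, show m+3-2 = m+1 by ring, show m+3+2 = m+5 by ring, show m+3-1 = m+2 by ring, show m+3+1 = m+4 by ring, hz1, hz0, hz2] at e
    apply mul_left_cancel₀ h7
    linear_combination -e
  have X5 : c 3^3*c (m+2)^2*c (m+5) = c 5*c (m+3)^3 := by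
    apply mul_left_cancel₀ h4
    linear_combination c 3^2*c (m+2)*Y5 + c 5*c (m+3)*X4
  have X6 : c 3^4*c (m+2)^3*c (m+6) = c 6*c (m+3)^4 := by
    have e := hS8 (m + 4)
    rw [show m+4+4 = m+8 by ring, show m+4-4 = m by ring, show m+4+3 = m+7 by ring, show m+4-3 = m+1 by ring, show m+4+2 = m+6 by ring, show m+4-2 = m+2 by ring, show m+4+1 = m+5 by ring, show m+4-1 = m+3 by ring, hz0, hz2] at e
    apply mul_left_cancel₀ h435
    linear_combination -c 3^4*c (m+2)^2*e + c 4*c 6*(c 3^2*c (m+2)*c (m+4) + c 4*c (m+3)^2)*X4 - c 3^3*c 6*c (m+3)*X5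
  have Y2 : c (m+6)*c (m-2) = -(c 6*c (m+2)^2) := by
    have e := hS8 (m + 2)
    rw [show m+2+4 = m+6 by ring, show m+2-4 = m-2 by ring, show m+2+3 = m+5 by ring, show m+2-3 = m-1 by ring, show m+2+2 = m+4 by ring, show m+2-2 = m by ring, show m+2+1 = m+3 by ring, show m+2-1 = m+1 by ring, hz1, hz0, hz2] at e
    apply mul_left_cancel₀ h4
    linear_combination e
  have B2 : c (m+3)^4*c (m-2) = -(c 3^4*c (m+2)^5) := by
    apply mul_left_cancel₀ h6
    linear_combination -c (m-2)*X6 + c 3^4*c (m+2)^3*Y2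
  have Y7 : c 3*c (m+7)*c (m-2) = -(c 7*c (m+3)*c (m+2)) := by
    have e := hS9 (m + 2)
    rw [show m+2+5 = m+7 by ring, show m+2-4 = m-2 by ring, show m+2+4 = m+6 by ring, show m+2-3 = m-1 by ring, show m+2+3 = m+5 by ring, show m+2-2 = m by ring, show m+2+2 = m+4 by ring, show m+2-1 = m+1 by ring, show m+2+1 = m+3 by ring, hz1, hz0, hz2] at e
    apply mul_left_cancel₀ h5
    linear_combination e
  have X7 : c 3^5*c (m+2)^4*c (m+7) = c 7*c (m+3)^5 := by
    apply mul_left_cancel₀ hm2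
    linear_combination -c (m+3)^4*Y7 + c 3*c (m+7)*B2
  have T3 : c (m+3)*c (m-3) = c 3^2*c (m+2)*c (m-2) := by
    have e := hS8 (m + 1)
    rw [show m+1+4 = m+5 by ring, show m+1-4 = m-3 by ring, show m+1+3 = m+4 by ring, show m+1-3 = m-2 by ring, show m+1+2 = m+3 by ring, show m+1-2 = m-1 by ring, show m+1+1 = m+2 by ring, show m+1-1 = m by ring, hz1, hz0, hz2] at e
    apply mul_left_cancel₀ (mul_ne_zero (mul_ne_zero h4 h5) (pow_ne_zero 2 hm3))
    linear_combination c 3^3*c (m+2)^2*e - c 4*c (m-3)*X5 + c 3^2*c 5*c (m+2)*c (m-2)*X4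
  have B3 : c (m+3)^5*c (m-3) = -(c 3^6*c (m+2)^6) := by
    linear_combination c (m+3)^4*T3 + c 3^2*c (m+2)*B2
  have B4 : c (m+3)^6*c (m-4) = -(c 4*c 3^6*c (m+2)^7) := by
    have e := hS8 m
    rw [show m+4 = m+4 by ring, show m-4 = m-4 by ring, show m+3 = m+3 by ring, show m-3 = m-3 by ring, show m+2 = m+2 by ring, show m-2 = m-2 by ring, show m+1 = m+1 by ring, show m-1 = m-1 by ring, hz1, hz0, hz2] at e
    apply mul_left_cancel₀ (pow_ne_zero 2 h4)
    linear_combination c 3^2*c (m+2)*c (m+3)^4*e - c 4*c (m+3)^4*c (m-4)*X4 + c 3^3*c 5*c (m+2)*B3 + (c 4^3 - c 3^3*c 5)*c 3^2*c (m+2)^2*B2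
  have B5 : c (m+3)^7*c (m-5) = -(c 5*c 3^7*c (m+2)^8) := by
    have e := hS8 (m - 1)
    rw [show m-1+4 = m+3 by ring, show m-1-4 = m-5 by ring, show m-1+3 = m+2 by ring, show m-1-3 = m-4 by ring, show m-1+2 = m+1 by ring, show m-1-2 = m-3 by ring, show m-1+1 = m by ring, show m-1-1 = m-2 by ring, hz1, hz0, hz2] at e
    apply mul_left_cancel₀ h4
    linear_combination c (m+3)^6*e + c 3*c 5*c (m+2)*B4
  have B6 : c (m+3)^8*c (m-6) = -(c 6*c 3^8*c (m+2)^9) := by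
    have e := hS10 (m - 1)
    rw [show m-1+5 = m+4 by ring, show m-1-5 = m-6 by ring, show m-1+3 = m+2 by ring, show m-1-3 = m-4 by ring, show m-1+2 = m+1 by ring, show m-1-2 = m-3 by ring, show m-1+1 = m by ring, show m-1-1 = m-2 by ring, hz1, hz0, hz2] at e
    apply mul_left_cancel₀ (pow_ne_zero 2 h4)
    linear_combination c 3^2*c (m+2)*c (m+3)^6*e - c 4*c (m+3)^6*c (m-6)*X4 + c 4*c 6*c 3^2*c (m+2)^2*B4
  have Y7b : c 3*c (m+2)*c (m-7) = -(c 7*c (m-2)*c (m-3)) := by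
    have e := hS9 (m - 3)
    rw [show m-3+5 = m+2 by ring, show m-3-4 = m-7 by ring, show m-3+4 = m+1 by ring, show m-3-3 = m-6 by ring, show m-3+3 = m by ring, show m-3-2 = m-5 by ring, show m-3+2 = m-1 by ring, show m-3-1 = m-4 by ring, show m-3+1 = m-2 by ring, hz1, hz0, hz2] at e
    apply mul_left_cancel₀ h5
    linear_combination e
  have B7 : c (m+3)^9*c (m-7) = -(c 7*c 3^9*c (m+2)^10) := by
    apply mul_left_cancel₀ (mul_ne_zero h3 hm2)
    linear_combination c (m+3)^9*Y7b - c 7*c (m+3)^4*c (m-2)*B3 + c 7*c 3^6*c (m+2)^6*B2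
  have X8 : c 3^6*c (m+2)^5*c (m+8) = c 8*c (m+3)^6 := by
    have e := hS10 (m + 3)
    rw [show m+3+5 = m+8 by ring, show m+3-5 = m-2 by ring, show m+3+3 = m+6 by ring, show m+3-3 = m by ring, show m+3+2 = m+5 by ring, show m+3-2 = m+1 by ring, show m+3+1 = m+4 by ring, show m+3-1 = m+2 by ring, hz0, hz2] at e
    apply mul_left_cancel₀ (mul_ne_zero h4 hm2)
    linear_combination -c 3^2*c (m+2)*c (m+3)^4*e + c 3^2*c 4*c (m+2)*c (m+8)*B2 - (c 3^3*c 7 - c 8)*c (m+2)*c (m+3)^4*X4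
  have Y9 : c 5*c (m+9)*c (m-2) = (c 3*c 4*c 8 - c 9)*c (m+5)*c (m+2) - c 5*c 8*c (m+4)*c (m+3) := by
    have e := hS11 (m + 3)
    rw [show m+3+6 = m+9 by ring, show m+3-5 = m-2 by ring, show m+3+4 = m+7 by ring, show m+3-3 = m by ring, show m+3+3 = m+6 by ring, show m+3-2 = m+1 by ring, show m+3+2 = m+5 by ring, show m+3-1 = m+2 by ring, show m+3+1 = m+4 by ring, hz0, hz2] at e
    apply mul_left_cancel₀ h3
    linear_combination e
  have X9 : c 3^7*c (m+2)^6*c (m+9) = c 9*c (m+3)^7 := by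
    apply mul_left_cancel₀ h5
    linear_combination -c 3^3*c (m+2)*c (m+3)^4*Y9 + c 3^3*c 5*c (m+2)*c (m+9)*B2 - (c 3*c 4*c 8 - c 9)*c (m+3)^4*X5 + c 3*c 5*c 8*c (m+3)^5*X4
  have B8 : c (m+3)^10*c (m-8) = -(c 8*c 3^10*c (m+2)^11) := by
    have e := hS10 (m - 3)
    rw [show m-3+5 = m+2 by ring, show m-3-5 = m-8 by ring, show m-3+3 = m by ring, show m-3-3 = m-6 by ring, show m-3+2 = m-1 by ring, show m-3-2 = m-5 by ring, show m-3+1 = m-2 by ring, show m-3-1 = m-4 by ring, hz1, hz0] at e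
    apply mul_left_cancel₀ (mul_ne_zero h4 hm2)
    linear_combination c (m+3)^10*e + (c 3^3*c 7 - c 8)*c (m+3)^4*c (m-2)*B4 - (c 3^3*c 7 - c 8)*c 4*c 3^6*c (m+2)^7*B2 - c 3*c 4*c 7*(c (m+3)^5*c (m-3) - c 3^6*c (m+2)^6)*B3
  have Y9b : c 5*c (m+2)*c (m-9) = (c 3*c 4*c 8 - c 9)*c (m-2)*c (m-5) - c 5*c 8*c (m-3)*c (m-4) := by
    have e := hS11 (m - 4)
    rw [show m-4+6 = m+2 by ring, show m-4-5 = m-9 by ring, show m-4+4 = m by ring, show m-4-3 = m-7 by ring, show m-4+3 = m-1 by ring, show m-4-2 = m-6 by ring, show m-4+2 = m-2 by ring, show m-4-1 = m-5 by ring, show m-4+1 = m-3 by ring, hz1, hz0] at e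
    apply mul_left_cancel₀ h3
    linear_combination e
  have B9 : c (m+3)^11*c (m-9) = -(c 9*c 3^11*c (m+2)^12) := by
    apply mul_left_cancel₀ (mul_ne_zero h5 hm2)
    linear_combination c (m+3)^11*Y9b + (c 3*c 4*c 8 - c 9)*c (m+3)^4*c (m-2)*B5 - (c 3*c 4*c 8 - c 9)*c 5*c 3^7*c (m+2)^8*B2 - c 5*c 8*c (m+3)^5*c (m-3)*B4 + c 5*c 8*c 4*c 3^6*c (m+2)^7*B3
  have hbm9 : c (m + (-9 : ℤ)) = A * B ^ (-9 : ℤ) * c (-9 : ℤ) := by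
    rw [show m + (-9:ℤ) = m-9 by ring, zpow_neg, zpow_ofNat, solveEq (pow_ne_zero 11 hm3) B9, hneg 9, hAdef, hBdef]
    field_simp
  have hbm8 : c (m + (-8 : ℤ)) = A * B ^ (-8 : ℤ) * c (-8 : ℤ) := by
    rw [show m + (-8:ℤ) = m-8 by ring, zpow_neg, zpow_ofNat, solveEq (pow_ne_zero 10 hm3) B8, hneg 8, hAdef, hBdef]
    field_simp
  have hbm7 : c (m + (-7 : ℤ)) = A * B ^ (-7 : ℤ) * c (-7 : ℤ) := by
    rw [show m + (-7:ℤ) = m-7 by ring, zpow_neg, zpow_ofNat, solveEq (pow_ne_zero 9 hm3) B7, hneg 7, hAdef, hBdef]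
    field_simp
  have hbm6 : c (m + (-6 : ℤ)) = A * B ^ (-6 : ℤ) * c (-6 : ℤ) := by
    rw [show m + (-6:ℤ) = m-6 by ring, zpow_neg, zpow_ofNat, solveEq (pow_ne_zero 8 hm3) B6, hneg 6, hAdef, hBdef]
    field_simp
  have hbm5 : c (m + (-5 : ℤ)) = A * B ^ (-5 : ℤ) * c (-5 : ℤ) := by
    rw [show m + (-5:ℤ) = m-5 by ring, zpow_neg, zpow_ofNat, solveEq (pow_ne_zero 7 hm3) B5, hneg 5, hAdef, hBdef]
    field_simp
  have hbm4 : c (m + (-4 : ℤ)) = A * B ^ (-4 : ℤ) * c (-4 : ℤ) := by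
    rw [show m + (-4:ℤ) = m-4 by ring, zpow_neg, zpow_ofNat, solveEq (pow_ne_zero 6 hm3) B4, hneg 4, hAdef, hBdef]
    field_simp
  have hbm3 : c (m + (-3 : ℤ)) = A * B ^ (-3 : ℤ) * c (-3 : ℤ) := by
    rw [show m + (-3:ℤ) = m-3 by ring, zpow_neg, zpow_ofNat, solveEq (pow_ne_zero 5 hm3) B3, hneg 3, hAdef, hBdef]
    field_simp
  have hbm2 : c (m + (-2 : ℤ)) = A * B ^ (-2 : ℤ) * c (-2 : ℤ) := by
    rw [show m + (-2:ℤ) = m-2 by ring, zpow_neg, zpow_ofNat, solveEq (pow_ne_zero 4 hm3) B2, hneg 2, h2, hAdef, hBdef]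
    field_simp
  have hbm1 : c (m + (-1 : ℤ)) = A * B ^ (-1 : ℤ) * c (-1 : ℤ) := by
    rw [show m + (-1:ℤ) = m-1 by ring, hz1, hneg 1, h1, neg_zero, mul_zero]
  have hb0 : c (m + (0 : ℤ)) = A * B ^ (0 : ℤ) * c (0 : ℤ) := by
    rw [add_zero, hz0, h0, mul_zero]
  have hb1 : c (m + (1 : ℤ)) = A * B ^ (1 : ℤ) * c (1 : ℤ) := by
    rw [show m + (1:ℤ) = m+1 by ring, hz2, h1, mul_zero]
  have hb2 : c (m + (2 : ℤ)) = A * B ^ (2 : ℤ) * c (2 : ℤ) := by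
    rw [show m + (2:ℤ) = m+2 by ring, zpow_ofNat, h2, mul_one, hAdef, hBdef]
    field_simp
  have hb3 : c (m + (3 : ℤ)) = A * B ^ (3 : ℤ) * c (3 : ℤ) := by
    rw [show m + (3:ℤ) = m+3 by ring, zpow_ofNat, hAdef, hBdef]
    field_simp
  have hb4 : c (m + (4 : ℤ)) = A * B ^ (4 : ℤ) * c (4 : ℤ) := by
    rw [show m + (4:ℤ) = m+4 by ring, zpow_ofNat, solveEq (mul_ne_zero (pow_ne_zero 2 h3) hm2) X4, hAdef, hBdef]
    field_simp
  have hb5 : c (m + (5 : ℤ)) = A * B ^ (5 : ℤ) * c (5 : ℤ) := by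
    rw [show m + (5:ℤ) = m+5 by ring, zpow_ofNat, solveEq (mul_ne_zero (pow_ne_zero 3 h3) (pow_ne_zero 2 hm2)) X5, hAdef, hBdef]
    field_simp
  have hb6 : c (m + (6 : ℤ)) = A * B ^ (6 : ℤ) * c (6 : ℤ) := by
    rw [show m + (6:ℤ) = m+6 by ring, zpow_ofNat, solveEq (mul_ne_zero (pow_ne_zero 4 h3) (pow_ne_zero 3 hm2)) X6, hAdef, hBdef]
    field_simp
  have hb7 : c (m + (7 : ℤ)) = A * B ^ (7 : ℤ) * c (7 : ℤ) := by
    rw [show m + (7:ℤ) = m+7 by ring, zpow_ofNat, solveEq (mul_ne_zero (pow_ne_zero 5 h3) (pow_ne_zero 4 hm2)) X7, hAdef, hBdef]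
    field_simp
  have hb8 : c (m + (8 : ℤ)) = A * B ^ (8 : ℤ) * c (8 : ℤ) := by
    rw [show m + (8:ℤ) = m+8 by ring, zpow_ofNat, solveEq (mul_ne_zero (pow_ne_zero 6 h3) (pow_ne_zero 5 hm2)) X8, hAdef, hBdef]
    field_simp
  have hb9 : c (m + (9 : ℤ)) = A * B ^ (9 : ℤ) * c (9 : ℤ) := by
    rw [show m + (9:ℤ) = m+9 by ring, zpow_ofNat, solveEq (mul_ne_zero (pow_ne_zero 7 h3) (pow_ne_zero 6 hm2)) X9, hAdef, hBdef]
    field_simp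
  have base : ∀ k : ℤ, -9 ≤ k → k ≤ 9 → c (m + k) = A * B ^ k * c k := by
    intro k hk1 hk2
    interval_cases k <;> first | exact hbm9 | exact hbm8 | exact hbm7 | exact hbm6 | exact hbm5 | exact hbm4 | exact hbm3 | exact hbm2 | exact hbm1 | exact hb0 | exact hb1 | exact hb2 | exact hb3 | exact hb4 | exact hb5 | exact hb6 | exact hb7 | exact hb8 | exact hb9
  have main : ∀ j : ℕ, ∀ k : ℤ, k.natAbs ≤ j → c (m + k) = A * B ^ k * c k := by
    intro j
    induction j using Nat.strong_induction_on with
    | _ j IH =>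
      intro k hk
      by_cases hsmall : k.natAbs ≤ 9
      · exact base k (by omega) (by omega)
      · have hbig : 10 ≤ k.natAbs := by omega
        have ih' : ∀ i : ℤ, i.natAbs < k.natAbs → c (m + i) = A * B ^ i * c i := by
          intro i hi
          exact IH (k.natAbs - 1) (by omega) i (by omega)
        rcases le_or_gt 0 k with hk0 | hk0
        · exact stepUp k (by omega) (fun i hi1 hi2 => ih' i (by omega))
        · exact stepDown k (by omega) (fun i hi1 hi2 => ih' i (by omega))
  intro k
  have hK := main k.natAbs k le_rfl
  rw [hK]
  constructor
  · intro h
    rcases mul_eq_zero.mp h with h' | h'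
    · rcases mul_eq_zero.mp h' with h'' | h''
      · exact absurd h'' hA0
      · exact absurd h'' (zpow_ne_zero k hB0)
    · exact h'
  · intro h
    rw [h, mul_zero]

set_option maxHeartbeats 1000000 in
theorem stmt1 (p : ℕ) [Fact p.Prime] (hodd : Odd p)
    (c : ℤ → ZMod p)
    (hneg : ∀ n : ℤ, c (-n) = - c n)
    (h0 : c 0 = 0) (h1 : c 1 = 0) (h2 : c 2 = 1)
    (hS8 : ∀ n : ℤ, c 4 * c (n + 4) * c (n - 4) =
      c 3 * c 5 * c (n + 3) * c (n - 3)
      + (c 4 ^ 3 - c 3 ^ 3 * c 5) * c (n + 2) * c (n - 2)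
      + c 3 ^ 2 * c 6 * c (n + 1) * c (n - 1)
      - c 4 * c 6 * c n ^ 2)
    (hS9 : ∀ n : ℤ, c 3 * c 5 * c (n + 5) * c (n - 4) =
      c 3 ^ 2 * c 6 * c (n + 4) * c (n - 3)
      + c 4 * (c 5 ^ 2 - c 3 ^ 2 * c 6) * c (n + 3) * c (n - 2)
      + c 3 * c 4 * c 7 * c (n + 2) * c (n - 1)
      - c 5 * c 7 * c (n + 1) * c n)
    (hS10 : ∀ n : ℤ, c 4 * c (n + 5) * c (n - 5) =
      c 4 * c 6 * c (n + 3) * c (n - 3)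
      + c 4 * (c 5 ^ 2 - c 3 ^ 2 * c 6) * c (n + 2) * c (n - 2)
      + (c 3 ^ 3 * c 7 - c 8) * c (n + 1) * c (n - 1)
      - c 3 * c 4 * c 7 * c n ^ 2)
    (hS11 : ∀ n : ℤ, c 3 * c 5 * c (n + 6) * c (n - 5) =
      c 3 * c 4 * c 7 * c (n + 4) * c (n - 3)
      + (c 5 ^ 2 * c 6 - c 3 * c 4 ^ 2 * c 7) * c (n + 3) * c (n - 2)
      + c 3 * (c 3 * c 4 * c 8 - c 9) * c (n + 2) * c (n - 1)
      - c 3 * c 5 * c 8 * c (n + 1) * c n)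
    (h3 : c 3 ≠ 0) (h4 : c 4 ≠ 0) (h5 : c 5 ≠ 0) (h6 : c 6 ≠ 0) (h7 : c 7 ≠ 0)
    (h435 : c 4 ^ 3 - c 3 ^ 3 * c 5 ≠ 0)
    (hfour : ∀ m : ℤ, c m ≠ 0 ∨ c (m + 1) ≠ 0 ∨ c (m + 2) ≠ 0 ∨ c (m + 3) ≠ 0)
    (r : ℕ) (hrpos : 0 < r)
    (hr1 : c ((r : ℤ) - 1) = 0) (hr0 : c (r : ℤ) = 0) (hr2 : c ((r : ℤ) + 1) = 0)
    (hr3 : c ((r : ℤ) + 3) ≠ 0)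
    (hrleast : ∀ t : ℕ, 0 < t → c ((t : ℤ) - 1) = 0 → c (t : ℤ) = 0 →
      c ((t : ℤ) + 1) = 0 → r ≤ t)
    :
    ∀ s : ℕ, 0 < s → (∀ n : ℤ, c (n + (s : ℤ)) = c n) → r ∣ s := by
  intro s hs hper
  have hm2 : c ((r:ℤ)+2) ≠ 0 := by
    rcases hfour ((r:ℤ)-1) with h | h | h | h
    · exact absurd hr1 h
    · rw [show (r:ℤ)-1+1 = (r:ℤ) by ring] at h; exact absurd hr0 h
    · rw [show (r:ℤ)-1+2 = (r:ℤ)+1 by ring] at h; exact absurd hr2 h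
    · rw [show (r:ℤ)-1+3 = (r:ℤ)+2 by ring] at h; exact h
  have htr := transfer_zeros p c hneg h0 h1 h2 hS8 hS9 hS10 hS11 h3 h4 h5 h6 h7 h435 hfour
    ((r:ℤ)) hr1 hr0 hr2 hm2 hr3
  have hdown : ∀ q : ℕ, ∀ x : ℤ, c (x + (q:ℤ)*(r:ℤ)) = 0 → c x = 0 := by
    intro q
    induction q with
    | zero => intro x hx; simpa using hx
    | succ q IH =>
      intro x hx
      apply IH
      apply (htr (x + (q:ℤ)*(r:ℤ))).mp
      rw [show (r:ℤ) + (x + (q:ℤ)*(r:ℤ)) = x + ((q:ℤ)+1)*(r:ℤ) by ring]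
      push_cast at hx
      exact hx
  have hs1 : c ((s:ℤ)-1) = 0 := by
    have h := hper (-1)
    rw [show (-1:ℤ)+(s:ℤ) = (s:ℤ)-1 by ring] at h
    rw [h, hneg 1, h1, neg_zero]
  have hs0 : c ((s:ℤ)) = 0 := by
    have h := hper 0
    rw [zero_add] at h
    rw [h, h0]
  have hs2 : c ((s:ℤ)+1) = 0 := by
    have h := hper 1
    rw [show (1:ℤ)+(s:ℤ) = (s:ℤ)+1 by ring] at h
    rw [h, h1]
  have hmz : (r:ℤ) * ((s/r : ℕ):ℤ) + ((s % r : ℕ):ℤ) = (s:ℤ) := by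
    exact_mod_cast Nat.div_add_mod s r
  have ht1 : c (((s % r : ℕ):ℤ) - 1) = 0 := by
    apply hdown (s/r)
    rw [show ((s % r : ℕ):ℤ) - 1 + ((s/r : ℕ):ℤ)*(r:ℤ) = (s:ℤ)-1 from by linear_combination hmz]
    exact hs1
  have ht0 : c (((s % r : ℕ):ℤ)) = 0 := by
    apply hdown (s/r)
    rw [show ((s % r : ℕ):ℤ) + ((s/r : ℕ):ℤ)*(r:ℤ) = (s:ℤ) from by linear_combination hmz]
    exact hs0
  have ht2 : c (((s % r : ℕ):ℤ) + 1) = 0 := by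
    apply hdown (s/r)
    rw [show ((s % r : ℕ):ℤ) + 1 + ((s/r : ℕ):ℤ)*(r:ℤ) = (s:ℤ)+1 from by linear_combination hmz]
    exact hs2
  by_cases hzz : s % r = 0
  · exact Nat.dvd_of_mod_eq_zero hzz
  · exfalso
    have hle := hrleast (s % r) (Nat.pos_of_ne_zero hzz) ht1 ht0 ht2
    have hlt : s % r < r := Nat.mod_lt s hrpos
    omega
end

section
/- Let d be the least positive integer such that α^d = 1 and β^(d^2) = 1 in ZMod p (such d exists, since d = p - 1 has this property). Then the least positive integer s with c(n + s) = c(n) for all n ∈ ℤ exists and satisfies s = d·r. -/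
section EDSAux
variable {F : Type*} [Field F]

def IsR8 (e3 e4 e5 e6 : F) (u : ℤ → F) : Prop :=
  ∀ n : ℤ, e4 * u (n + 4) * u (n - 4) =
      e3 * e5 * u (n + 3) * u (n - 3)
      + (e4 ^ 3 - e3 ^ 3 * e5) * u (n + 2) * u (n - 2)
      + e3 ^ 2 * e6 * u (n + 1) * u (n - 1)
      - e4 * e6 * u n ^ 2

def IsR9 (e3 e4 e5 e6 e7 : F) (u : ℤ → F) : Prop :=
  ∀ n : ℤ, e3 * e5 * u (n + 5) * u (n - 4) =
      e3 ^ 2 * e6 * u (n + 4) * u (n - 3)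
      + e4 * (e5 ^ 2 - e3 ^ 2 * e6) * u (n + 3) * u (n - 2)
      + e3 * e4 * e7 * u (n + 2) * u (n - 1)
      - e5 * e7 * u (n + 1) * u n

def IsR10 (e3 e4 e5 e6 e7 e8 : F) (u : ℤ → F) : Prop :=
  ∀ n : ℤ, e4 * u (n + 5) * u (n - 5) =
      e4 * e6 * u (n + 3) * u (n - 3)
      + e4 * (e5 ^ 2 - e3 ^ 2 * e6) * u (n + 2) * u (n - 2)
      + (e3 ^ 3 * e7 - e8) * u (n + 1) * u (n - 1)
      - e3 * e4 * e7 * u n ^ 2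

def IsR11 (e3 e4 e5 e6 e7 e8 e9 : F) (u : ℤ → F) : Prop :=
  ∀ n : ℤ, e3 * e5 * u (n + 6) * u (n - 5) =
      e3 * e4 * e7 * u (n + 4) * u (n - 3)
      + (e5 ^ 2 * e6 - e3 * e4 ^ 2 * e7) * u (n + 3) * u (n - 2)
      + e3 * (e3 * e4 * e8 - e9) * u (n + 2) * u (n - 1)
      - e3 * e5 * e8 * u (n + 1) * u n

variable {e3 e4 e5 e6 e7 e8 e9 : F} {u v : ℤ → F}

lemma step_fwd (hu8 : IsR8 e3 e4 e5 e6 u) (hu9 : IsR9 e3 e4 e5 e6 e7 u)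
    (hu10 : IsR10 e3 e4 e5 e6 e7 e8 u) (hu11 : IsR11 e3 e4 e5 e6 e7 e8 e9 u)
    (hv8 : IsR8 e3 e4 e5 e6 v) (hv9 : IsR9 e3 e4 e5 e6 e7 v)
    (hv10 : IsR10 e3 e4 e5 e6 e7 e8 v) (hv11 : IsR11 e3 e4 e5 e6 e7 e8 e9 v)
    (h3 : e3 ≠ 0) (h4 : e4 ≠ 0) (h5 : e5 ≠ 0)
    (N : ℤ) (hw : ∀ k : ℤ, N - 11 ≤ k → k ≤ N - 1 → u k = v k)
    (hnz : u (N - 8) ≠ 0 ∨ u (N - 9) ≠ 0 ∨ u (N - 10) ≠ 0 ∨ u (N - 11) ≠ 0) :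
    u N = v N := by
  have a1 : u (N - 1) = v (N - 1) := hw _ (by omega) (by omega)
  have a2 : u (N - 2) = v (N - 2) := hw _ (by omega) (by omega)
  have a3 : u (N - 3) = v (N - 3) := hw _ (by omega) (by omega)
  have a4 : u (N - 4) = v (N - 4) := hw _ (by omega) (by omega)
  have a5 : u (N - 5) = v (N - 5) := hw _ (by omega) (by omega)
  have a6 : u (N - 6) = v (N - 6) := hw _ (by omega) (by omega)
  have a7 : u (N - 7) = v (N - 7) := hw _ (by omega) (by omega)
  have a8 : u (N - 8) = v (N - 8) := hw _ (by omega) (by omega)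
  have a9 : u (N - 9) = v (N - 9) := hw _ (by omega) (by omega)
  have a10 : u (N - 10) = v (N - 10) := hw _ (by omega) (by omega)
  have a11 : u (N - 11) = v (N - 11) := hw _ (by omega) (by omega)
  rcases hnz with h | h | h | h
  · have hu := hu8 (N - 4); have hv := hv8 (N - 4)
    simp only [show N - 4 + 4 = N by ring, show N - 4 - 4 = N - 8 by ring,
      show N - 4 + 3 = N - 1 by ring, show N - 4 - 3 = N - 7 by ring,
      show N - 4 + 2 = N - 2 by ring, show N - 4 - 2 = N - 6 by ring,
      show N - 4 + 1 = N - 3 by ring, show N - 4 - 1 = N - 5 by ring] at hu hv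
    rw [a1, a2, a3, a4, a5, a6, a7, a8] at hu
    have := hu.trans hv.symm
    exact mul_left_cancel₀ h4 (mul_right_cancel₀ (a8 ▸ h) this)
  · have hu := hu9 (N - 5); have hv := hv9 (N - 5)
    simp only [show N - 5 + 5 = N by ring, show N - 5 - 4 = N - 9 by ring,
      show N - 5 + 4 = N - 1 by ring, show N - 5 - 3 = N - 8 by ring,
      show N - 5 + 3 = N - 2 by ring, show N - 5 - 2 = N - 7 by ring,
      show N - 5 + 2 = N - 3 by ring, show N - 5 - 1 = N - 6 by ring,
      show N - 5 + 1 = N - 4 by ring] at hu hv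
    rw [a1, a2, a3, a4, a5, a6, a7, a8, a9] at hu
    have := hu.trans hv.symm
    exact mul_left_cancel₀ (mul_ne_zero h3 h5) (mul_right_cancel₀ (a9 ▸ h) this)
  · have hu := hu10 (N - 5); have hv := hv10 (N - 5)
    simp only [show N - 5 + 5 = N by ring, show N - 5 - 5 = N - 10 by ring,
      show N - 5 + 3 = N - 2 by ring, show N - 5 - 3 = N - 8 by ring,
      show N - 5 + 2 = N - 3 by ring, show N - 5 - 2 = N - 7 by ring,
      show N - 5 + 1 = N - 4 by ring, show N - 5 - 1 = N - 6 by ring] at hu hv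
    rw [a2, a3, a4, a5, a6, a7, a8, a10] at hu
    have := hu.trans hv.symm
    exact mul_left_cancel₀ h4 (mul_right_cancel₀ (a10 ▸ h) this)
  · have hu := hu11 (N - 6); have hv := hv11 (N - 6)
    simp only [show N - 6 + 6 = N by ring, show N - 6 - 5 = N - 11 by ring,
      show N - 6 + 4 = N - 2 by ring, show N - 6 - 3 = N - 9 by ring,
      show N - 6 + 3 = N - 3 by ring, show N - 6 - 2 = N - 8 by ring,
      show N - 6 + 2 = N - 4 by ring, show N - 6 - 1 = N - 7 by ring,
      show N - 6 + 1 = N - 5 by ring] at hu hv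
    rw [a2, a3, a4, a5, a6, a7, a8, a9, a11] at hu
    have := hu.trans hv.symm
    exact mul_left_cancel₀ (mul_ne_zero h3 h5) (mul_right_cancel₀ (a11 ▸ h) this)

lemma step_bwd (hu8 : IsR8 e3 e4 e5 e6 u) (hu9 : IsR9 e3 e4 e5 e6 e7 u)
    (hu10 : IsR10 e3 e4 e5 e6 e7 e8 u) (hu11 : IsR11 e3 e4 e5 e6 e7 e8 e9 u)
    (hv8 : IsR8 e3 e4 e5 e6 v) (hv9 : IsR9 e3 e4 e5 e6 e7 v)
    (hv10 : IsR10 e3 e4 e5 e6 e7 e8 v) (hv11 : IsR11 e3 e4 e5 e6 e7 e8 e9 v)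
    (h3 : e3 ≠ 0) (h4 : e4 ≠ 0) (h5 : e5 ≠ 0)
    (N : ℤ) (hw : ∀ k : ℤ, N + 1 ≤ k → k ≤ N + 11 → u k = v k)
    (hnz : u (N + 8) ≠ 0 ∨ u (N + 9) ≠ 0 ∨ u (N + 10) ≠ 0 ∨ u (N + 11) ≠ 0) :
    u N = v N := by
  have a1 : u (N + 1) = v (N + 1) := hw _ (by omega) (by omega)
  have a2 : u (N + 2) = v (N + 2) := hw _ (by omega) (by omega)
  have a3 : u (N + 3) = v (N + 3) := hw _ (by omega) (by omega)
  have a4 : u (N + 4) = v (N + 4) := hw _ (by omega) (by omega)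
  have a5 : u (N + 5) = v (N + 5) := hw _ (by omega) (by omega)
  have a6 : u (N + 6) = v (N + 6) := hw _ (by omega) (by omega)
  have a7 : u (N + 7) = v (N + 7) := hw _ (by omega) (by omega)
  have a8 : u (N + 8) = v (N + 8) := hw _ (by omega) (by omega)
  have a9 : u (N + 9) = v (N + 9) := hw _ (by omega) (by omega)
  have a10 : u (N + 10) = v (N + 10) := hw _ (by omega) (by omega)
  have a11 : u (N + 11) = v (N + 11) := hw _ (by omega) (by omega)
  rcases hnz with h | h | h | h
  · have hu := hu8 (N + 4); have hv := hv8 (N + 4)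
    simp only [show N + 4 + 4 = N + 8 by ring, show N + 4 - 4 = N by ring,
      show N + 4 + 3 = N + 7 by ring, show N + 4 - 3 = N + 1 by ring,
      show N + 4 + 2 = N + 6 by ring, show N + 4 - 2 = N + 2 by ring,
      show N + 4 + 1 = N + 5 by ring, show N + 4 - 1 = N + 3 by ring] at hu hv
    rw [a1, a2, a3, a4, a5, a6, a7, a8] at hu
    have := hu.trans hv.symm
    exact mul_left_cancel₀ (mul_ne_zero h4 (a8 ▸ h)) this
  · have hu := hu9 (N + 4); have hv := hv9 (N + 4)
    simp only [show N + 4 + 5 = N + 9 by ring, show N + 4 - 4 = N by ring,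
      show N + 4 + 4 = N + 8 by ring, show N + 4 - 3 = N + 1 by ring,
      show N + 4 + 3 = N + 7 by ring, show N + 4 - 2 = N + 2 by ring,
      show N + 4 + 2 = N + 6 by ring, show N + 4 - 1 = N + 3 by ring,
      show N + 4 + 1 = N + 5 by ring] at hu hv
    rw [a1, a2, a3, a4, a5, a6, a7, a8, a9] at hu
    have := hu.trans hv.symm
    exact mul_left_cancel₀ (mul_ne_zero (mul_ne_zero h3 h5) (a9 ▸ h)) this
  · have hu := hu10 (N + 5); have hv := hv10 (N + 5)
    simp only [show N + 5 + 5 = N + 10 by ring, show N + 5 - 5 = N by ring,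
      show N + 5 + 3 = N + 8 by ring, show N + 5 - 3 = N + 2 by ring,
      show N + 5 + 2 = N + 7 by ring, show N + 5 - 2 = N + 3 by ring,
      show N + 5 + 1 = N + 6 by ring, show N + 5 - 1 = N + 4 by ring] at hu hv
    rw [a2, a3, a4, a5, a6, a7, a8, a10] at hu
    have := hu.trans hv.symm
    exact mul_left_cancel₀ (mul_ne_zero h4 (a10 ▸ h)) this
  · have hu := hu11 (N + 5); have hv := hv11 (N + 5)
    simp only [show N + 5 + 6 = N + 11 by ring, show N + 5 - 5 = N by ring,
      show N + 5 + 4 = N + 9 by ring, show N + 5 - 3 = N + 2 by ring,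
      show N + 5 + 3 = N + 8 by ring, show N + 5 - 2 = N + 3 by ring,
      show N + 5 + 2 = N + 7 by ring, show N + 5 - 1 = N + 4 by ring,
      show N + 5 + 1 = N + 6 by ring] at hu hv
    rw [a2, a3, a4, a5, a6, a7, a8, a9, a11] at hu
    have := hu.trans hv.symm
    exact mul_left_cancel₀ (mul_ne_zero (mul_ne_zero h3 h5) (a11 ▸ h)) this

lemma base11 (hu8 : IsR8 e3 e4 e5 e6 u) (hu9 : IsR9 e3 e4 e5 e6 e7 u)
    (hu10 : IsR10 e3 e4 e5 e6 e7 e8 u)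
    (hv8 : IsR8 e3 e4 e5 e6 v) (hv9 : IsR9 e3 e4 e5 e6 e7 v)
    (hv10 : IsR10 e3 e4 e5 e6 e7 e8 v)
    (h3 : e3 ≠ 0) (h4 : e4 ≠ 0) (h5 : e5 ≠ 0) (h6 : e6 ≠ 0) (h7 : e7 ≠ 0)
    (h435 : e4 ^ 3 - e3 ^ 3 * e5 ≠ 0)
    (hum1 : u (-1) = 0) (hu0 : u 0 = 0) (hu1 : u 1 = 0)
    (hvm1 : v (-1) = 0) (hv0 : v 0 = 0) (hv1 : v 1 = 0)
    (q2 : u 2 = v 2) (q3 : u 3 = v 3) (hv2 : v 2 ≠ 0) (hv3 : v 3 ≠ 0) :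
    ∀ k : ℤ, -1 ≤ k → k ≤ 9 → u k = v k := by
  have q4 : u 4 = v 4 := by
    have hu := hu8 3; have hv := hv8 3
    norm_num at hu hv
    simp only [hum1, hu0, hu1, q2, q3] at hu
    simp only [hvm1, hv0, hv1] at hv
    have key : (e3 ^ 2 * e6 * v 2) * u 4 = (e3 ^ 2 * e6 * v 2) * v 4 := by
      linear_combination hv - hu
    exact mul_left_cancel₀ (mul_ne_zero (mul_ne_zero (pow_ne_zero 2 h3) h6) hv2) key
  have q5 : u 5 = v 5 := by
    have hu := hu9 3; have hv := hv9 3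
    norm_num at hu hv
    simp only [hum1, hu0, hu1, q2, q3, q4] at hu
    simp only [hvm1, hv0, hv1] at hv
    have key : (e3 * e4 * e7 * v 2) * u 5 = (e3 * e4 * e7 * v 2) * v 5 := by
      linear_combination hv - hu
    exact mul_left_cancel₀
      (mul_ne_zero (mul_ne_zero (mul_ne_zero h3 h4) h7) hv2) key
  have q6 : u 6 = v 6 := by
    have hu := hu8 4; have hv := hv8 4
    norm_num at hu hv
    simp only [hu0, hu1, q2, q3, q4, q5] at hu
    simp only [hv0, hv1] at hv
    have key : ((e4 ^ 3 - e3 ^ 3 * e5) * v 2) * u 6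
        = ((e4 ^ 3 - e3 ^ 3 * e5) * v 2) * v 6 := by
      linear_combination hv - hu
    exact mul_left_cancel₀ (mul_ne_zero h435 hv2) key
  have H : u 7 = v 7 ∧ u 8 = v 8 ∧ u 9 = v 9 := by
    by_cases hA : e5 ^ 2 - e3 ^ 2 * e6 = 0
    · have q8 : u 8 = v 8 := by
        have hu := hu10 5; have hv := hv10 5
        norm_num at hu hv
        simp only [hu0, q2, q3, q4, q5, q6] at hu
        simp only [hv0] at hv
        have key : (e4 * e6 * v 2) * u 8 = (e4 * e6 * v 2) * v 8 := by
          linear_combination hv - hu - e4 * v 3 * (u 7 - v 7) * hA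
        exact mul_left_cancel₀ (mul_ne_zero (mul_ne_zero h4 h6) hv2) key
      have q7 : u 7 = v 7 := by
        have hu := hu8 5; have hv := hv8 5
        norm_num at hu hv
        simp only [hu1, q2, q3, q4, q5, q6, q8] at hu
        simp only [hv1] at hv
        have key : ((e4 ^ 3 - e3 ^ 3 * e5) * v 3) * u 7
            = ((e4 ^ 3 - e3 ^ 3 * e5) * v 3) * v 7 := by
          linear_combination hv - hu
        exact mul_left_cancel₀ (mul_ne_zero h435 hv3) key
      have q9 : u 9 = v 9 := by
        have hu := hu9 5; have hv := hv9 5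
        norm_num at hu hv
        simp only [hu1, q2, q3, q4, q5, q6, q7, q8] at hu
        simp only [hv1] at hv
        have key : (e3 ^ 2 * e6 * v 2) * u 9 = (e3 ^ 2 * e6 * v 2) * v 9 := by
          linear_combination hv - hu
        exact mul_left_cancel₀
          (mul_ne_zero (mul_ne_zero (pow_ne_zero 2 h3) h6) hv2) key
      exact ⟨q7, q8, q9⟩
    · have q7 : u 7 = v 7 := by
        have hu := hu9 4; have hv := hv9 4
        norm_num at hu hv
        simp only [hu0, hu1, q2, q3, q4, q5, q6] at hu
        simp only [hv0, hv1] at hv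
        have key : (e4 * (e5 ^ 2 - e3 ^ 2 * e6) * v 2) * u 7
            = (e4 * (e5 ^ 2 - e3 ^ 2 * e6) * v 2) * v 7 := by
          linear_combination hv - hu
        exact mul_left_cancel₀ (mul_ne_zero (mul_ne_zero h4 hA) hv2) key
      have q8 : u 8 = v 8 := by
        have hu := hu10 5; have hv := hv10 5
        norm_num at hu hv
        simp only [hu0, q2, q3, q4, q5, q6, q7] at hu
        simp only [hv0] at hv
        have key : (e4 * e6 * v 2) * u 8 = (e4 * e6 * v 2) * v 8 := by
          linear_combination hv - hu
        exact mul_left_cancel₀ (mul_ne_zero (mul_ne_zero h4 h6) hv2) key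
      have q9 : u 9 = v 9 := by
        have hu := hu9 5; have hv := hv9 5
        norm_num at hu hv
        simp only [hu1, q2, q3, q4, q5, q6, q7, q8] at hu
        simp only [hv1] at hv
        have key : (e3 ^ 2 * e6 * v 2) * u 9 = (e3 ^ 2 * e6 * v 2) * v 9 := by
          linear_combination hv - hu
        exact mul_left_cancel₀
          (mul_ne_zero (mul_ne_zero (pow_ne_zero 2 h3) h6) hv2) key
      exact ⟨q7, q8, q9⟩
  obtain ⟨q7, q8, q9⟩ := H
  intro k hk1 hk2
  interval_cases k
  · rw [hum1, hvm1]
  · rw [hu0, hv0]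
  · rw [hu1, hv1]
  · exact q2
  · exact q3
  · exact q4
  · exact q5
  · exact q6
  · exact q7
  · exact q8
  · exact q9

lemma IsR8.shift (h : IsR8 e3 e4 e5 e6 u) (t : ℤ) :
    IsR8 e3 e4 e5 e6 (fun n => u (n + t)) := by
  intro n
  have h' := h (n + t)
  simp only [show n + t + 4 = n + 4 + t by ring, show n + t - 4 = n - 4 + t by ring,
    show n + t + 3 = n + 3 + t by ring, show n + t - 3 = n - 3 + t by ring,
    show n + t + 2 = n + 2 + t by ring, show n + t - 2 = n - 2 + t by ring,
    show n + t + 1 = n + 1 + t by ring, show n + t - 1 = n - 1 + t by ring] at h'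
  exact h'

lemma IsR9.shift (h : IsR9 e3 e4 e5 e6 e7 u) (t : ℤ) :
    IsR9 e3 e4 e5 e6 e7 (fun n => u (n + t)) := by
  intro n
  have h' := h (n + t)
  simp only [show n + t + 5 = n + 5 + t by ring, show n + t - 4 = n - 4 + t by ring,
    show n + t + 4 = n + 4 + t by ring, show n + t - 3 = n - 3 + t by ring,
    show n + t + 3 = n + 3 + t by ring, show n + t - 2 = n - 2 + t by ring,
    show n + t + 2 = n + 2 + t by ring, show n + t - 1 = n - 1 + t by ring,
    show n + t + 1 = n + 1 + t by ring] at h'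
  exact h'

lemma IsR10.shift (h : IsR10 e3 e4 e5 e6 e7 e8 u) (t : ℤ) :
    IsR10 e3 e4 e5 e6 e7 e8 (fun n => u (n + t)) := by
  intro n
  have h' := h (n + t)
  simp only [show n + t + 5 = n + 5 + t by ring, show n + t - 5 = n - 5 + t by ring,
    show n + t + 3 = n + 3 + t by ring, show n + t - 3 = n - 3 + t by ring,
    show n + t + 2 = n + 2 + t by ring, show n + t - 2 = n - 2 + t by ring,
    show n + t + 1 = n + 1 + t by ring, show n + t - 1 = n - 1 + t by ring] at h'
  exact h'

lemma IsR11.shift (h : IsR11 e3 e4 e5 e6 e7 e8 e9 u) (t : ℤ) :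
    IsR11 e3 e4 e5 e6 e7 e8 e9 (fun n => u (n + t)) := by
  intro n
  have h' := h (n + t)
  simp only [show n + t + 6 = n + 6 + t by ring, show n + t - 5 = n - 5 + t by ring,
    show n + t + 4 = n + 4 + t by ring, show n + t - 3 = n - 3 + t by ring,
    show n + t + 3 = n + 3 + t by ring, show n + t - 2 = n - 2 + t by ring,
    show n + t + 2 = n + 2 + t by ring, show n + t - 1 = n - 1 + t by ring,
    show n + t + 1 = n + 1 + t by ring] at h'
  exact h'

lemma IsR8.gauge (h : IsR8 e3 e4 e5 e6 u) (A B : F) (hB : B ≠ 0) :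
    IsR8 e3 e4 e5 e6 (fun n => A * B ^ n * u n) := by
  intro n
  have pair : ∀ i j : ℤ, i + j = 2 * n →
      (A * B ^ i * u i) * (A * B ^ j * u j) = A ^ 2 * B ^ (2 * n) * (u i * u j) := by
    intro i j hij
    rw [← hij, zpow_add₀ hB]; ring
  simp only []
  linear_combination e4 * pair (n + 4) (n - 4) (by ring)
    - e3 * e5 * pair (n + 3) (n - 3) (by ring)
    - (e4 ^ 3 - e3 ^ 3 * e5) * pair (n + 2) (n - 2) (by ring)
    - e3 ^ 2 * e6 * pair (n + 1) (n - 1) (by ring)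
    + e4 * e6 * pair n n (by ring)
    + A ^ 2 * B ^ (2 * n) * h n

lemma IsR9.gauge (h : IsR9 e3 e4 e5 e6 e7 u) (A B : F) (hB : B ≠ 0) :
    IsR9 e3 e4 e5 e6 e7 (fun n => A * B ^ n * u n) := by
  intro n
  have pair : ∀ i j : ℤ, i + j = 2 * n + 1 →
      (A * B ^ i * u i) * (A * B ^ j * u j) = A ^ 2 * B ^ (2 * n + 1) * (u i * u j) := by
    intro i j hij
    rw [← hij, zpow_add₀ hB]; ring
  simp only []
  linear_combination e3 * e5 * pair (n + 5) (n - 4) (by ring)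
    - e3 ^ 2 * e6 * pair (n + 4) (n - 3) (by ring)
    - e4 * (e5 ^ 2 - e3 ^ 2 * e6) * pair (n + 3) (n - 2) (by ring)
    - e3 * e4 * e7 * pair (n + 2) (n - 1) (by ring)
    + e5 * e7 * pair (n + 1) n (by ring)
    + A ^ 2 * B ^ (2 * n + 1) * h n

lemma IsR10.gauge (h : IsR10 e3 e4 e5 e6 e7 e8 u) (A B : F) (hB : B ≠ 0) :
    IsR10 e3 e4 e5 e6 e7 e8 (fun n => A * B ^ n * u n) := by
  intro n
  have pair : ∀ i j : ℤ, i + j = 2 * n →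
      (A * B ^ i * u i) * (A * B ^ j * u j) = A ^ 2 * B ^ (2 * n) * (u i * u j) := by
    intro i j hij
    rw [← hij, zpow_add₀ hB]; ring
  simp only []
  linear_combination e4 * pair (n + 5) (n - 5) (by ring)
    - e4 * e6 * pair (n + 3) (n - 3) (by ring)
    - e4 * (e5 ^ 2 - e3 ^ 2 * e6) * pair (n + 2) (n - 2) (by ring)
    - (e3 ^ 3 * e7 - e8) * pair (n + 1) (n - 1) (by ring)
    + e3 * e4 * e7 * pair n n (by ring)
    + A ^ 2 * B ^ (2 * n) * h n

lemma IsR11.gauge (h : IsR11 e3 e4 e5 e6 e7 e8 e9 u) (A B : F) (hB : B ≠ 0) :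
    IsR11 e3 e4 e5 e6 e7 e8 e9 (fun n => A * B ^ n * u n) := by
  intro n
  have pair : ∀ i j : ℤ, i + j = 2 * n + 1 →
      (A * B ^ i * u i) * (A * B ^ j * u j) = A ^ 2 * B ^ (2 * n + 1) * (u i * u j) := by
    intro i j hij
    rw [← hij, zpow_add₀ hB]; ring
  simp only []
  linear_combination e3 * e5 * pair (n + 6) (n - 5) (by ring)
    - e3 * e4 * e7 * pair (n + 4) (n - 3) (by ring)
    - (e5 ^ 2 * e6 - e3 * e4 ^ 2 * e7) * pair (n + 3) (n - 2) (by ring)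
    - e3 * (e3 * e4 * e8 - e9) * pair (n + 2) (n - 1) (by ring)
    + e3 * e5 * e8 * pair (n + 1) n (by ring)
    + A ^ 2 * B ^ (2 * n + 1) * h n


lemma ext11 (hu8 : IsR8 e3 e4 e5 e6 u) (hu9 : IsR9 e3 e4 e5 e6 e7 u)
    (hu10 : IsR10 e3 e4 e5 e6 e7 e8 u) (hu11 : IsR11 e3 e4 e5 e6 e7 e8 e9 u)
    (hv8 : IsR8 e3 e4 e5 e6 v) (hv9 : IsR9 e3 e4 e5 e6 e7 v)
    (hv10 : IsR10 e3 e4 e5 e6 e7 e8 v) (hv11 : IsR11 e3 e4 e5 e6 e7 e8 e9 v)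
    (h3 : e3 ≠ 0) (h4 : e4 ≠ 0) (h5 : e5 ≠ 0)
    (hfu : ∀ m : ℤ, u m ≠ 0 ∨ u (m + 1) ≠ 0 ∨ u (m + 2) ≠ 0 ∨ u (m + 3) ≠ 0)
    (base : ∀ k : ℤ, -1 ≤ k → k ≤ 9 → u k = v k) :
    ∀ n : ℤ, u n = v n := by
  have fwd : ∀ m : ℕ, ∀ k : ℤ, -1 ≤ k → k ≤ 9 + m → u k = v k := by
    intro m
    induction m with
    | zero => intro k h1 h2; exact base k h1 (by exact_mod_cast h2)
    | succ i ih =>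
      intro k h1 h2
      rcases lt_or_ge k (9 + (i : ℤ) + 1) with h | h
      · exact ih k h1 (by omega)
      · have hk : k = 10 + (i : ℤ) := by push_cast at h2; omega
        subst hk
        apply step_fwd hu8 hu9 hu10 hu11 hv8 hv9 hv10 hv11 h3 h4 h5
        · intro j hj1 hj2; exact ih j (by omega) (by omega)
        · have hz := hfu (10 + (i : ℤ) - 11)
          simp only [show 10 + (i : ℤ) - 11 + 1 = 10 + (i : ℤ) - 10 by ring,
            show 10 + (i : ℤ) - 11 + 2 = 10 + (i : ℤ) - 9 by ring,
            show 10 + (i : ℤ) - 11 + 3 = 10 + (i : ℤ) - 8 by ring] at hz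
          tauto
  have bwd : ∀ m : ℕ, ∀ k : ℤ, -1 - m ≤ k → k ≤ 9 → u k = v k := by
    intro m
    induction m with
    | zero => intro k h1 h2; exact base k (by exact_mod_cast h1) h2
    | succ i ih =>
      intro k h1 h2
      rcases lt_or_ge (-1 - (i : ℤ) - 1) k with h | h
      · exact ih k (by omega) h2
      · have hk : k = -2 - (i : ℤ) := by push_cast at h1; omega
        subst hk
        apply step_bwd hu8 hu9 hu10 hu11 hv8 hv9 hv10 hv11 h3 h4 h5
        · intro j hj1 hj2; exact ih j (by omega) (by omega)
        · have hz := hfu (-2 - (i : ℤ) + 8)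
          simp only [show -2 - (i : ℤ) + 8 + 1 = -2 - (i : ℤ) + 9 by ring,
            show -2 - (i : ℤ) + 8 + 2 = -2 - (i : ℤ) + 10 by ring,
            show -2 - (i : ℤ) + 8 + 3 = -2 - (i : ℤ) + 11 by ring] at hz
          tauto
  intro n
  rcases le_or_gt (-1) n with h | h
  · exact fwd n.toNat n h (by omega)
  · exact bwd (-n).toNat n (by omega) (by omega)

end EDSAux

theorem stmt2 (p : ℕ) [Fact p.Prime] (hodd : Odd p)
    (c : ℤ → ZMod p)
    (hneg : ∀ n : ℤ, c (-n) = - c n)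
    (h0 : c 0 = 0) (h1 : c 1 = 0) (h2 : c 2 = 1)
    (hS8 : ∀ n : ℤ, c 4 * c (n + 4) * c (n - 4) =
      c 3 * c 5 * c (n + 3) * c (n - 3)
      + (c 4 ^ 3 - c 3 ^ 3 * c 5) * c (n + 2) * c (n - 2)
      + c 3 ^ 2 * c 6 * c (n + 1) * c (n - 1)
      - c 4 * c 6 * c n ^ 2)
    (hS9 : ∀ n : ℤ, c 3 * c 5 * c (n + 5) * c (n - 4) =
      c 3 ^ 2 * c 6 * c (n + 4) * c (n - 3)
      + c 4 * (c 5 ^ 2 - c 3 ^ 2 * c 6) * c (n + 3) * c (n - 2)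
      + c 3 * c 4 * c 7 * c (n + 2) * c (n - 1)
      - c 5 * c 7 * c (n + 1) * c n)
    (hS10 : ∀ n : ℤ, c 4 * c (n + 5) * c (n - 5) =
      c 4 * c 6 * c (n + 3) * c (n - 3)
      + c 4 * (c 5 ^ 2 - c 3 ^ 2 * c 6) * c (n + 2) * c (n - 2)
      + (c 3 ^ 3 * c 7 - c 8) * c (n + 1) * c (n - 1)
      - c 3 * c 4 * c 7 * c n ^ 2)
    (hS11 : ∀ n : ℤ, c 3 * c 5 * c (n + 6) * c (n - 5) =
      c 3 * c 4 * c 7 * c (n + 4) * c (n - 3)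
      + (c 5 ^ 2 * c 6 - c 3 * c 4 ^ 2 * c 7) * c (n + 3) * c (n - 2)
      + c 3 * (c 3 * c 4 * c 8 - c 9) * c (n + 2) * c (n - 1)
      - c 3 * c 5 * c 8 * c (n + 1) * c n)
    (h3 : c 3 ≠ 0) (h4 : c 4 ≠ 0) (h5 : c 5 ≠ 0) (h6 : c 6 ≠ 0) (h7 : c 7 ≠ 0)
    (h435 : c 4 ^ 3 - c 3 ^ 3 * c 5 ≠ 0)
    (hfour : ∀ m : ℤ, c m ≠ 0 ∨ c (m + 1) ≠ 0 ∨ c (m + 2) ≠ 0 ∨ c (m + 3) ≠ 0)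
    (r : ℕ) (hrpos : 0 < r)
    (hr1 : c ((r : ℤ) - 1) = 0) (hr0 : c (r : ℤ) = 0) (hr2 : c ((r : ℤ) + 1) = 0)
    (hr3 : c ((r : ℤ) + 3) ≠ 0)
    (hrleast : ∀ t : ℕ, 0 < t → c ((t : ℤ) - 1) = 0 → c (t : ℤ) = 0 →
      c ((t : ℤ) + 1) = 0 → r ≤ t)
    (α β : ZMod p)
    (hα : α = c ((r : ℤ) + 3) * (c 3 * c ((r : ℤ) + 2))⁻¹)
    (hβ : β = c 3 ^ 2 * c ((r : ℤ) + 2) ^ 3 * (c ((r : ℤ) + 3) ^ 2)⁻¹)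
    (d : ℕ) (hdpos : 0 < d) (hd1 : α ^ d = 1) (hd2 : β ^ (d ^ 2) = 1)
    (hdleast : ∀ e : ℕ, 0 < e → α ^ e = 1 → β ^ (e ^ 2) = 1 → d ≤ e) :
    ∃ s : ℕ, 0 < s ∧ (∀ n : ℤ, c (n + (s : ℤ)) = c n) ∧
      (∀ t : ℕ, 0 < t → (∀ n : ℤ, c (n + (t : ℤ)) = c n) → s ≤ t) ∧
      s = d * r := by
  have hcm1 : c (-1) = 0 := by have := hneg 1; rw [h1] at this; simpa using this
  have hcm2 : c (-2) = -1 := by have := hneg 2; rw [h2] at this; exact this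
  have ha : c ((r : ℤ) + 2) ≠ 0 := by
    have h := hfour ((r : ℤ) - 1)
    simp only [show (r : ℤ) - 1 + 1 = (r : ℤ) by ring,
      show (r : ℤ) - 1 + 2 = (r : ℤ) + 1 by ring,
      show (r : ℤ) - 1 + 3 = (r : ℤ) + 2 by ring] at h
    rcases h with h | h | h | h
    exacts [absurd hr1 h, absurd hr0 h, absurd hr2 h, h]
  have hαne : α ≠ 0 := by
    rw [hα]; exact mul_ne_zero hr3 (inv_ne_zero (mul_ne_zero h3 ha))
  have hβne : β ≠ 0 := by
    rw [hβ]
    exact mul_ne_zero (mul_ne_zero (pow_ne_zero 2 h3) (pow_ne_zero 3 ha))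
      (inv_ne_zero (pow_ne_zero 2 hr3))
  have hc8 : IsR8 (c 3) (c 4) (c 5) (c 6) c := hS8
  have hc9 : IsR9 (c 3) (c 4) (c 5) (c 6) (c 7) c := hS9
  have hc10 : IsR10 (c 3) (c 4) (c 5) (c 6) (c 7) (c 8) c := hS10
  have hc11 : IsR11 (c 3) (c 4) (c 5) (c 6) (c 7) (c 8) (c 9) c := hS11
  have hu8 := hc8.shift (r : ℤ)
  have hu9 := hc9.shift (r : ℤ)
  have hu10 := hc10.shift (r : ℤ)
  have hu11 := hc11.shift (r : ℤ)
  have hv8 := hc8.gauge β α hαne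
  have hv9 := hc9.gauge β α hαne
  have hv10 := hc10.gauge β α hαne
  have hv11 := hc11.gauge β α hαne
  have hz2 : α ^ (2 : ℤ) = α * α := by
    rw [show (2 : ℤ) = 1 + 1 by norm_num, zpow_add₀ hαne, zpow_one]
  have hz3 : α ^ (3 : ℤ) = α * α * α := by
    rw [show (3 : ℤ) = 1 + 1 + 1 by norm_num, zpow_add₀ hαne, zpow_add₀ hαne, zpow_one]
  have hum1 : (fun n : ℤ => c (n + (r : ℤ))) (-1) = 0 := by
    show c (-1 + (r : ℤ)) = 0
    rw [show (-1 : ℤ) + (r : ℤ) = (r : ℤ) - 1 by ring]; exact hr1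
  have hu0 : (fun n : ℤ => c (n + (r : ℤ))) 0 = 0 := by
    show c (0 + (r : ℤ)) = 0; rw [zero_add]; exact hr0
  have hu1 : (fun n : ℤ => c (n + (r : ℤ))) 1 = 0 := by
    show c (1 + (r : ℤ)) = 0; rw [add_comm]; exact hr2
  have hvm1 : (fun n : ℤ => β * α ^ n * c n) (-1) = 0 := by
    show β * α ^ (-1 : ℤ) * c (-1) = 0; rw [hcm1, mul_zero]
  have hv0 : (fun n : ℤ => β * α ^ n * c n) 0 = 0 := by
    show β * α ^ (0 : ℤ) * c 0 = 0; rw [h0, mul_zero]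
  have hv1 : (fun n : ℤ => β * α ^ n * c n) 1 = 0 := by
    show β * α ^ (1 : ℤ) * c 1 = 0; rw [h1, mul_zero]
  have h1' : α * (c 3 * c ((r : ℤ) + 2)) = c ((r : ℤ) + 3) := by
    rw [hα, inv_mul_cancel_right₀ (mul_ne_zero h3 ha)]
  have hA2 : β * (α * α) = c ((r : ℤ) + 2) := by
    rw [hβ, hα]
    field_simp
  have hA3 : β * (α * α * α) * c 3 = c ((r : ℤ) + 3) := by
    calc β * (α * α * α) * c 3 = (β * (α * α)) * (α * c 3) := by ring
      _ = c ((r : ℤ) + 2) * (α * c 3) := by rw [hA2]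
      _ = α * (c 3 * c ((r : ℤ) + 2)) := by ring
      _ = c ((r : ℤ) + 3) := h1'
  have hq2 : (fun n : ℤ => c (n + (r : ℤ))) 2 = (fun n : ℤ => β * α ^ n * c n) 2 := by
    show c (2 + (r : ℤ)) = β * α ^ (2 : ℤ) * c 2
    rw [show (2 : ℤ) + (r : ℤ) = (r : ℤ) + 2 by ring, h2, mul_one, hz2]
    exact hA2.symm
  have hq3 : (fun n : ℤ => c (n + (r : ℤ))) 3 = (fun n : ℤ => β * α ^ n * c n) 3 := by
    show c (3 + (r : ℤ)) = β * α ^ (3 : ℤ) * c 3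
    rw [show (3 : ℤ) + (r : ℤ) = (r : ℤ) + 3 by ring, hz3]
    exact hA3.symm
  have hu2ne : (fun n : ℤ => c (n + (r : ℤ))) 2 ≠ 0 := by
    show c (2 + (r : ℤ)) ≠ 0
    rw [show (2 : ℤ) + (r : ℤ) = (r : ℤ) + 2 by ring]; exact ha
  have hu3ne : (fun n : ℤ => c (n + (r : ℤ))) 3 ≠ 0 := by
    show c (3 + (r : ℤ)) ≠ 0
    rw [show (3 : ℤ) + (r : ℤ) = (r : ℤ) + 3 by ring]; exact hr3
  have hv2ne : (fun n : ℤ => β * α ^ n * c n) 2 ≠ 0 := hq2 ▸ hu2ne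
  have hv3ne : (fun n : ℤ => β * α ^ n * c n) 3 ≠ 0 := hq3 ▸ hu3ne
  have hfu : ∀ m : ℤ, (fun n : ℤ => c (n + (r : ℤ))) m ≠ 0 ∨
      (fun n : ℤ => c (n + (r : ℤ))) (m + 1) ≠ 0 ∨
      (fun n : ℤ => c (n + (r : ℤ))) (m + 2) ≠ 0 ∨
      (fun n : ℤ => c (n + (r : ℤ))) (m + 3) ≠ 0 := by
    intro m
    have h := hfour (m + (r : ℤ))
    simp only [show m + (r : ℤ) + 1 = m + 1 + (r : ℤ) by ring,
      show m + (r : ℤ) + 2 = m + 2 + (r : ℤ) by ring,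
      show m + (r : ℤ) + 3 = m + 3 + (r : ℤ) by ring] at h
    exact h
  have base := base11 hu8 hu9 hu10 hv8 hv9 hv10 h3 h4 h5 h6 h7 h435
    hum1 hu0 hu1 hvm1 hv0 hv1 hq2 hq3 hv2ne hv3ne
  have T : ∀ n : ℤ, c (n + (r : ℤ)) = β * α ^ n * c n :=
    ext11 hu8 hu9 hu10 hu11 hv8 hv9 hv10 hv11 h3 h4 h5 hfu base
  -- α ^ r = β ^ 2
  have key2 : α ^ ((r : ℕ) : ℤ) = β ^ 2 := by
    have t2 : c (-2 + (r : ℤ)) = β * α ^ (-2 : ℤ) * c (-2) := T (-2)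
    rw [hcm2] at t2
    have t3 : c (2 - (r : ℤ)) = - c ((r : ℤ) - 2) := by
      have := hneg ((r : ℤ) - 2)
      rwa [show -((r : ℤ) - 2) = 2 - (r : ℤ) by ring] at this
    have t4 := T (2 - (r : ℤ))
    rw [show 2 - (r : ℤ) + (r : ℤ) = 2 by ring, h2] at t4
    rw [t3, show (r : ℤ) - 2 = -2 + (r : ℤ) by ring, t2] at t4
    have expand : α ^ (2 - (r : ℤ)) * α ^ (-2 : ℤ) = (α ^ ((r : ℤ)))⁻¹ := by
      rw [← zpow_add₀ hαne, show 2 - (r : ℤ) + (-2) = -(r : ℤ) by ring, zpow_neg]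
    have hone : β ^ 2 * (α ^ ((r : ℤ)))⁻¹ = 1 := by
      rw [← expand]; linear_combination (-1 : ZMod p) * t4
    rw [mul_inv_eq_one₀ (zpow_ne_zero _ hαne)] at hone
    exact hone.symm
  have zpowr : ∀ m : ℕ, α ^ ((m : ℤ) * (r : ℤ)) = β ^ (2 * m) := by
    intro m
    induction m with
    | zero => simp
    | succ i ih =>
      rw [show (((i + 1 : ℕ)) : ℤ) * (r : ℤ) = (i : ℤ) * (r : ℤ) + (r : ℤ) by push_cast; ring,
        zpow_add₀ hαne, ih, key2]
      ring
  have Law2 : ∀ m : ℕ, ∀ n : ℤ, c (n + (m : ℤ) * (r : ℤ)) = β ^ (m ^ 2) * (α ^ n) ^ m * c n := by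
    intro m
    induction m with
    | zero => intro n; simp
    | succ i ih =>
      intro n
      rw [show n + ((i + 1 : ℕ) : ℤ) * (r : ℤ) = (n + (i : ℤ) * (r : ℤ)) + (r : ℤ) by
          push_cast; ring,
        T (n + (i : ℤ) * (r : ℤ)), ih n, zpow_add₀ hαne, zpowr i]
      ring
  refine ⟨d * r, Nat.mul_pos hdpos hrpos, ?_, ?_, rfl⟩
  · intro n
    rw [show ((d * r : ℕ) : ℤ) = (d : ℤ) * (r : ℤ) by push_cast; ring, Law2 d n, hd2]
    have hxd : (α ^ n) ^ d = 1 := by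
      rw [← zpow_natCast (α ^ n) d, ← zpow_mul, mul_comm, zpow_mul, zpow_natCast, hd1, one_zpow]
    rw [hxd]; ring
  · intro t ht hp
    have hz0 : c ((t : ℕ) : ℤ) = 0 := by have := hp 0; rwa [zero_add, h0] at this
    have hz1 : c ((t : ℤ) + 1) = 0 := by
      have := hp 1; rw [h1] at this; rwa [add_comm] at this
    have hzm1 : c ((t : ℤ) - 1) = 0 := by
      have := hp (-1); rw [hcm1] at this
      rwa [show (-1 : ℤ) + (t : ℤ) = (t : ℤ) - 1 by ring] at this
    have hdm : ((r : ℕ) : ℤ) * ((t / r : ℕ) : ℤ) + ((t % r : ℕ) : ℤ) = ((t : ℕ) : ℤ) := by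
      exact_mod_cast congrArg (Nat.cast : ℕ → ℤ) (Nat.div_add_mod t r)
    have unit_ne : ∀ (m : ℕ) (n : ℤ), β ^ (m ^ 2) * (α ^ n) ^ m ≠ 0 := fun m n =>
      mul_ne_zero (pow_ne_zero _ hβne) (pow_ne_zero _ (zpow_ne_zero _ hαne))
    have kill : ∀ n : ℤ, c (n + ((t / r : ℕ) : ℤ) * (r : ℤ)) = 0 → c n = 0 := by
      intro n hn
      rw [Law2 (t / r) n] at hn
      exact (mul_eq_zero.mp hn).resolve_left (unit_ne _ _)
    have hmod0 : t % r = 0 := by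
      by_contra hne0
      have hcu : c ((t % r : ℕ) : ℤ) = 0 := by
        apply kill
        rw [show ((t % r : ℕ) : ℤ) + ((t / r : ℕ) : ℤ) * (r : ℤ) = ((t : ℕ) : ℤ) by
          linear_combination hdm]
        exact hz0
      have hcu1 : c (((t % r : ℕ) : ℤ) + 1) = 0 := by
        apply kill
        rw [show ((t % r : ℕ) : ℤ) + 1 + ((t / r : ℕ) : ℤ) * (r : ℤ) = ((t : ℕ) : ℤ) + 1 by
          linear_combination hdm]
        exact hz1
      have hcum1 : c (((t % r : ℕ) : ℤ) - 1) = 0 := by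
        apply kill
        rw [show ((t % r : ℕ) : ℤ) - 1 + ((t / r : ℕ) : ℤ) * (r : ℤ) = ((t : ℕ) : ℤ) - 1 by
          linear_combination hdm]
        exact hzm1
      have hle := hrleast (t % r) (Nat.pos_of_ne_zero hne0) hcum1 hcu hcu1
      have hlt := Nat.mod_lt t hrpos
      omega
    have hrdvd : r ∣ t := Nat.dvd_of_mod_eq_zero hmod0
    have htq : t / r * r = t := Nat.div_mul_cancel hrdvd
    have htqz : ((t / r : ℕ) : ℤ) * (r : ℤ) = ((t : ℕ) : ℤ) := by exact_mod_cast htq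
    have hqpos : 0 < t / r := Nat.div_pos (Nat.le_of_dvd ht hrdvd) hrpos
    have hq : ∀ n : ℤ, β ^ ((t / r) ^ 2) * (α ^ n) ^ (t / r) * c n = c n := by
      intro n
      rw [← Law2 (t / r) n, htqz]
      exact hp n
    have E2 : β ^ ((t / r) ^ 2) * (α ^ (2 : ℤ)) ^ (t / r) = 1 := by
      have := hq 2; rwa [h2, mul_one] at this
    have E3 : β ^ ((t / r) ^ 2) * (α ^ (3 : ℤ)) ^ (t / r) = 1 := by
      have h' := hq 3
      have h'' : β ^ ((t / r) ^ 2) * (α ^ (3 : ℤ)) ^ (t / r) * c 3 = 1 * c 3 := by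
        rw [one_mul]; exact h'
      exact mul_right_cancel₀ h3 h''
    rw [hz2] at E2
    rw [hz3] at E3
    have e2' : β ^ ((t / r) ^ 2) * (α ^ (t / r)) ^ 2 = 1 := by rw [← E2]; ring
    have e3' : β ^ ((t / r) ^ 2) * (α ^ (t / r)) ^ 3 = 1 := by rw [← E3]; ring
    have hx : α ^ (t / r) = 1 := by
      calc α ^ (t / r) = α ^ (t / r) * (β ^ ((t / r) ^ 2) * (α ^ (t / r)) ^ 2) := by
            rw [e2', mul_one]
        _ = β ^ ((t / r) ^ 2) * (α ^ (t / r)) ^ 3 := by ring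
        _ = 1 := e3'
    have hy : β ^ ((t / r) ^ 2) = 1 := by
      calc β ^ ((t / r) ^ 2) = β ^ ((t / r) ^ 2) * (α ^ (t / r)) ^ 2 := by rw [hx]; ring
        _ = 1 := e2'
    have hdle := hdleast (t / r) hqpos hx hy
    calc d * r ≤ t / r * r := Nat.mul_le_mul_right r hdle
      _ = t := htq
end

section
/- For all integers k and n, c(k·r + n) = α^(k·n)·β^(k^2)·c(n) in ZMod p. -/
set_option maxHeartbeats 1000000 in
theorem stmt3 (p : ℕ) [Fact p.Prime] (hodd : Odd p)
    (c : ℤ → ZMod p)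
    (hneg : ∀ n : ℤ, c (-n) = - c n)
    (h0 : c 0 = 0) (h1 : c 1 = 0) (h2 : c 2 = 1)
    (hS8 : ∀ n : ℤ, c 4 * c (n + 4) * c (n - 4) =
      c 3 * c 5 * c (n + 3) * c (n - 3)
      + (c 4 ^ 3 - c 3 ^ 3 * c 5) * c (n + 2) * c (n - 2)
      + c 3 ^ 2 * c 6 * c (n + 1) * c (n - 1)
      - c 4 * c 6 * c n ^ 2)
    (hS9 : ∀ n : ℤ, c 3 * c 5 * c (n + 5) * c (n - 4) =
      c 3 ^ 2 * c 6 * c (n + 4) * c (n - 3)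
      + c 4 * (c 5 ^ 2 - c 3 ^ 2 * c 6) * c (n + 3) * c (n - 2)
      + c 3 * c 4 * c 7 * c (n + 2) * c (n - 1)
      - c 5 * c 7 * c (n + 1) * c n)
    (hS10 : ∀ n : ℤ, c 4 * c (n + 5) * c (n - 5) =
      c 4 * c 6 * c (n + 3) * c (n - 3)
      + c 4 * (c 5 ^ 2 - c 3 ^ 2 * c 6) * c (n + 2) * c (n - 2)
      + (c 3 ^ 3 * c 7 - c 8) * c (n + 1) * c (n - 1)
      - c 3 * c 4 * c 7 * c n ^ 2)
    (hS11 : ∀ n : ℤ, c 3 * c 5 * c (n + 6) * c (n - 5) =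
      c 3 * c 4 * c 7 * c (n + 4) * c (n - 3)
      + (c 5 ^ 2 * c 6 - c 3 * c 4 ^ 2 * c 7) * c (n + 3) * c (n - 2)
      + c 3 * (c 3 * c 4 * c 8 - c 9) * c (n + 2) * c (n - 1)
      - c 3 * c 5 * c 8 * c (n + 1) * c n)
    (h3 : c 3 ≠ 0) (h4 : c 4 ≠ 0) (h5 : c 5 ≠ 0) (h6 : c 6 ≠ 0) (h7 : c 7 ≠ 0)
    (h435 : c 4 ^ 3 - c 3 ^ 3 * c 5 ≠ 0)
    (hfour : ∀ m : ℤ, c m ≠ 0 ∨ c (m + 1) ≠ 0 ∨ c (m + 2) ≠ 0 ∨ c (m + 3) ≠ 0)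
    (r : ℕ) (hrpos : 0 < r)
    (hr1 : c ((r : ℤ) - 1) = 0) (hr0 : c (r : ℤ) = 0) (hr2 : c ((r : ℤ) + 1) = 0)
    (hr3 : c ((r : ℤ) + 3) ≠ 0)
    (α β : ZMod p)
    (hα : α = c ((r : ℤ) + 3) * (c 3 * c ((r : ℤ) + 2))⁻¹)
    (hβ : β = c 3 ^ 2 * c ((r : ℤ) + 2) ^ 3 * (c ((r : ℤ) + 3) ^ 2)⁻¹)
    :
    ∀ k n : ℤ, c (k * (r : ℤ) + n) = α ^ (k * n) * β ^ (k ^ 2) * c n := by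
  -- basic facts
  have hw2 : c ((r : ℤ) + 2) ≠ 0 := by
    rcases hfour ((r : ℤ) - 1) with h | h | h | h
    · exact absurd hr1 h
    · rw [show (r:ℤ) - 1 + 1 = (r:ℤ) from by ring] at h; exact absurd hr0 h
    · rw [show (r:ℤ) - 1 + 2 = (r:ℤ) + 1 from by ring] at h; exact absurd hr2 h
    · rw [show (r:ℤ) - 1 + 3 = (r:ℤ) + 2 from by ring] at h; exact h
  have hα0 : α ≠ 0 := by
    rw [hα]; exact mul_ne_zero hr3 (inv_ne_zero (mul_ne_zero h3 hw2))
  have hβ0 : β ≠ 0 := by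
    rw [hβ]
    exact mul_ne_zero (mul_ne_zero (pow_ne_zero _ h3) (pow_ne_zero _ hw2))
      (inv_ne_zero (pow_ne_zero _ hr3))
  have hA : c 3 * c ((r:ℤ) + 2) * α = c ((r:ℤ) + 3) := by
    rw [hα]; field_simp
  have hB : c ((r:ℤ) + 3) ^ 2 * β = c 3 ^ 2 * c ((r:ℤ) + 2) ^ 3 := by
    rw [hβ]; field_simp
  have P2 : c ((r:ℤ) + 2) = α ^ 2 * β := by
    refine mul_left_cancel₀ (a := c 3 ^ 2 * c ((r:ℤ) + 2) ^ 2)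
      (mul_ne_zero (pow_ne_zero _ h3) (pow_ne_zero _ hw2)) ?_
    linear_combination (-1 : ZMod p) * hB - β * (c 3 * c ((r:ℤ)+2) * α + c ((r:ℤ)+3)) * hA
  have P3 : c ((r:ℤ) + 3) = c 3 * (α ^ 3 * β) := by
    rw [← hA, P2]; ring

  -- normalized relations (bottom-index form)
  have S8N : ∀ m : ℤ, c 4 * c (m+8) * c m =
      c 3 * c 5 * c (m+7) * c (m+1) + (c 4 ^ 3 - c 3 ^ 3 * c 5) * c (m+6) * c (m+2)
      + c 3 ^ 2 * c 6 * c (m+5) * c (m+3) - c 4 * c 6 * c (m+4) ^ 2 := by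
    intro m
    have E := hS8 (m+4)
    rw [show m+4+4 = m+8 from by ring, show m+4-4 = m from by ring,
        show m+4+3 = m+7 from by ring, show m+4-3 = m+1 from by ring,
        show m+4+2 = m+6 from by ring, show m+4-2 = m+2 from by ring,
        show m+4+1 = m+5 from by ring, show m+4-1 = m+3 from by ring] at E
    exact E
  have S9N : ∀ m : ℤ, c 3 * c 5 * c (m+9) * c m =
      c 3 ^ 2 * c 6 * c (m+8) * c (m+1) + c 4 * (c 5 ^ 2 - c 3 ^ 2 * c 6) * c (m+7) * c (m+2)
      + c 3 * c 4 * c 7 * c (m+6) * c (m+3) - c 5 * c 7 * c (m+5) * c (m+4) := by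
    intro m
    have E := hS9 (m+4)
    rw [show m+4+5 = m+9 from by ring, show m+4-4 = m from by ring,
        show m+4+4 = m+8 from by ring, show m+4-3 = m+1 from by ring,
        show m+4+3 = m+7 from by ring, show m+4-2 = m+2 from by ring,
        show m+4+2 = m+6 from by ring, show m+4-1 = m+3 from by ring,
        show m+4+1 = m+5 from by ring] at E
    exact E
  have S10N : ∀ m : ℤ, c 4 * c (m+10) * c m =
      c 4 * c 6 * c (m+8) * c (m+2) + c 4 * (c 5 ^ 2 - c 3 ^ 2 * c 6) * c (m+7) * c (m+3)
      + (c 3 ^ 3 * c 7 - c 8) * c (m+6) * c (m+4) - c 3 * c 4 * c 7 * c (m+5) ^ 2 := by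
    intro m
    have E := hS10 (m+5)
    rw [show m+5+5 = m+10 from by ring, show m+5-5 = m from by ring,
        show m+5+3 = m+8 from by ring, show m+5-3 = m+2 from by ring,
        show m+5+2 = m+7 from by ring, show m+5-2 = m+3 from by ring,
        show m+5+1 = m+6 from by ring, show m+5-1 = m+4 from by ring] at E
    exact E
  have S11N : ∀ m : ℤ, c 3 * c 5 * c (m+11) * c m =
      c 3 * c 4 * c 7 * c (m+9) * c (m+2) + (c 5 ^ 2 * c 6 - c 3 * c 4 ^ 2 * c 7) * c (m+8) * c (m+3)
      + c 3 * (c 3 * c 4 * c 8 - c 9) * c (m+7) * c (m+4) - c 3 * c 5 * c 8 * c (m+6) * c (m+5) := by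
    intro m
    have E := hS11 (m+5)
    rw [show m+5+6 = m+11 from by ring, show m+5-5 = m from by ring,
        show m+5+4 = m+9 from by ring, show m+5-3 = m+2 from by ring,
        show m+5+3 = m+8 from by ring, show m+5-2 = m+3 from by ring,
        show m+5+2 = m+7 from by ring, show m+5-1 = m+4 from by ring,
        show m+5+1 = m+6 from by ring] at E
    exact E
  -- base window values
  have P4 : c ((r:ℤ) + 4) = c 4 * (α ^ 4 * β) := by
    have E := hS8 ((r:ℤ)+3)
    rw [show (r:ℤ)+3+4 = (r:ℤ)+7 from by ring, show (r:ℤ)+3-4 = (r:ℤ)-1 from by ring,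
        show (r:ℤ)+3+3 = (r:ℤ)+6 from by ring, show (r:ℤ)+3-3 = (r:ℤ) from by ring,
        show (r:ℤ)+3+2 = (r:ℤ)+5 from by ring, show (r:ℤ)+3-2 = (r:ℤ)+1 from by ring,
        show (r:ℤ)+3+1 = (r:ℤ)+4 from by ring, show (r:ℤ)+3-1 = (r:ℤ)+2 from by ring] at E
    rw [hr1, hr0, hr2, P2, P3] at E
    refine mul_left_cancel₀ (a := c 3 ^ 2 * c 6 * (α ^ 2 * β))
      (mul_ne_zero (mul_ne_zero (pow_ne_zero _ h3) h6)
        (mul_ne_zero (pow_ne_zero _ hα0) hβ0)) ?_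
    linear_combination (-1 : ZMod p) * E
  have P5 : c ((r:ℤ) + 5) = c 5 * (α ^ 5 * β) := by
    have E := hS9 ((r:ℤ)+3)
    rw [show (r:ℤ)+3+5 = (r:ℤ)+8 from by ring, show (r:ℤ)+3-4 = (r:ℤ)-1 from by ring,
        show (r:ℤ)+3+4 = (r:ℤ)+7 from by ring, show (r:ℤ)+3-3 = (r:ℤ) from by ring,
        show (r:ℤ)+3+3 = (r:ℤ)+6 from by ring, show (r:ℤ)+3-2 = (r:ℤ)+1 from by ring,
        show (r:ℤ)+3+2 = (r:ℤ)+5 from by ring, show (r:ℤ)+3-1 = (r:ℤ)+2 from by ring,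
        show (r:ℤ)+3+1 = (r:ℤ)+4 from by ring] at E
    rw [hr1, hr0, hr2, P2, P3, P4] at E
    refine mul_left_cancel₀ (a := c 3 * c 4 * c 7 * (α ^ 2 * β))
      (mul_ne_zero (mul_ne_zero (mul_ne_zero h3 h4) h7)
        (mul_ne_zero (pow_ne_zero _ hα0) hβ0)) ?_
    linear_combination (-1 : ZMod p) * E
  have P6 : c ((r:ℤ) + 6) = c 6 * (α ^ 6 * β) := by
    have E := hS8 ((r:ℤ)+4)
    rw [show (r:ℤ)+4+4 = (r:ℤ)+8 from by ring, show (r:ℤ)+4-4 = (r:ℤ) from by ring,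
        show (r:ℤ)+4+3 = (r:ℤ)+7 from by ring, show (r:ℤ)+4-3 = (r:ℤ)+1 from by ring,
        show (r:ℤ)+4+2 = (r:ℤ)+6 from by ring, show (r:ℤ)+4-2 = (r:ℤ)+2 from by ring,
        show (r:ℤ)+4+1 = (r:ℤ)+5 from by ring, show (r:ℤ)+4-1 = (r:ℤ)+3 from by ring] at E
    rw [hr0, hr2, P2, P3, P4, P5] at E
    refine mul_left_cancel₀ (a := (c 4 ^ 3 - c 3 ^ 3 * c 5) * (α ^ 2 * β))
      (mul_ne_zero h435 (mul_ne_zero (pow_ne_zero _ hα0) hβ0)) ?_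
    linear_combination (-1 : ZMod p) * E
  have N2 : α ^ 2 * c ((r:ℤ) - 2) = -β := by
    have E := hS8 ((r:ℤ)+2)
    rw [show (r:ℤ)+2+4 = (r:ℤ)+6 from by ring, show (r:ℤ)+2-4 = (r:ℤ)-2 from by ring,
        show (r:ℤ)+2+3 = (r:ℤ)+5 from by ring, show (r:ℤ)+2-3 = (r:ℤ)-1 from by ring,
        show (r:ℤ)+2+2 = (r:ℤ)+4 from by ring, show (r:ℤ)+2-2 = (r:ℤ) from by ring,
        show (r:ℤ)+2+1 = (r:ℤ)+3 from by ring, show (r:ℤ)+2-1 = (r:ℤ)+1 from by ring] at E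
    rw [hr1, hr0, hr2, P2, P6] at E
    refine mul_left_cancel₀ (a := c 4 * c 6 * (α ^ 4 * β))
      (mul_ne_zero (mul_ne_zero h4 h6) (mul_ne_zero (pow_ne_zero _ hα0) hβ0)) ?_
    linear_combination E
  have N3 : α ^ 3 * c ((r:ℤ) - 3) = -(c 3 * β) := by
    have E := hS9 ((r:ℤ)+1)
    rw [show (r:ℤ)+1+5 = (r:ℤ)+6 from by ring, show (r:ℤ)+1-4 = (r:ℤ)-3 from by ring,
        show (r:ℤ)+1+4 = (r:ℤ)+5 from by ring, show (r:ℤ)+1-3 = (r:ℤ)-2 from by ring,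
        show (r:ℤ)+1+3 = (r:ℤ)+4 from by ring, show (r:ℤ)+1-2 = (r:ℤ)-1 from by ring,
        show (r:ℤ)+1+2 = (r:ℤ)+3 from by ring, show (r:ℤ)+1-1 = (r:ℤ) from by ring,
        show (r:ℤ)+1+1 = (r:ℤ)+2 from by ring] at E
    rw [hr1, hr0, hr2, P5, P6] at E
    refine mul_left_cancel₀ (a := c 3 * c 5 * c 6 * (α ^ 3 * β))
      (mul_ne_zero (mul_ne_zero (mul_ne_zero h3 h5) h6)
        (mul_ne_zero (pow_ne_zero _ hα0) hβ0)) ?_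
    linear_combination E + (c 3 ^ 2 * c 5 * c 6 * (α ^ 3 * β)) * N2
  have hu : c ((r:ℤ) - 2) ≠ 0 := by
    intro h
    apply hβ0
    have h' : -β = 0 := by rw [← N2, h, mul_zero]
    exact neg_eq_zero.mp h'
  have N4 : α ^ 4 * c ((r:ℤ) - 4) = -(c 4 * β) := by
    have E := hS8 ((r:ℤ)-3)
    rw [show (r:ℤ)-3+4 = (r:ℤ)+1 from by ring, show (r:ℤ)-3-4 = (r:ℤ)-7 from by ring,
        show (r:ℤ)-3+3 = (r:ℤ) from by ring, show (r:ℤ)-3-3 = (r:ℤ)-6 from by ring,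
        show (r:ℤ)-3+2 = (r:ℤ)-1 from by ring, show (r:ℤ)-3-2 = (r:ℤ)-5 from by ring,
        show (r:ℤ)-3+1 = (r:ℤ)-2 from by ring, show (r:ℤ)-3-1 = (r:ℤ)-4 from by ring] at E
    rw [hr1, hr0, hr2] at E
    refine mul_left_cancel₀ (a := c 3 ^ 2 * c 6 * (α ^ 2 * c ((r:ℤ)-2)))
      (mul_ne_zero (mul_ne_zero (pow_ne_zero _ h3) h6)
        (mul_ne_zero (pow_ne_zero _ hα0) hu)) ?_
    linear_combination (-(α^6)) * E + (c 4 * c 6 * (α^3 * c ((r:ℤ)-3) - c 3 * β)) * N3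
      + (c 3 ^ 2 * c 4 * c 6 * β) * N2
  have N5 : α ^ 5 * c ((r:ℤ) - 5) = -(c 5 * β) := by
    have E := hS9 ((r:ℤ)-4)
    rw [show (r:ℤ)-4+5 = (r:ℤ)+1 from by ring, show (r:ℤ)-4-4 = (r:ℤ)-8 from by ring,
        show (r:ℤ)-4+4 = (r:ℤ) from by ring, show (r:ℤ)-4-3 = (r:ℤ)-7 from by ring,
        show (r:ℤ)-4+3 = (r:ℤ)-1 from by ring, show (r:ℤ)-4-2 = (r:ℤ)-6 from by ring,
        show (r:ℤ)-4+2 = (r:ℤ)-2 from by ring, show (r:ℤ)-4-1 = (r:ℤ)-5 from by ring,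
        show (r:ℤ)-4+1 = (r:ℤ)-3 from by ring] at E
    rw [hr1, hr0, hr2] at E
    refine mul_left_cancel₀ (a := c 3 * c 4 * c 7 * (α ^ 2 * c ((r:ℤ)-2)))
      (mul_ne_zero (mul_ne_zero (mul_ne_zero h3 h4) h7)
        (mul_ne_zero (pow_ne_zero _ hα0) hu)) ?_
    linear_combination (-(α^7)) * E + (c 5 * c 7 * (α^4 * c ((r:ℤ)-4))) * N3
      - (c 3 * c 5 * c 7 * β) * N4 + (c 3 * c 4 * c 5 * c 7 * β) * N2
  have N6 : α ^ 6 * c ((r:ℤ) - 6) = -(c 6 * β) := by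
    have E := hS8 ((r:ℤ)-4)
    rw [show (r:ℤ)-4+4 = (r:ℤ) from by ring, show (r:ℤ)-4-4 = (r:ℤ)-8 from by ring,
        show (r:ℤ)-4+3 = (r:ℤ)-1 from by ring, show (r:ℤ)-4-3 = (r:ℤ)-7 from by ring,
        show (r:ℤ)-4+2 = (r:ℤ)-2 from by ring, show (r:ℤ)-4-2 = (r:ℤ)-6 from by ring,
        show (r:ℤ)-4+1 = (r:ℤ)-3 from by ring, show (r:ℤ)-4-1 = (r:ℤ)-5 from by ring] at E
    rw [hr1, hr0] at E
    refine mul_left_cancel₀ (a := (c 4 ^ 3 - c 3 ^ 3 * c 5) * (α ^ 2 * c ((r:ℤ)-2)))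
      (mul_ne_zero h435 (mul_ne_zero (pow_ne_zero _ hα0) hu)) ?_
    linear_combination (-(α^8)) * E + (c 4 * c 6 * (α^4 * c ((r:ℤ)-4) - c 4 * β)) * N4
      - (c 3 ^ 2 * c 6 * (α^5 * c ((r:ℤ)-5))) * N3 + (c 3 ^ 3 * c 6 * β) * N5
      + ((c 4 ^ 3 - c 3 ^ 3 * c 5) * c 6 * β) * N2

  -- negation values
  have cm1 : c (-1) = 0 := by rw [hneg 1, h1, neg_zero]
  have cm2 : c (-2) = -1 := by rw [hneg 2, h2]
  -- inverse cancel helpers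
  have hI : ∀ k : ℕ, α ^ k * (α ^ k)⁻¹ = 1 := fun k => mul_inv_cancel₀ (pow_ne_zero k hα0)
  -- the base window
  have base : ∀ n : ℤ, -6 ≤ n → n ≤ 6 → c ((r:ℤ) + n) = α ^ n * β * c n := by
    intro n hn1 hn2
    interval_cases n
    · rw [show (r:ℤ) + -6 = (r:ℤ) - 6 from by ring, hneg 6, zpow_neg, zpow_ofNat]
      refine mul_left_cancel₀ (pow_ne_zero 6 hα0) ?_
      linear_combination N6 + c 6 * β * hI 6
    · rw [show (r:ℤ) + -5 = (r:ℤ) - 5 from by ring, hneg 5, zpow_neg, zpow_ofNat]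
      refine mul_left_cancel₀ (pow_ne_zero 5 hα0) ?_
      linear_combination N5 + c 5 * β * hI 5
    · rw [show (r:ℤ) + -4 = (r:ℤ) - 4 from by ring, hneg 4, zpow_neg, zpow_ofNat]
      refine mul_left_cancel₀ (pow_ne_zero 4 hα0) ?_
      linear_combination N4 + c 4 * β * hI 4
    · rw [show (r:ℤ) + -3 = (r:ℤ) - 3 from by ring, hneg 3, zpow_neg, zpow_ofNat]
      refine mul_left_cancel₀ (pow_ne_zero 3 hα0) ?_
      linear_combination N3 + c 3 * β * hI 3
    · rw [show (r:ℤ) + -2 = (r:ℤ) - 2 from by ring, cm2, zpow_neg, zpow_ofNat]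
      refine mul_left_cancel₀ (pow_ne_zero 2 hα0) ?_
      linear_combination N2 + β * hI 2
    · rw [show (r:ℤ) + -1 = (r:ℤ) - 1 from by ring, hr1, cm1]
      ring
    · rw [add_zero, hr0, h0]; ring
    · rw [hr2, h1]; ring
    · rw [zpow_ofNat, P2, h2]; ring
    · rw [zpow_ofNat, P3]; ring
    · rw [zpow_ofNat, P4]; ring
    · rw [zpow_ofNat, P5]; ring
    · rw [zpow_ofNat, P6]; ring
  -- zpow splitting helper
  have hsp : ∀ (m : ℤ) (j : ℕ), α ^ (m + (j:ℤ)) = α ^ m * α ^ j := fun m j => by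
    rw [zpow_add₀ hα0, zpow_natCast]

  -- step lemma S8 forward (test one first)
  have stepF8 : ∀ m : ℤ, (∀ j : ℤ, m ≤ j → j ≤ m + 7 → c ((r:ℤ) + j) = α ^ j * β * c j) →
      c m ≠ 0 → c ((r:ℤ) + (m + 8)) = α ^ (m + 8) * β * c (m + 8) := by
    intro m ihm hm
    have E := S8N ((r:ℤ) + m)
    simp only [add_assoc] at E
    rw [ihm m le_rfl (by omega), ihm (m+1) (by omega) (by omega), ihm (m+2) (by omega) (by omega),
        ihm (m+3) (by omega) (by omega), ihm (m+4) (by omega) (by omega),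
        ihm (m+5) (by omega) (by omega), ihm (m+6) (by omega) (by omega),
        ihm (m+7) (by omega) (by omega)] at E
    have e1 := hsp m 1; have e2 := hsp m 2; have e3 := hsp m 3; have e4 := hsp m 4
    have e5 := hsp m 5; have e6 := hsp m 6; have e7 := hsp m 7; have e8 := hsp m 8
    push_cast at e1 e2 e3 e4 e5 e6 e7 e8
    rw [e1, e2, e3, e4, e5, e6, e7] at E
    have Ep := S8N m
    refine mul_left_cancel₀ (a := c 4 * c m * (α ^ m * β))
      (mul_ne_zero (mul_ne_zero h4 hm) (mul_ne_zero (zpow_ne_zero m hα0) hβ0)) ?_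
    rw [e8]
    linear_combination E - (α ^ m) ^ 2 * α ^ 8 * β ^ 2 * Ep

  have stepF9 : ∀ m : ℤ, (∀ j : ℤ, m ≤ j → j ≤ m + 8 → c ((r:ℤ) + j) = α ^ j * β * c j) →
      c m ≠ 0 → c ((r:ℤ) + (m + 9)) = α ^ (m + 9) * β * c (m + 9) := by
    intro m ihm hm
    have E := S9N ((r:ℤ) + m)
    simp only [add_assoc] at E
    rw [ihm m le_rfl (by omega), ihm (m+1) (by omega) (by omega), ihm (m+2) (by omega) (by omega),
        ihm (m+3) (by omega) (by omega), ihm (m+4) (by omega) (by omega),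
        ihm (m+5) (by omega) (by omega), ihm (m+6) (by omega) (by omega),
        ihm (m+7) (by omega) (by omega), ihm (m+8) (by omega) (by omega)] at E
    have e1 := hsp m 1; have e2 := hsp m 2; have e3 := hsp m 3; have e4 := hsp m 4
    have e5 := hsp m 5; have e6 := hsp m 6; have e7 := hsp m 7; have e8 := hsp m 8
    have e9 := hsp m 9
    push_cast at e1 e2 e3 e4 e5 e6 e7 e8 e9
    rw [e1, e2, e3, e4, e5, e6, e7, e8] at E
    have Ep := S9N m
    refine mul_left_cancel₀ (a := c 3 * c 5 * c m * (α ^ m * β))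
      (mul_ne_zero (mul_ne_zero (mul_ne_zero h3 h5) hm)
        (mul_ne_zero (zpow_ne_zero m hα0) hβ0)) ?_
    rw [e9]
    linear_combination E - (α ^ m) ^ 2 * α ^ 9 * β ^ 2 * Ep
  have stepF10 : ∀ m : ℤ, (∀ j : ℤ, m ≤ j → j ≤ m + 8 → c ((r:ℤ) + j) = α ^ j * β * c j) →
      c m ≠ 0 → c ((r:ℤ) + (m + 10)) = α ^ (m + 10) * β * c (m + 10) := by
    intro m ihm hm
    have E := S10N ((r:ℤ) + m)
    simp only [add_assoc] at E
    rw [ihm m le_rfl (by omega), ihm (m+2) (by omega) (by omega),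
        ihm (m+3) (by omega) (by omega), ihm (m+4) (by omega) (by omega),
        ihm (m+5) (by omega) (by omega), ihm (m+6) (by omega) (by omega),
        ihm (m+7) (by omega) (by omega), ihm (m+8) (by omega) (by omega)] at E
    have e2 := hsp m 2; have e3 := hsp m 3; have e4 := hsp m 4
    have e5 := hsp m 5; have e6 := hsp m 6; have e7 := hsp m 7; have e8 := hsp m 8
    have e10 := hsp m 10
    push_cast at e2 e3 e4 e5 e6 e7 e8 e10
    rw [e2, e3, e4, e5, e6, e7, e8] at E
    have Ep := S10N m
    refine mul_left_cancel₀ (a := c 4 * c m * (α ^ m * β))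
      (mul_ne_zero (mul_ne_zero h4 hm) (mul_ne_zero (zpow_ne_zero m hα0) hβ0)) ?_
    rw [e10]
    linear_combination E - (α ^ m) ^ 2 * α ^ 10 * β ^ 2 * Ep
  have stepF11 : ∀ m : ℤ, (∀ j : ℤ, m ≤ j → j ≤ m + 9 → c ((r:ℤ) + j) = α ^ j * β * c j) →
      c m ≠ 0 → c ((r:ℤ) + (m + 11)) = α ^ (m + 11) * β * c (m + 11) := by
    intro m ihm hm
    have E := S11N ((r:ℤ) + m)
    simp only [add_assoc] at E
    rw [ihm m le_rfl (by omega), ihm (m+2) (by omega) (by omega),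
        ihm (m+3) (by omega) (by omega), ihm (m+4) (by omega) (by omega),
        ihm (m+5) (by omega) (by omega), ihm (m+6) (by omega) (by omega),
        ihm (m+7) (by omega) (by omega), ihm (m+8) (by omega) (by omega),
        ihm (m+9) (by omega) (by omega)] at E
    have e2 := hsp m 2; have e3 := hsp m 3; have e4 := hsp m 4
    have e5 := hsp m 5; have e6 := hsp m 6; have e7 := hsp m 7; have e8 := hsp m 8
    have e9 := hsp m 9; have e11 := hsp m 11
    push_cast at e2 e3 e4 e5 e6 e7 e8 e9 e11
    rw [e2, e3, e4, e5, e6, e7, e8, e9] at E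
    have Ep := S11N m
    refine mul_left_cancel₀ (a := c 3 * c 5 * c m * (α ^ m * β))
      (mul_ne_zero (mul_ne_zero (mul_ne_zero h3 h5) hm)
        (mul_ne_zero (zpow_ne_zero m hα0) hβ0)) ?_
    rw [e11]
    linear_combination E - (α ^ m) ^ 2 * α ^ 11 * β ^ 2 * Ep
  have stepB8 : ∀ m : ℤ, (∀ j : ℤ, m + 1 ≤ j → j ≤ m + 8 → c ((r:ℤ) + j) = α ^ j * β * c j) →
      c (m + 8) ≠ 0 → c ((r:ℤ) + m) = α ^ m * β * c m := by
    intro m ihm hm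
    have E := S8N ((r:ℤ) + m)
    simp only [add_assoc] at E
    rw [ihm (m+1) (by omega) (by omega), ihm (m+2) (by omega) (by omega),
        ihm (m+3) (by omega) (by omega), ihm (m+4) (by omega) (by omega),
        ihm (m+5) (by omega) (by omega), ihm (m+6) (by omega) (by omega),
        ihm (m+7) (by omega) (by omega), ihm (m+8) (by omega) (by omega)] at E
    have e1 := hsp m 1; have e2 := hsp m 2; have e3 := hsp m 3; have e4 := hsp m 4
    have e5 := hsp m 5; have e6 := hsp m 6; have e7 := hsp m 7; have e8 := hsp m 8
    push_cast at e1 e2 e3 e4 e5 e6 e7 e8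
    rw [e1, e2, e3, e4, e5, e6, e7, e8] at E
    have Ep := S8N m
    refine mul_left_cancel₀ (a := c 4 * c (m + 8) * (α ^ m * α ^ 8 * β))
      (mul_ne_zero (mul_ne_zero h4 hm)
        (mul_ne_zero (mul_ne_zero (zpow_ne_zero m hα0) (pow_ne_zero 8 hα0)) hβ0)) ?_
    linear_combination E - (α ^ m) ^ 2 * α ^ 8 * β ^ 2 * Ep
  have stepB9 : ∀ m : ℤ, (∀ j : ℤ, m + 1 ≤ j → j ≤ m + 9 → c ((r:ℤ) + j) = α ^ j * β * c j) →
      c (m + 9) ≠ 0 → c ((r:ℤ) + m) = α ^ m * β * c m := by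
    intro m ihm hm
    have E := S9N ((r:ℤ) + m)
    simp only [add_assoc] at E
    rw [ihm (m+1) (by omega) (by omega), ihm (m+2) (by omega) (by omega),
        ihm (m+3) (by omega) (by omega), ihm (m+4) (by omega) (by omega),
        ihm (m+5) (by omega) (by omega), ihm (m+6) (by omega) (by omega),
        ihm (m+7) (by omega) (by omega), ihm (m+8) (by omega) (by omega),
        ihm (m+9) (by omega) (by omega)] at E
    have e1 := hsp m 1; have e2 := hsp m 2; have e3 := hsp m 3; have e4 := hsp m 4
    have e5 := hsp m 5; have e6 := hsp m 6; have e7 := hsp m 7; have e8 := hsp m 8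
    have e9 := hsp m 9
    push_cast at e1 e2 e3 e4 e5 e6 e7 e8 e9
    rw [e1, e2, e3, e4, e5, e6, e7, e8, e9] at E
    have Ep := S9N m
    refine mul_left_cancel₀ (a := c 3 * c 5 * c (m + 9) * (α ^ m * α ^ 9 * β))
      (mul_ne_zero (mul_ne_zero (mul_ne_zero h3 h5) hm)
        (mul_ne_zero (mul_ne_zero (zpow_ne_zero m hα0) (pow_ne_zero 9 hα0)) hβ0)) ?_
    linear_combination E - (α ^ m) ^ 2 * α ^ 9 * β ^ 2 * Ep
  have stepB10 : ∀ m : ℤ, (∀ j : ℤ, m + 1 ≤ j → j ≤ m + 10 → c ((r:ℤ) + j) = α ^ j * β * c j) →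
      c (m + 10) ≠ 0 → c ((r:ℤ) + m) = α ^ m * β * c m := by
    intro m ihm hm
    have E := S10N ((r:ℤ) + m)
    simp only [add_assoc] at E
    rw [ihm (m+2) (by omega) (by omega),
        ihm (m+3) (by omega) (by omega), ihm (m+4) (by omega) (by omega),
        ihm (m+5) (by omega) (by omega), ihm (m+6) (by omega) (by omega),
        ihm (m+7) (by omega) (by omega), ihm (m+8) (by omega) (by omega),
        ihm (m+10) (by omega) (by omega)] at E
    have e2 := hsp m 2; have e3 := hsp m 3; have e4 := hsp m 4
    have e5 := hsp m 5; have e6 := hsp m 6; have e7 := hsp m 7; have e8 := hsp m 8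
    have e10 := hsp m 10
    push_cast at e2 e3 e4 e5 e6 e7 e8 e10
    rw [e2, e3, e4, e5, e6, e7, e8, e10] at E
    have Ep := S10N m
    refine mul_left_cancel₀ (a := c 4 * c (m + 10) * (α ^ m * α ^ 10 * β))
      (mul_ne_zero (mul_ne_zero h4 hm)
        (mul_ne_zero (mul_ne_zero (zpow_ne_zero m hα0) (pow_ne_zero 10 hα0)) hβ0)) ?_
    linear_combination E - (α ^ m) ^ 2 * α ^ 10 * β ^ 2 * Ep
  have stepB11 : ∀ m : ℤ, (∀ j : ℤ, m + 1 ≤ j → j ≤ m + 11 → c ((r:ℤ) + j) = α ^ j * β * c j) →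
      c (m + 11) ≠ 0 → c ((r:ℤ) + m) = α ^ m * β * c m := by
    intro m ihm hm
    have E := S11N ((r:ℤ) + m)
    simp only [add_assoc] at E
    rw [ihm (m+2) (by omega) (by omega),
        ihm (m+3) (by omega) (by omega), ihm (m+4) (by omega) (by omega),
        ihm (m+5) (by omega) (by omega), ihm (m+6) (by omega) (by omega),
        ihm (m+7) (by omega) (by omega), ihm (m+8) (by omega) (by omega),
        ihm (m+9) (by omega) (by omega), ihm (m+11) (by omega) (by omega)] at E
    have e2 := hsp m 2; have e3 := hsp m 3; have e4 := hsp m 4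
    have e5 := hsp m 5; have e6 := hsp m 6; have e7 := hsp m 7; have e8 := hsp m 8
    have e9 := hsp m 9; have e11 := hsp m 11
    push_cast at e2 e3 e4 e5 e6 e7 e8 e9 e11
    rw [e2, e3, e4, e5, e6, e7, e8, e9, e11] at E
    have Ep := S11N m
    refine mul_left_cancel₀ (a := c 3 * c 5 * c (m + 11) * (α ^ m * α ^ 11 * β))
      (mul_ne_zero (mul_ne_zero (mul_ne_zero h3 h5) hm)
        (mul_ne_zero (mul_ne_zero (zpow_ne_zero m hα0) (pow_ne_zero 11 hα0)) hβ0)) ?_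
    linear_combination E - (α ^ m) ^ 2 * α ^ 11 * β ^ 2 * Ep

  -- main lemma: c(r+n) = α^n β c(n) for all n
  have hQ : ∀ n : ℤ, c ((r:ℤ) + n) = α ^ n * β * c n := by
    have main : ∀ (N : ℕ) (n : ℤ), n.natAbs ≤ N → c ((r:ℤ) + n) = α ^ n * β * c n := by
      intro N
      induction N with
      | zero =>
        intro n hn
        have hn0 : n = 0 := by omega
        subst hn0
        exact base 0 (by norm_num) (by norm_num)
      | succ N ih =>
        intro n hn
        rcases le_or_gt n.natAbs N with hle | hgt
        · exact ih n hle
        rcases le_or_gt n.natAbs 6 with h6' | h6'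
        · exact base n (by omega) (by omega)
        have hN6 : 6 ≤ N := by omega
        rcases le_or_gt 0 n with hpos | hneg'
        · -- forward: n ≥ 7
          have hn7 : 7 ≤ n := by omega
          have ih' : ∀ m : ℤ, -6 ≤ m → m ≤ n - 1 → c ((r:ℤ) + m) = α ^ m * β * c m :=
            fun m hm1 hm2 => ih m (by omega)
          have hf := hfour (n - 11)
          rw [show n - 11 + 1 = n - 10 from by ring, show n - 11 + 2 = n - 9 from by ring,
              show n - 11 + 3 = n - 8 from by ring] at hf
          rcases hf with hp | hp | hp | hp
          · have h := stepF11 (n-11) (fun j hj1 hj2 => ih' j (by omega) (by omega)) hp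
            rwa [show n - 11 + 11 = n from by ring] at h
          · have h := stepF10 (n-10) (fun j hj1 hj2 => ih' j (by omega) (by omega)) hp
            rwa [show n - 10 + 10 = n from by ring] at h
          · have h := stepF9 (n-9) (fun j hj1 hj2 => ih' j (by omega) (by omega)) hp
            rwa [show n - 9 + 9 = n from by ring] at h
          · have h := stepF8 (n-8) (fun j hj1 hj2 => ih' j (by omega) (by omega)) hp
            rwa [show n - 8 + 8 = n from by ring] at h
        · -- backward: n ≤ -7
          have hn7 : n ≤ -7 := by omega
          have ih' : ∀ m : ℤ, n + 1 ≤ m → m ≤ 6 → c ((r:ℤ) + m) = α ^ m * β * c m :=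
            fun m hm1 hm2 => ih m (by omega)
          have hf := hfour (n + 8)
          rw [show n + 8 + 1 = n + 9 from by ring, show n + 8 + 2 = n + 10 from by ring,
              show n + 8 + 3 = n + 11 from by ring] at hf
          rcases hf with hp | hp | hp | hp
          · exact stepB8 n (fun j hj1 hj2 => ih' j (by omega) (by omega)) hp
          · exact stepB9 n (fun j hj1 hj2 => ih' j (by omega) (by omega)) hp
          · exact stepB10 n (fun j hj1 hj2 => ih' j (by omega) (by omega)) hp
          · exact stepB11 n (fun j hj1 hj2 => ih' j (by omega) (by omega)) hp
    exact fun n => main n.natAbs n le_rfl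
  -- α^r = β^2
  have hrel : α ^ (r:ℤ) = β ^ 2 := by
    have hq1 := hQ ((r:ℤ) + 2)
    have hq2 := hQ (-((r:ℤ) + ((r:ℤ) + 2)))
    rw [show (r:ℤ) + -((r:ℤ) + ((r:ℤ)+2)) = -((r:ℤ)+2) from by ring, hneg ((r:ℤ)+2),
        hneg ((r:ℤ) + ((r:ℤ)+2)), hq1, P2] at hq2
    have hmerge : α ^ (-((r:ℤ) + ((r:ℤ)+2))) * α ^ ((r:ℤ)+2) = α ^ (-(r:ℤ)) := by
      rw [← zpow_add₀ hα0, show -((r:ℤ) + ((r:ℤ)+2)) + ((r:ℤ)+2) = -(r:ℤ) from by ring]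
    have e1 : α ^ 2 * β = (α ^ (-((r:ℤ) + ((r:ℤ)+2))) * α ^ ((r:ℤ)+2)) * (α ^ 2 * β ^ 3) := by
      linear_combination -hq2
    rw [hmerge] at e1
    have hinv : α ^ ((r:ℤ)) * α ^ (-(r:ℤ)) = 1 := by
      rw [← zpow_add₀ hα0, show (r:ℤ) + -(r:ℤ) = 0 from by ring, zpow_zero]
    have e2 : α ^ (r:ℤ) * (α ^ 2 * β) = β ^ 2 * (α ^ 2 * β) := by
      have e3 : α ^ (r:ℤ) * (α ^ 2 * β) = α ^ (r:ℤ) * α ^ (-(r:ℤ)) * (α ^ 2 * β ^ 3) := by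
        rw [e1]; ring
      rw [hinv, one_mul] at e3
      rw [e3]; ring
    exact mul_right_cancel₀ (mul_ne_zero (pow_ne_zero 2 hα0) hβ0) e2
  -- nonneg k by induction
  have hk : ∀ (K : ℕ) (n : ℤ), c ((K:ℤ) * (r:ℤ) + n) = α ^ ((K:ℤ) * n) * β ^ ((K:ℤ) ^ 2) * c n := by
    intro K
    induction K with
    | zero => intro n; norm_num
    | succ K ih =>
      intro n
      have h1 := hQ ((K:ℤ) * (r:ℤ) + n)
      push_cast
      rw [show ((K:ℤ)+1) * (r:ℤ) + n = (r:ℤ) + ((K:ℤ) * (r:ℤ) + n) from by ring, h1, ih n]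
      have ee : α ^ ((K:ℤ) * (r:ℤ) + n) = β ^ (2 * (K:ℤ)) * α ^ n := by
        rw [zpow_add₀ hα0, show (K:ℤ) * (r:ℤ) = (r:ℤ) * (K:ℤ) from by ring, zpow_mul, hrel,
            ← zpow_ofNat β 2, ← zpow_mul]
      have ea : α ^ n * α ^ ((K:ℤ) * n) = α ^ (((K:ℤ)+1) * n) := by
        rw [← zpow_add₀ hα0, show n + (K:ℤ) * n = ((K:ℤ)+1) * n from by ring]
      have eb : β ^ (2*(K:ℤ)) * β * β ^ ((K:ℤ)^2) = β ^ (((K:ℤ)+1)^2) := by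
        have : β ^ (2*(K:ℤ)) * β ^ (1:ℤ) * β ^ ((K:ℤ)^2) = β ^ (2*(K:ℤ) + 1 + (K:ℤ)^2) := by
          rw [← zpow_add₀ hβ0, ← zpow_add₀ hβ0]
        rw [zpow_one] at this
        rw [this, show 2*(K:ℤ) + 1 + (K:ℤ)^2 = ((K:ℤ)+1)^2 from by ring]
      rw [ee, ← ea, ← eb]
      ring
  -- final
  intro k n
  rcases Int.eq_nat_or_neg k with ⟨K, rfl | rfl⟩
  · exact hk K n
  · have h1 := hk K (-n)
    rw [hneg n] at h1
    have h2 := hneg ((K:ℤ) * (r:ℤ) + -n)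
    rw [show -((K:ℤ) * (r:ℤ) + -n) = -(K:ℤ) * (r:ℤ) + n from by ring] at h2
    rw [h2, h1, show (-(K:ℤ)) * n = (K:ℤ) * (-n) from by ring,
        show (-(K:ℤ))^2 = (K:ℤ)^2 from by ring]
    ring
end

section
/- One has α^r = β^2 in ZMod p. -/
theorem seq_uniq {F : Type*} [Field F] (d e : ℤ → F) (k3 k4 k5 k6 k7 k8 k9 : F)
    (hk4 : k4 ≠ 0) (hk35 : k3 * k5 ≠ 0)
    (hd8 : ∀ n : ℤ, k4 * d (n + 4) * d (n - 4) =
      k3 * k5 * d (n + 3) * d (n - 3)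
      + (k4 ^ 3 - k3 ^ 3 * k5) * d (n + 2) * d (n - 2)
      + k3 ^ 2 * k6 * d (n + 1) * d (n - 1)
      - k4 * k6 * d n ^ 2)
    (hd9 : ∀ n : ℤ, k3 * k5 * d (n + 5) * d (n - 4) =
      k3 ^ 2 * k6 * d (n + 4) * d (n - 3)
      + k4 * (k5 ^ 2 - k3 ^ 2 * k6) * d (n + 3) * d (n - 2)
      + k3 * k4 * k7 * d (n + 2) * d (n - 1)
      - k5 * k7 * d (n + 1) * d n)
    (hd10 : ∀ n : ℤ, k4 * d (n + 5) * d (n - 5) =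
      k4 * k6 * d (n + 3) * d (n - 3)
      + k4 * (k5 ^ 2 - k3 ^ 2 * k6) * d (n + 2) * d (n - 2)
      + (k3 ^ 3 * k7 - k8) * d (n + 1) * d (n - 1)
      - k3 * k4 * k7 * d n ^ 2)
    (hd11 : ∀ n : ℤ, k3 * k5 * d (n + 6) * d (n - 5) =
      k3 * k4 * k7 * d (n + 4) * d (n - 3)
      + (k5 ^ 2 * k6 - k3 * k4 ^ 2 * k7) * d (n + 3) * d (n - 2)
      + k3 * (k3 * k4 * k8 - k9) * d (n + 2) * d (n - 1)
      - k3 * k5 * k8 * d (n + 1) * d n)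
    (he8 : ∀ n : ℤ, k4 * e (n + 4) * e (n - 4) =
      k3 * k5 * e (n + 3) * e (n - 3)
      + (k4 ^ 3 - k3 ^ 3 * k5) * e (n + 2) * e (n - 2)
      + k3 ^ 2 * k6 * e (n + 1) * e (n - 1)
      - k4 * k6 * e n ^ 2)
    (he9 : ∀ n : ℤ, k3 * k5 * e (n + 5) * e (n - 4) =
      k3 ^ 2 * k6 * e (n + 4) * e (n - 3)
      + k4 * (k5 ^ 2 - k3 ^ 2 * k6) * e (n + 3) * e (n - 2)
      + k3 * k4 * k7 * e (n + 2) * e (n - 1)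
      - k5 * k7 * e (n + 1) * e n)
    (he10 : ∀ n : ℤ, k4 * e (n + 5) * e (n - 5) =
      k4 * k6 * e (n + 3) * e (n - 3)
      + k4 * (k5 ^ 2 - k3 ^ 2 * k6) * e (n + 2) * e (n - 2)
      + (k3 ^ 3 * k7 - k8) * e (n + 1) * e (n - 1)
      - k3 * k4 * k7 * e n ^ 2)
    (he11 : ∀ n : ℤ, k3 * k5 * e (n + 6) * e (n - 5) =
      k3 * k4 * k7 * e (n + 4) * e (n - 3)
      + (k5 ^ 2 * k6 - k3 * k4 ^ 2 * k7) * e (n + 3) * e (n - 2)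
      + k3 * (k3 * k4 * k8 - k9) * e (n + 2) * e (n - 1)
      - k3 * k5 * k8 * e (n + 1) * e n)
    (hfour : ∀ m : ℤ, d m ≠ 0 ∨ d (m + 1) ≠ 0 ∨ d (m + 2) ≠ 0 ∨ d (m + 3) ≠ 0)
    (N0 : ℤ) (hag : ∀ k : ℤ, N0 ≤ k → k ≤ N0 + 10 → d k = e k) :
    ∀ n : ℤ, d n = e n := by
  -- upward
  have step_up : ∀ n : ℤ, (∀ k : ℤ, n - 11 ≤ k → k < n → d k = e k) → d n = e n := by
    intro n IH
    rcases hfour (n - 11) with h | h | h | h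
    · -- d (n-11) ≠ 0, use S11 at n-6
      have Ed := hd11 (n - 6); have Ee := he11 (n - 6)
      rw [show n - 6 + 6 = n by ring, show n - 6 - 5 = n - 11 by ring,
        show n - 6 + 4 = n - 2 by ring, show n - 6 - 3 = n - 9 by ring,
        show n - 6 + 3 = n - 3 by ring, show n - 6 - 2 = n - 8 by ring,
        show n - 6 + 2 = n - 4 by ring, show n - 6 - 1 = n - 7 by ring,
        show n - 6 + 1 = n - 5 by ring] at Ed Ee
      rw [← IH (n-11) (by omega) (by omega), ← IH (n-2) (by omega) (by omega),
        ← IH (n-9) (by omega) (by omega), ← IH (n-3) (by omega) (by omega),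
        ← IH (n-8) (by omega) (by omega), ← IH (n-4) (by omega) (by omega),
        ← IH (n-7) (by omega) (by omega), ← IH (n-5) (by omega) (by omega),
        ← IH (n-6) (by omega) (by omega)] at Ee
      have key : d n * (k3 * k5 * d (n - 11)) = e n * (k3 * k5 * d (n - 11)) := by
        linear_combination Ed - Ee
      exact mul_right_cancel₀ (mul_ne_zero hk35 h) key
    · -- d (n-10) ≠ 0, use S10 at n-5
      rw [show n - 11 + 1 = n - 10 by ring] at h
      have Ed := hd10 (n - 5); have Ee := he10 (n - 5)
      rw [show n - 5 + 5 = n by ring, show n - 5 - 5 = n - 10 by ring,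
        show n - 5 + 3 = n - 2 by ring, show n - 5 - 3 = n - 8 by ring,
        show n - 5 + 2 = n - 3 by ring, show n - 5 - 2 = n - 7 by ring,
        show n - 5 + 1 = n - 4 by ring, show n - 5 - 1 = n - 6 by ring] at Ed Ee
      rw [← IH (n-10) (by omega) (by omega), ← IH (n-2) (by omega) (by omega),
        ← IH (n-8) (by omega) (by omega), ← IH (n-3) (by omega) (by omega),
        ← IH (n-7) (by omega) (by omega), ← IH (n-4) (by omega) (by omega),
        ← IH (n-6) (by omega) (by omega), ← IH (n-5) (by omega) (by omega)] at Ee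
      have key : d n * (k4 * d (n - 10)) = e n * (k4 * d (n - 10)) := by
        linear_combination Ed - Ee
      exact mul_right_cancel₀ (mul_ne_zero hk4 h) key
    · -- d (n-9) ≠ 0, use S9 at n-5
      rw [show n - 11 + 2 = n - 9 by ring] at h
      have Ed := hd9 (n - 5); have Ee := he9 (n - 5)
      rw [show n - 5 + 5 = n by ring, show n - 5 - 4 = n - 9 by ring,
        show n - 5 + 4 = n - 1 by ring, show n - 5 - 3 = n - 8 by ring,
        show n - 5 + 3 = n - 2 by ring, show n - 5 - 2 = n - 7 by ring,
        show n - 5 + 2 = n - 3 by ring, show n - 5 - 1 = n - 6 by ring,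
        show n - 5 + 1 = n - 4 by ring] at Ed Ee
      rw [← IH (n-9) (by omega) (by omega), ← IH (n-1) (by omega) (by omega),
        ← IH (n-8) (by omega) (by omega), ← IH (n-2) (by omega) (by omega),
        ← IH (n-7) (by omega) (by omega), ← IH (n-3) (by omega) (by omega),
        ← IH (n-6) (by omega) (by omega), ← IH (n-4) (by omega) (by omega),
        ← IH (n-5) (by omega) (by omega)] at Ee
      have key : d n * (k3 * k5 * d (n - 9)) = e n * (k3 * k5 * d (n - 9)) := by
        linear_combination Ed - Ee
      exact mul_right_cancel₀ (mul_ne_zero hk35 h) key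
    · -- d (n-8) ≠ 0, use S8 at n-4
      rw [show n - 11 + 3 = n - 8 by ring] at h
      have Ed := hd8 (n - 4); have Ee := he8 (n - 4)
      rw [show n - 4 + 4 = n by ring, show n - 4 - 4 = n - 8 by ring,
        show n - 4 + 3 = n - 1 by ring, show n - 4 - 3 = n - 7 by ring,
        show n - 4 + 2 = n - 2 by ring, show n - 4 - 2 = n - 6 by ring,
        show n - 4 + 1 = n - 3 by ring, show n - 4 - 1 = n - 5 by ring] at Ed Ee
      rw [← IH (n-8) (by omega) (by omega), ← IH (n-1) (by omega) (by omega),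
        ← IH (n-7) (by omega) (by omega), ← IH (n-2) (by omega) (by omega),
        ← IH (n-6) (by omega) (by omega), ← IH (n-3) (by omega) (by omega),
        ← IH (n-5) (by omega) (by omega), ← IH (n-4) (by omega) (by omega)] at Ee
      have key : d n * (k4 * d (n - 8)) = e n * (k4 * d (n - 8)) := by
        linear_combination Ed - Ee
      exact mul_right_cancel₀ (mul_ne_zero hk4 h) key

  -- downward
  have step_down : ∀ n : ℤ, (∀ k : ℤ, n < k → k ≤ n + 11 → d k = e k) → d n = e n := by
    intro n IH
    rcases hfour (n + 8) with h | h | h | h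
    · -- d (n+8) ≠ 0, use S8 at n+4
      have Ed := hd8 (n + 4); have Ee := he8 (n + 4)
      rw [show n + 4 + 4 = n + 8 by ring, show n + 4 - 4 = n by ring,
        show n + 4 + 3 = n + 7 by ring, show n + 4 - 3 = n + 1 by ring,
        show n + 4 + 2 = n + 6 by ring, show n + 4 - 2 = n + 2 by ring,
        show n + 4 + 1 = n + 5 by ring, show n + 4 - 1 = n + 3 by ring] at Ed Ee
      rw [← IH (n+8) (by omega) (by omega), ← IH (n+7) (by omega) (by omega),
        ← IH (n+1) (by omega) (by omega), ← IH (n+6) (by omega) (by omega),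
        ← IH (n+2) (by omega) (by omega), ← IH (n+5) (by omega) (by omega),
        ← IH (n+3) (by omega) (by omega), ← IH (n+4) (by omega) (by omega)] at Ee
      have key : d n * (k4 * d (n + 8)) = e n * (k4 * d (n + 8)) := by
        linear_combination Ed - Ee
      exact mul_right_cancel₀ (mul_ne_zero hk4 h) key
    · -- d (n+9) ≠ 0, use S9 at n+4
      rw [show n + 8 + 1 = n + 9 by ring] at h
      have Ed := hd9 (n + 4); have Ee := he9 (n + 4)
      rw [show n + 4 + 5 = n + 9 by ring, show n + 4 - 4 = n by ring,
        show n + 4 + 4 = n + 8 by ring, show n + 4 - 3 = n + 1 by ring,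
        show n + 4 + 3 = n + 7 by ring, show n + 4 - 2 = n + 2 by ring,
        show n + 4 + 2 = n + 6 by ring, show n + 4 - 1 = n + 3 by ring,
        show n + 4 + 1 = n + 5 by ring] at Ed Ee
      rw [← IH (n+9) (by omega) (by omega), ← IH (n+8) (by omega) (by omega),
        ← IH (n+1) (by omega) (by omega), ← IH (n+7) (by omega) (by omega),
        ← IH (n+2) (by omega) (by omega), ← IH (n+6) (by omega) (by omega),
        ← IH (n+3) (by omega) (by omega), ← IH (n+5) (by omega) (by omega),
        ← IH (n+4) (by omega) (by omega)] at Ee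
      have key : d n * (k3 * k5 * d (n + 9)) = e n * (k3 * k5 * d (n + 9)) := by
        linear_combination Ed - Ee
      exact mul_right_cancel₀ (mul_ne_zero hk35 h) key
    · -- d (n+10) ≠ 0, use S10 at n+5
      rw [show n + 8 + 2 = n + 10 by ring] at h
      have Ed := hd10 (n + 5); have Ee := he10 (n + 5)
      rw [show n + 5 + 5 = n + 10 by ring, show n + 5 - 5 = n by ring,
        show n + 5 + 3 = n + 8 by ring, show n + 5 - 3 = n + 2 by ring,
        show n + 5 + 2 = n + 7 by ring, show n + 5 - 2 = n + 3 by ring,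
        show n + 5 + 1 = n + 6 by ring, show n + 5 - 1 = n + 4 by ring] at Ed Ee
      rw [← IH (n+10) (by omega) (by omega), ← IH (n+8) (by omega) (by omega),
        ← IH (n+2) (by omega) (by omega), ← IH (n+7) (by omega) (by omega),
        ← IH (n+3) (by omega) (by omega), ← IH (n+6) (by omega) (by omega),
        ← IH (n+4) (by omega) (by omega), ← IH (n+5) (by omega) (by omega)] at Ee
      have key : d n * (k4 * d (n + 10)) = e n * (k4 * d (n + 10)) := by
        linear_combination Ed - Ee
      exact mul_right_cancel₀ (mul_ne_zero hk4 h) key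
    · -- d (n+11) ≠ 0, use S11 at n+5
      rw [show n + 8 + 3 = n + 11 by ring] at h
      have Ed := hd11 (n + 5); have Ee := he11 (n + 5)
      rw [show n + 5 + 6 = n + 11 by ring, show n + 5 - 5 = n by ring,
        show n + 5 + 4 = n + 9 by ring, show n + 5 - 3 = n + 2 by ring,
        show n + 5 + 3 = n + 8 by ring, show n + 5 - 2 = n + 3 by ring,
        show n + 5 + 2 = n + 7 by ring, show n + 5 - 1 = n + 4 by ring,
        show n + 5 + 1 = n + 6 by ring] at Ed Ee
      rw [← IH (n+11) (by omega) (by omega), ← IH (n+9) (by omega) (by omega),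
        ← IH (n+2) (by omega) (by omega), ← IH (n+8) (by omega) (by omega),
        ← IH (n+3) (by omega) (by omega), ← IH (n+7) (by omega) (by omega),
        ← IH (n+4) (by omega) (by omega), ← IH (n+6) (by omega) (by omega),
        ← IH (n+5) (by omega) (by omega)] at Ee
      have key : d n * (k3 * k5 * d (n + 11)) = e n * (k3 * k5 * d (n + 11)) := by
        linear_combination Ed - Ee
      exact mul_right_cancel₀ (mul_ne_zero hk35 h) key
  have up : ∀ m : ℕ, d (N0 + m) = e (N0 + m) := by
    intro m
    induction m using Nat.strong_induction_on with
    | _ m ih =>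
      by_cases hm : m ≤ 10
      · exact hag _ (by omega) (by omega)
      · apply step_up
        intro k hk1 hk2
        have hkey := ih (k - N0).toNat (by omega)
        rwa [show N0 + ((k - N0).toNat : ℤ) = k by omega] at hkey
  have hup : ∀ n : ℤ, N0 ≤ n → d n = e n := by
    intro n hn
    have := up (n - N0).toNat
    rwa [show N0 + ((n - N0).toNat : ℤ) = n by omega] at this
  have down : ∀ m : ℕ, d (N0 - m) = e (N0 - m) := by
    intro m
    induction m using Nat.strong_induction_on with
    | _ m ih =>
      by_cases hm : m = 0
      · subst hm; exact hag _ (by omega) (by omega)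
      · apply step_down
        intro k hk1 hk2
        by_cases hk : N0 ≤ k
        · exact hup k hk
        · have hkey := ih (N0 - k).toNat (by omega)
          rwa [show N0 - (((N0 - k).toNat : ℤ)) = k by omega] at hkey
  intro n
  by_cases hn : N0 ≤ n
  · exact hup n hn
  · have := down (N0 - n).toNat
    rwa [show N0 - (((N0 - n).toNat : ℤ)) = n by omega] at this

theorem stmt4 (p : ℕ) [Fact p.Prime] (hodd : Odd p)
    (c : ℤ → ZMod p)
    (hneg : ∀ n : ℤ, c (-n) = - c n)
    (h0 : c 0 = 0) (h1 : c 1 = 0) (h2 : c 2 = 1)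
    (hS8 : ∀ n : ℤ, c 4 * c (n + 4) * c (n - 4) =
      c 3 * c 5 * c (n + 3) * c (n - 3)
      + (c 4 ^ 3 - c 3 ^ 3 * c 5) * c (n + 2) * c (n - 2)
      + c 3 ^ 2 * c 6 * c (n + 1) * c (n - 1)
      - c 4 * c 6 * c n ^ 2)
    (hS9 : ∀ n : ℤ, c 3 * c 5 * c (n + 5) * c (n - 4) =
      c 3 ^ 2 * c 6 * c (n + 4) * c (n - 3)
      + c 4 * (c 5 ^ 2 - c 3 ^ 2 * c 6) * c (n + 3) * c (n - 2)
      + c 3 * c 4 * c 7 * c (n + 2) * c (n - 1)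
      - c 5 * c 7 * c (n + 1) * c n)
    (hS10 : ∀ n : ℤ, c 4 * c (n + 5) * c (n - 5) =
      c 4 * c 6 * c (n + 3) * c (n - 3)
      + c 4 * (c 5 ^ 2 - c 3 ^ 2 * c 6) * c (n + 2) * c (n - 2)
      + (c 3 ^ 3 * c 7 - c 8) * c (n + 1) * c (n - 1)
      - c 3 * c 4 * c 7 * c n ^ 2)
    (hS11 : ∀ n : ℤ, c 3 * c 5 * c (n + 6) * c (n - 5) =
      c 3 * c 4 * c 7 * c (n + 4) * c (n - 3)
      + (c 5 ^ 2 * c 6 - c 3 * c 4 ^ 2 * c 7) * c (n + 3) * c (n - 2)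
      + c 3 * (c 3 * c 4 * c 8 - c 9) * c (n + 2) * c (n - 1)
      - c 3 * c 5 * c 8 * c (n + 1) * c n)
    (h3 : c 3 ≠ 0) (h4 : c 4 ≠ 0) (h5 : c 5 ≠ 0) (h6 : c 6 ≠ 0) (h7 : c 7 ≠ 0)
    (h435 : c 4 ^ 3 - c 3 ^ 3 * c 5 ≠ 0)
    (hfour : ∀ m : ℤ, c m ≠ 0 ∨ c (m + 1) ≠ 0 ∨ c (m + 2) ≠ 0 ∨ c (m + 3) ≠ 0)
    (r : ℕ) (hrpos : 0 < r)
    (hr1 : c ((r : ℤ) - 1) = 0) (hr0 : c (r : ℤ) = 0) (hr2 : c ((r : ℤ) + 1) = 0)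
    (hr3 : c ((r : ℤ) + 3) ≠ 0)
    (α β : ZMod p)
    (hα : α = c ((r : ℤ) + 3) * (c 3 * c ((r : ℤ) + 2))⁻¹)
    (hβ : β = c 3 ^ 2 * c ((r : ℤ) + 2) ^ 3 * (c ((r : ℤ) + 3) ^ 2)⁻¹)
    :
    α ^ (r : ℕ) = β ^ 2 := by
  classical
  -- basic nonvanishing
  have hu2 : c ((r:ℤ) + 2) ≠ 0 := by
    rcases hfour ((r:ℤ) - 1) with h | h | h | h
    · exact absurd hr1 h
    · rw [show (r:ℤ) - 1 + 1 = (r:ℤ) by ring] at h; exact absurd hr0 h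
    · rw [show (r:ℤ) - 1 + 2 = (r:ℤ) + 1 by ring] at h; exact absurd hr2 h
    · rwa [show (r:ℤ) - 1 + 3 = (r:ℤ) + 2 by ring] at h
  have hu3 : c ((r:ℤ) + 3) ≠ 0 := hr3
  have hα0 : α ≠ 0 := by
    rw [hα]; exact mul_ne_zero hu3 (inv_ne_zero (mul_ne_zero h3 hu2))
  have hβ0 : β ≠ 0 := by
    rw [hβ]
    exact mul_ne_zero (mul_ne_zero (pow_ne_zero _ h3) (pow_ne_zero _ hu2))
      (inv_ne_zero (pow_ne_zero _ hu3))
  -- bootstrap equations near r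
  have P4 : c 3 ^ 2 * (c ((r:ℤ)+2) * c ((r:ℤ)+4)) = c 4 * c ((r:ℤ)+3) ^ 2 := by
    have E := hS8 ((r:ℤ)+3)
    rw [show (r:ℤ)+3-4 = (r:ℤ)-1 by ring, show (r:ℤ)+3-3 = (r:ℤ) by ring,
      show (r:ℤ)+3-2 = (r:ℤ)+1 by ring, show (r:ℤ)+3-1 = (r:ℤ)+2 by ring,
      show (r:ℤ)+3+1 = (r:ℤ)+4 by ring, show (r:ℤ)+3+2 = (r:ℤ)+5 by ring,
      show (r:ℤ)+3+3 = (r:ℤ)+6 by ring, show (r:ℤ)+3+4 = (r:ℤ)+7 by ring,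
      hr1, hr0, hr2] at E
    refine mul_left_cancel₀ h6 ?_
    linear_combination -E
  have P5' : c 3 * c 4 * (c ((r:ℤ)+2) * c ((r:ℤ)+5)) = c 5 * (c ((r:ℤ)+3) * c ((r:ℤ)+4)) := by
    have E := hS9 ((r:ℤ)+3)
    rw [show (r:ℤ)+3-4 = (r:ℤ)-1 by ring, show (r:ℤ)+3-3 = (r:ℤ) by ring,
      show (r:ℤ)+3-2 = (r:ℤ)+1 by ring, show (r:ℤ)+3-1 = (r:ℤ)+2 by ring,
      show (r:ℤ)+3+1 = (r:ℤ)+4 by ring, show (r:ℤ)+3+2 = (r:ℤ)+5 by ring,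
      show (r:ℤ)+3+3 = (r:ℤ)+6 by ring, show (r:ℤ)+3+4 = (r:ℤ)+7 by ring,
      show (r:ℤ)+3+5 = (r:ℤ)+8 by ring, hr1, hr0, hr2] at E
    refine mul_left_cancel₀ h7 ?_
    linear_combination -E
  have P6' : (c 4 ^ 3 - c 3 ^ 3 * c 5) * (c ((r:ℤ)+2) * c ((r:ℤ)+6)) =
      c 4 * c 6 * c ((r:ℤ)+4) ^ 2 - c 3 ^ 2 * c 6 * (c ((r:ℤ)+3) * c ((r:ℤ)+5)) := by
    have E := hS8 ((r:ℤ)+4)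
    rw [show (r:ℤ)+4-4 = (r:ℤ) by ring, show (r:ℤ)+4-3 = (r:ℤ)+1 by ring,
      show (r:ℤ)+4-2 = (r:ℤ)+2 by ring, show (r:ℤ)+4-1 = (r:ℤ)+3 by ring,
      show (r:ℤ)+4+1 = (r:ℤ)+5 by ring, show (r:ℤ)+4+2 = (r:ℤ)+6 by ring,
      show (r:ℤ)+4+3 = (r:ℤ)+7 by ring, show (r:ℤ)+4+4 = (r:ℤ)+8 by ring,
      hr0, hr2] at E
    linear_combination -E
  have PV2 : c ((r:ℤ)+6) * c ((r:ℤ)-2) = -(c 6 * c ((r:ℤ)+2) ^ 2) := by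
    have E := hS8 ((r:ℤ)+2)
    rw [show (r:ℤ)+2-4 = (r:ℤ)-2 by ring, show (r:ℤ)+2-3 = (r:ℤ)-1 by ring,
      show (r:ℤ)+2-2 = (r:ℤ) by ring, show (r:ℤ)+2-1 = (r:ℤ)+1 by ring,
      show (r:ℤ)+2+1 = (r:ℤ)+3 by ring, show (r:ℤ)+2+2 = (r:ℤ)+4 by ring,
      show (r:ℤ)+2+3 = (r:ℤ)+5 by ring, show (r:ℤ)+2+4 = (r:ℤ)+6 by ring,
      hr1, hr0, hr2] at E
    refine mul_left_cancel₀ h4 ?_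
    linear_combination E
  have PV3 : c 4 * (c ((r:ℤ)+5) * c ((r:ℤ)-3)) = c 3 * c 5 * (c ((r:ℤ)+4) * c ((r:ℤ)-2)) := by
    have E := hS8 ((r:ℤ)+1)
    rw [show (r:ℤ)+1-4 = (r:ℤ)-3 by ring, show (r:ℤ)+1-3 = (r:ℤ)-2 by ring,
      show (r:ℤ)+1-2 = (r:ℤ)-1 by ring, show (r:ℤ)+1-1 = (r:ℤ) by ring,
      show (r:ℤ)+1+1 = (r:ℤ)+2 by ring, show (r:ℤ)+1+2 = (r:ℤ)+3 by ring,
      show (r:ℤ)+1+3 = (r:ℤ)+4 by ring, show (r:ℤ)+1+4 = (r:ℤ)+5 by ring,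
      hr1, hr0, hr2] at E
    linear_combination E
  have PV4 : c ((r:ℤ)+6) * c ((r:ℤ)-4) = c 6 * (c ((r:ℤ)+4) * c ((r:ℤ)-2)) := by
    have E := hS10 ((r:ℤ)+1)
    rw [show (r:ℤ)+1-5 = (r:ℤ)-4 by ring, show (r:ℤ)+1-3 = (r:ℤ)-2 by ring,
      show (r:ℤ)+1-2 = (r:ℤ)-1 by ring, show (r:ℤ)+1-1 = (r:ℤ) by ring,
      show (r:ℤ)+1+1 = (r:ℤ)+2 by ring, show (r:ℤ)+1+2 = (r:ℤ)+3 by ring,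
      show (r:ℤ)+1+3 = (r:ℤ)+4 by ring, show (r:ℤ)+1+5 = (r:ℤ)+6 by ring,
      hr1, hr0, hr2] at E
    refine mul_left_cancel₀ h4 ?_
    linear_combination E
  have PV5 : c ((r:ℤ)+5) * c ((r:ℤ)-5) = c 6 * (c ((r:ℤ)+3) * c ((r:ℤ)-3))
      + (c 5 ^ 2 - c 3 ^ 2 * c 6) * (c ((r:ℤ)+2) * c ((r:ℤ)-2)) := by
    have E := hS10 ((r:ℤ))
    rw [hr1, hr0, hr2] at E
    refine mul_left_cancel₀ h4 ?_
    linear_combination E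
  -- derived closed forms
  have P5 : c 3 ^ 3 * (c ((r:ℤ)+2) ^ 2 * c ((r:ℤ)+5)) = c 5 * c ((r:ℤ)+3) ^ 3 := by
    refine mul_left_cancel₀ h4 ?_
    linear_combination c 3 ^ 2 * c ((r:ℤ)+2) * P5' + c 5 * c ((r:ℤ)+3) * P4
  have P6 : c 3 ^ 4 * (c ((r:ℤ)+2) ^ 3 * c ((r:ℤ)+6)) = c 6 * c ((r:ℤ)+3) ^ 4 := by
    refine mul_left_cancel₀ h435 ?_
    linear_combination c 3 ^ 4 * c ((r:ℤ)+2) ^ 2 * P6'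
      + c 4 * c 6 * (c 3 ^ 2 * c ((r:ℤ)+2) * c ((r:ℤ)+4) + c 4 * c ((r:ℤ)+3) ^ 2) * P4
      - c 3 ^ 3 * c 6 * c ((r:ℤ)+3) * P5
  have Q2 : c ((r:ℤ)+3) ^ 4 * c ((r:ℤ)-2) = -(c 3 ^ 4 * c ((r:ℤ)+2) ^ 5) := by
    refine mul_left_cancel₀ h6 ?_
    linear_combination -(c ((r:ℤ)-2) * P6) + c 3 ^ 4 * c ((r:ℤ)+2) ^ 3 * PV2
  have Q3 : c ((r:ℤ)+3) ^ 5 * c ((r:ℤ)-3) = -(c 3 ^ 6 * c ((r:ℤ)+2) ^ 6) := by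
    refine mul_left_cancel₀ (mul_ne_zero h4 h5) ?_
    linear_combination -(c 4 * c ((r:ℤ)+3) ^ 2 * c ((r:ℤ)-3) * P5)
      + c 3 ^ 3 * c ((r:ℤ)+2) ^ 2 * c ((r:ℤ)+3) ^ 2 * PV3
      + c 3 ^ 2 * c 5 * c ((r:ℤ)+2) * c ((r:ℤ)+3) ^ 2 * c ((r:ℤ)-2) * P4
      + c 3 ^ 2 * c 4 * c 5 * c ((r:ℤ)+2) * Q2
  have Q4 : c ((r:ℤ)+3) ^ 6 * c ((r:ℤ)-4) = -(c 3 ^ 6 * c 4 * c ((r:ℤ)+2) ^ 7) := by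
    refine mul_left_cancel₀ h6 ?_
    linear_combination -(c ((r:ℤ)+3) ^ 2 * c ((r:ℤ)-4) * P6)
      + c 3 ^ 4 * c ((r:ℤ)+2) ^ 3 * c ((r:ℤ)+3) ^ 2 * PV4
      + c 3 ^ 2 * c 6 * c ((r:ℤ)+2) ^ 2 * c ((r:ℤ)+3) ^ 2 * c ((r:ℤ)-2) * P4
      + c 3 ^ 2 * c 4 * c 6 * c ((r:ℤ)+2) ^ 2 * Q2
  have Q5 : c ((r:ℤ)+3) ^ 7 * c ((r:ℤ)-5) = -(c 3 ^ 7 * c 5 * c ((r:ℤ)+2) ^ 8) := by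
    refine mul_left_cancel₀ h5 ?_
    linear_combination -(c ((r:ℤ)+3) ^ 4 * c ((r:ℤ)-5) * P5)
      + c 3 ^ 3 * c ((r:ℤ)+2) ^ 2 * c ((r:ℤ)+3) ^ 4 * PV5
      + c 3 ^ 3 * c 6 * c ((r:ℤ)+2) ^ 2 * Q3
      + c 3 ^ 3 * c ((r:ℤ)+2) ^ 3 * (c 5 ^ 2 - c 3 ^ 2 * c 6) * Q2
  -- the scaled shifted sequence
  set D : ℤ → ZMod p := fun k => (α ^ k * β)⁻¹ * c ((r:ℤ) + k) with hDdef
  have hprod : ∀ a b s : ℤ, a + b = s →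
      D a * D b = (α ^ s * β ^ 2)⁻¹ * (c ((r:ℤ) + a) * c ((r:ℤ) + b)) := by
    intro a b s hs
    have hab : (α ^ a * β) * (α ^ b * β) = α ^ s * β ^ 2 := by
      rw [← hs, zpow_add₀ hα0]; ring
    simp only [hDdef]
    rw [← hab, mul_inv]
    ring
  have hD8 : ∀ n : ℤ, c 4 * D (n + 4) * D (n - 4) =
      c 3 * c 5 * D (n + 3) * D (n - 3)
      + (c 4 ^ 3 - c 3 ^ 3 * c 5) * D (n + 2) * D (n - 2)
      + c 3 ^ 2 * c 6 * D (n + 1) * D (n - 1)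
      - c 4 * c 6 * D n ^ 2 := by
    intro n
    have E := hS8 ((r:ℤ) + n)
    rw [show (r:ℤ)+n+4 = (r:ℤ)+(n+4) by ring, show (r:ℤ)+n-4 = (r:ℤ)+(n-4) by ring,
      show (r:ℤ)+n+3 = (r:ℤ)+(n+3) by ring, show (r:ℤ)+n-3 = (r:ℤ)+(n-3) by ring,
      show (r:ℤ)+n+2 = (r:ℤ)+(n+2) by ring, show (r:ℤ)+n-2 = (r:ℤ)+(n-2) by ring,
      show (r:ℤ)+n+1 = (r:ℤ)+(n+1) by ring, show (r:ℤ)+n-1 = (r:ℤ)+(n-1) by ring] at E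
    have h44 := hprod (n+4) (n-4) (2*n) (by ring)
    have h33 := hprod (n+3) (n-3) (2*n) (by ring)
    have h22 := hprod (n+2) (n-2) (2*n) (by ring)
    have h11 := hprod (n+1) (n-1) (2*n) (by ring)
    have h00 := hprod n n (2*n) (by ring)
    linear_combination c 4 * h44 - c 3 * c 5 * h33 - (c 4 ^ 3 - c 3 ^ 3 * c 5) * h22
      - c 3 ^ 2 * c 6 * h11 + c 4 * c 6 * h00 + (α ^ (2*n) * β ^ 2)⁻¹ * E
  have hD9 : ∀ n : ℤ, c 3 * c 5 * D (n + 5) * D (n - 4) =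
      c 3 ^ 2 * c 6 * D (n + 4) * D (n - 3)
      + c 4 * (c 5 ^ 2 - c 3 ^ 2 * c 6) * D (n + 3) * D (n - 2)
      + c 3 * c 4 * c 7 * D (n + 2) * D (n - 1)
      - c 5 * c 7 * D (n + 1) * D n := by
    intro n
    have E := hS9 ((r:ℤ) + n)
    rw [show (r:ℤ)+n+5 = (r:ℤ)+(n+5) by ring, show (r:ℤ)+n-4 = (r:ℤ)+(n-4) by ring,
      show (r:ℤ)+n+4 = (r:ℤ)+(n+4) by ring, show (r:ℤ)+n-3 = (r:ℤ)+(n-3) by ring,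
      show (r:ℤ)+n+3 = (r:ℤ)+(n+3) by ring, show (r:ℤ)+n-2 = (r:ℤ)+(n-2) by ring,
      show (r:ℤ)+n+2 = (r:ℤ)+(n+2) by ring, show (r:ℤ)+n-1 = (r:ℤ)+(n-1) by ring,
      show (r:ℤ)+n+1 = (r:ℤ)+(n+1) by ring] at E
    have h54 := hprod (n+5) (n-4) (2*n+1) (by ring)
    have h43 := hprod (n+4) (n-3) (2*n+1) (by ring)
    have h32 := hprod (n+3) (n-2) (2*n+1) (by ring)
    have h21 := hprod (n+2) (n-1) (2*n+1) (by ring)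
    have h10 := hprod (n+1) n (2*n+1) (by ring)
    linear_combination c 3 * c 5 * h54 - c 3 ^ 2 * c 6 * h43
      - c 4 * (c 5 ^ 2 - c 3 ^ 2 * c 6) * h32 - c 3 * c 4 * c 7 * h21
      + c 5 * c 7 * h10 + (α ^ (2*n+1) * β ^ 2)⁻¹ * E
  have hD10 : ∀ n : ℤ, c 4 * D (n + 5) * D (n - 5) =
      c 4 * c 6 * D (n + 3) * D (n - 3)
      + c 4 * (c 5 ^ 2 - c 3 ^ 2 * c 6) * D (n + 2) * D (n - 2)
      + (c 3 ^ 3 * c 7 - c 8) * D (n + 1) * D (n - 1)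
      - c 3 * c 4 * c 7 * D n ^ 2 := by
    intro n
    have E := hS10 ((r:ℤ) + n)
    rw [show (r:ℤ)+n+5 = (r:ℤ)+(n+5) by ring, show (r:ℤ)+n-5 = (r:ℤ)+(n-5) by ring,
      show (r:ℤ)+n+3 = (r:ℤ)+(n+3) by ring, show (r:ℤ)+n-3 = (r:ℤ)+(n-3) by ring,
      show (r:ℤ)+n+2 = (r:ℤ)+(n+2) by ring, show (r:ℤ)+n-2 = (r:ℤ)+(n-2) by ring,
      show (r:ℤ)+n+1 = (r:ℤ)+(n+1) by ring, show (r:ℤ)+n-1 = (r:ℤ)+(n-1) by ring] at E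
    have h55 := hprod (n+5) (n-5) (2*n) (by ring)
    have h33 := hprod (n+3) (n-3) (2*n) (by ring)
    have h22 := hprod (n+2) (n-2) (2*n) (by ring)
    have h11 := hprod (n+1) (n-1) (2*n) (by ring)
    have h00 := hprod n n (2*n) (by ring)
    linear_combination c 4 * h55 - c 4 * c 6 * h33 - c 4 * (c 5 ^ 2 - c 3 ^ 2 * c 6) * h22
      - (c 3 ^ 3 * c 7 - c 8) * h11 + c 3 * c 4 * c 7 * h00 + (α ^ (2*n) * β ^ 2)⁻¹ * E
  have hD11 : ∀ n : ℤ, c 3 * c 5 * D (n + 6) * D (n - 5) =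
      c 3 * c 4 * c 7 * D (n + 4) * D (n - 3)
      + (c 5 ^ 2 * c 6 - c 3 * c 4 ^ 2 * c 7) * D (n + 3) * D (n - 2)
      + c 3 * (c 3 * c 4 * c 8 - c 9) * D (n + 2) * D (n - 1)
      - c 3 * c 5 * c 8 * D (n + 1) * D n := by
    intro n
    have E := hS11 ((r:ℤ) + n)
    rw [show (r:ℤ)+n+6 = (r:ℤ)+(n+6) by ring, show (r:ℤ)+n-5 = (r:ℤ)+(n-5) by ring,
      show (r:ℤ)+n+4 = (r:ℤ)+(n+4) by ring, show (r:ℤ)+n-3 = (r:ℤ)+(n-3) by ring,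
      show (r:ℤ)+n+3 = (r:ℤ)+(n+3) by ring, show (r:ℤ)+n-2 = (r:ℤ)+(n-2) by ring,
      show (r:ℤ)+n+2 = (r:ℤ)+(n+2) by ring, show (r:ℤ)+n-1 = (r:ℤ)+(n-1) by ring,
      show (r:ℤ)+n+1 = (r:ℤ)+(n+1) by ring] at E
    have h65 := hprod (n+6) (n-5) (2*n+1) (by ring)
    have h43 := hprod (n+4) (n-3) (2*n+1) (by ring)
    have h32 := hprod (n+3) (n-2) (2*n+1) (by ring)
    have h21 := hprod (n+2) (n-1) (2*n+1) (by ring)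
    have h10 := hprod (n+1) n (2*n+1) (by ring)
    linear_combination c 3 * c 5 * h65 - c 3 * c 4 * c 7 * h43
      - (c 5 ^ 2 * c 6 - c 3 * c 4 ^ 2 * c 7) * h32 - c 3 * (c 3 * c 4 * c 8 - c 9) * h21
      + c 3 * c 5 * c 8 * h10 + (α ^ (2*n+1) * β ^ 2)⁻¹ * E
  -- base cases: c k = D k for -5 ≤ k ≤ 5
  have hbase : ∀ k : ℤ, -5 ≤ k → k ≤ -5 + 10 → c k = D k := by
    intro k hk1 hk2
    have hk2' : k ≤ 5 := by omega
    have base : α ^ k * β * c k = c ((r:ℤ) + k) := by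
      interval_cases k
      · -- k = -5
        rw [show (r:ℤ) + -5 = (r:ℤ) - 5 by ring, hneg 5]
        have hx : c ((r:ℤ) - 5) = -(c 3 ^ 7 * c 5 * c ((r:ℤ)+2) ^ 8) * (c ((r:ℤ)+3) ^ 7)⁻¹ := by
          rw [eq_mul_inv_iff_mul_eq₀ (pow_ne_zero _ hu3)]
          linear_combination Q5
        rw [hx, hα, hβ, show ((-5):ℤ) = -((5:ℕ):ℤ) by norm_num, zpow_neg, zpow_natCast]
        field_simp
      · -- k = -4
        rw [show (r:ℤ) + -4 = (r:ℤ) - 4 by ring, hneg 4]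
        have hx : c ((r:ℤ) - 4) = -(c 3 ^ 6 * c 4 * c ((r:ℤ)+2) ^ 7) * (c ((r:ℤ)+3) ^ 6)⁻¹ := by
          rw [eq_mul_inv_iff_mul_eq₀ (pow_ne_zero _ hu3)]
          linear_combination Q4
        rw [hx, hα, hβ, show ((-4):ℤ) = -((4:ℕ):ℤ) by norm_num, zpow_neg, zpow_natCast]
        field_simp
      · -- k = -3
        rw [show (r:ℤ) + -3 = (r:ℤ) - 3 by ring, hneg 3]
        have hx : c ((r:ℤ) - 3) = -(c 3 ^ 6 * c ((r:ℤ)+2) ^ 6) * (c ((r:ℤ)+3) ^ 5)⁻¹ := by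
          rw [eq_mul_inv_iff_mul_eq₀ (pow_ne_zero _ hu3)]
          linear_combination Q3
        rw [hx, hα, hβ, show ((-3):ℤ) = -((3:ℕ):ℤ) by norm_num, zpow_neg, zpow_natCast]
        field_simp
      · -- k = -2
        rw [show (r:ℤ) + -2 = (r:ℤ) - 2 by ring, hneg 2, h2]
        have hx : c ((r:ℤ) - 2) = -(c 3 ^ 4 * c ((r:ℤ)+2) ^ 5) * (c ((r:ℤ)+3) ^ 4)⁻¹ := by
          rw [eq_mul_inv_iff_mul_eq₀ (pow_ne_zero _ hu3)]
          linear_combination Q2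
        rw [hx, hα, hβ, show ((-2):ℤ) = -((2:ℕ):ℤ) by norm_num, zpow_neg, zpow_natCast]
        field_simp
      · -- k = -1
        rw [show (r:ℤ) + -1 = (r:ℤ) - 1 by ring, hr1, hneg 1, h1, neg_zero, mul_zero]
      · -- k = 0
        rw [show (r:ℤ) + 0 = (r:ℤ) by ring, hr0, h0, mul_zero]
      · -- k = 1
        rw [h1, mul_zero, hr2]
      · -- k = 2
        rw [h2, mul_one, hα, hβ, show ((2):ℤ) = ((2:ℕ):ℤ) by norm_num, zpow_natCast]
        field_simp
      · -- k = 3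
        rw [hα, hβ, show ((3):ℤ) = ((3:ℕ):ℤ) by norm_num, zpow_natCast]
        field_simp
        ring_nf
        exact mul_inv_cancel_right₀ h3 _
      · -- k = 4
        have hx : c ((r:ℤ) + 4) = c 4 * c ((r:ℤ)+3) ^ 2 * (c 3 ^ 2 * c ((r:ℤ)+2))⁻¹ := by
          rw [eq_mul_inv_iff_mul_eq₀ (mul_ne_zero (pow_ne_zero _ h3) hu2)]
          linear_combination P4
        rw [hx, hα, hβ, show ((4):ℤ) = ((4:ℕ):ℤ) by norm_num, zpow_natCast]
        field_simp
      · -- k = 5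
        have hx : c ((r:ℤ) + 5) = c 5 * c ((r:ℤ)+3) ^ 3 * (c 3 ^ 3 * c ((r:ℤ)+2) ^ 2)⁻¹ := by
          rw [eq_mul_inv_iff_mul_eq₀ (mul_ne_zero (pow_ne_zero _ h3) (pow_ne_zero _ hu2))]
          linear_combination P5
        rw [hx, hα, hβ, show ((5):ℤ) = ((5:ℕ):ℤ) by norm_num, zpow_natCast]
        field_simp
    simp only [hDdef]
    rw [← base, inv_mul_cancel_left₀ (mul_ne_zero (zpow_ne_zero _ hα0) hβ0)]
  have Heq : ∀ n : ℤ, c n = D n :=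
    seq_uniq c D (c 3) (c 4) (c 5) (c 6) (c 7) (c 8) (c 9) h4 (mul_ne_zero h3 h5)
      hS8 hS9 hS10 hS11 hD8 hD9 hD10 hD11 hfour (-5) hbase
  have Hrn : ∀ n : ℤ, c ((r:ℤ) + n) = α ^ n * β * c n := by
    intro n
    have h := Heq n
    simp only [hDdef] at h
    rw [h, mul_inv_cancel_left₀ (mul_ne_zero (zpow_ne_zero _ hα0) hβ0)]
  -- conclusion
  have H2 : c ((r:ℤ) + 2) = α ^ (2:ℤ) * β := by
    have := Hrn 2; rwa [h2, mul_one] at this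
  have Hfin := Hrn (-(r:ℤ) - 2)
  rw [show (r:ℤ) + (-(r:ℤ) - 2) = -2 by ring, show (-(r:ℤ) - 2) = -((r:ℤ) + 2) by ring,
    hneg ((r:ℤ) + 2), hneg 2, h2, H2] at Hfin
  -- Hfin : -1 = α ^ (-((r:ℤ)+2)) * β * -(α ^ (2:ℤ) * β)
  have e0 : α ^ ((r:ℤ) + 2) * α ^ (-((r:ℤ) + 2)) = 1 := by
    rw [← zpow_add₀ hα0, add_neg_cancel, zpow_zero]
  have e2 : α ^ ((r:ℤ)) * α ^ (2:ℤ) = α ^ ((r:ℤ) + 2) := by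
    rw [← zpow_add₀ hα0]
  have key3 : α ^ ((r:ℤ)) * α ^ (2:ℤ) = β ^ 2 * α ^ (2:ℤ) := by
    linear_combination e2 - (α ^ ((r:ℤ) + 2)) * Hfin + β ^ 2 * α ^ (2:ℤ) * e0
  have key4 := mul_right_cancel₀ (zpow_ne_zero _ hα0) key3
  rw [← zpow_natCast α r]
  exact key4
end
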